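/- arXiv:2208.07809 — 10 statements merged into one kernel-verified Lean document; each statement's English description precedes it below -/
import Mathlib

section
/- For every integer n ≥ 0 there is a unique W-submodule L ⊆ D₀ of rank 2 satisfying F₀(L) ⊆ L and V₀(L) ⊆ L and such that the torsion W-module D₀/L has finite length n. Explicitly, L = W·pʳe + W·pʳf if n = 2r is even, and L = W·p^{r+1}e + W·pʳf if n = 2r+1 is odd. -/
noncomputable section

open Pointwise

/-- `k`, an algebraic closure of the field `𝔽_p` with `p` elements. -/
abbrev Kbar (p : ℕ) [Fact p.Prime] : Type _ := AlgebraicClosure (ZMod p)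

/-- `W = W(k)`, the ring of Witt vectors with coefficients in `k`. -/
abbrev Wt (p : ℕ) [Fact p.Prime] : Type _ := WittVector p (Kbar p)

/-- `σ : W → W`, the Witt vector Frobenius automorphism, lifting the `p`-th power map on `k`. -/
def σW (p : ℕ) [Fact p.Prime] : Wt p ≃+* Wt p := WittVector.frobeniusEquiv p (Kbar p)

/-- The Dieudonné module `D₀`, free of rank 2 over `W` with basis `e = (1,0)`, `f = (0,1)`. -/
abbrev D0 (p : ℕ) [Fact p.Prime] : Type _ := Wt p × Wt p

/-- The Frobenius `F₀` of `D₀`: `F₀ e = f`, `F₀ f = p e`, extended `σ`-semilinearly. -/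
def F0 (p : ℕ) [Fact p.Prime] : D0 p → D0 p :=
  fun m => ((p : Wt p) * σW p m.2, σW p m.1)

/-- The Verschiebung `V₀` of `D₀`: `V₀ e = f`, `V₀ f = p e`, extended `σ⁻¹`-semilinearly. -/
def V0 (p : ℕ) [Fact p.Prime] : D0 p → D0 p :=
  fun m => ((p : Wt p) * (σW p).symm m.2, (σW p).symm m.1)

/-- The predicate on a `W`-submodule `L ⊆ D₀`: `L` has rank 2, is stable under `F₀` and `V₀`,
and the torsion `W`-module `D₀/L` has finite length `n` (witnessed by a composition series
from `⊥` to `⊤` of length `n`). -/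
def IsGoodSubmodule (p : ℕ) [Fact p.Prime] (n : ℕ) (L : Submodule (Wt p) (D0 p)) : Prop :=
  Module.rank (Wt p) L = 2 ∧
  (∀ m ∈ L, F0 p m ∈ L) ∧
  (∀ m ∈ L, V0 p m ∈ L) ∧
  ∃ s : CompositionSeries (Submodule (Wt p) (D0 p ⧸ L)),
    s.head = ⊥ ∧ s.last = ⊤ ∧ s.length = n

/-! Let `Λₘ = p^⌈m/2⌉ W × p^⌊m/2⌋ W`. These lattices form a chain `D₀ = Λ₀ ⋗ Λ₁ ⋗ ⋯` with
simple successive quotients, and `F₀ = shift ∘ σ`, `V₀ = shift ∘ σ⁻¹` with `shift (a, b) = (p b, a)`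
map `Λₘ` onto `Λₘ₊₁`; so `Λₘ` is stable and `D₀/Λₘ` has length `m`.

Conversely, let `L` be `F₀`-stable with `D₀/L` of length `n`. Each step of a composition series
is killed by `p`, so `Λ₂ₙ = pⁿ D₀ ⊆ L`. Take `m` with `L ⊆ Λₘ` but `L ⊄ Λₘ₊₁`; since `Λₘ/Λₘ₊₁`
is simple, `Λₘ = L + Λₘ₊₁`, and applying `F₀` gives `Λₘ₊ⱼ = L + Λₘ₊ⱼ₊₁` for all `j`.
Hence `Λₘ = L + Λₘ₊₂ₙ = L`, and `m = n` by Jordan–Hölder. -/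

open IsLocalRing

section CompositionSeries

variable {R M : Type*} [CommRing R] [AddCommGroup M] [Module R M]

theorem Submodule.smul_mem_of_covBy [IsLocalRing R] {A B : Submodule R M} (h : A ⋖ B) {r : R}
    (hr : r ∈ maximalIdeal R) {x : M} (hx : x ∈ B) : r • x ∈ A := by
  have : IsSimpleModule R (B ⧸ A.comap B.subtype) := (covBy_iff_quot_is_simple h.le).1 h
  have hann : r ∈ Module.annihilator R (B ⧸ A.comap B.subtype) := by
    rwa [eq_maximalIdeal IsSimpleModule.annihilator_isMaximal]
  have := Module.mem_annihilator.1 hann (Submodule.Quotient.mk ⟨x, hx⟩)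
  rwa [← Submodule.Quotient.mk_smul, Submodule.Quotient.mk_eq_zero] at this

theorem CompositionSeries.pow_length_smul_mem_head [IsLocalRing R]
    (s : CompositionSeries (Submodule R M)) {r : R} (hr : r ∈ maximalIdeal R) {x : M}
    (hx : x ∈ s.last) : r ^ s.length • x ∈ s.head := by
  suffices ∀ i : Fin (s.length + 1), ∀ x ∈ s i, r ^ (i : ℕ) • x ∈ s.head from this _ x hx
  refine Fin.induction (fun x hx => by simpa [RelSeries.head] using hx) (fun i ih x hx => ?_)
  rw [Fin.val_succ, pow_succ, mul_smul]
  exact ih _ (Submodule.smul_mem_of_covBy (s.step i) hr hx)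

theorem exists_compositionSeries_quotient {a : ℕ → Submodule R M} (ha : ∀ i, a (i + 1) ⋖ a i)
    (m : ℕ) : ∃ s : CompositionSeries (Submodule R (M ⧸ a m)),
      s.head = ⊥ ∧ s.last = (a 0).map (a m).mkQ ∧ s.length = m := by
  have hanti : Antitone a := antitone_nat_of_succ_le fun i => (ha i).le
  have hcomap : ∀ i ≤ m, ((a i).map (a m).mkQ).comap (a m).mkQ = a i := fun i hi => by
    rw [Submodule.comap_map_mkQ, sup_eq_right.2 (hanti hi)]
  refine ⟨⟨m, fun i => (a (m - i)).map (a m).mkQ, fun i => ?_⟩, ?_, ?_, rfl⟩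
  · refine CovBy.of_image (Submodule.comapMkQOrderEmbedding (a m)) ?_
    simp only [Submodule.comapMkQOrderEmbedding_eq, Fin.val_castSucc, Fin.val_succ]
    rw [hcomap _ (by omega), hcomap _ (by omega), show m - i = m - (i + 1) + 1 by omega]
    exact ha _
  · simp [RelSeries.head]
  · simp [RelSeries.last]

end CompositionSeries

namespace D0

variable {p : ℕ} [Fact p.Prime]

theorem natCast_ne_zero : (p : Wt p) ≠ 0 := WittVector.p_nonzero p (Kbar p)

theorem maximalIdeal_eq_span : maximalIdeal (Wt p) = Ideal.span {(p : Wt p)} :=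
  (IsDiscreteValuationRing.irreducible_iff_uniformizer _).1 (WittVector.irreducible p)

theorem natCast_mem_maximalIdeal : (p : Wt p) ∈ maximalIdeal (Wt p) := by
  rw [maximalIdeal_eq_span]
  exact Ideal.mem_span_singleton_self _

theorem pow_dvd_apply_iff (τ : Wt p ≃+* Wt p) {a : ℕ} {x : Wt p} :
    (p : Wt p) ^ a ∣ τ x ↔ (p : Wt p) ^ a ∣ x := by
  simpa using map_dvd_iff τ (a := (p : Wt p) ^ a) (b := x)

variable (p) in
def lattice (m : ℕ) : Submodule (Wt p) (D0 p) :=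
  Submodule.prod (Ideal.span {(p : Wt p) ^ ((m + 1) / 2)}) (Ideal.span {(p : Wt p) ^ (m / 2)})

theorem mem_lattice {m : ℕ} {x : D0 p} :
    x ∈ lattice p m ↔ (p : Wt p) ^ ((m + 1) / 2) ∣ x.1 ∧ (p : Wt p) ^ (m / 2) ∣ x.2 := by
  simp [lattice, Submodule.mem_prod, Ideal.mem_span_singleton]

theorem lattice_eq_span (m : ℕ) : lattice p m =
    Submodule.span (Wt p) {((p : Wt p) ^ ((m + 1) / 2), 0), (0, (p : Wt p) ^ (m / 2))} := by
  rw [lattice, ← Ideal.submodule_span_eq, ← Ideal.submodule_span_eq,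
    ← LinearMap.span_inl_union_inr]
  simp [Set.image_singleton, Set.pair_comm]

theorem lattice_zero : lattice p 0 = ⊤ := by
  simp [lattice]

theorem map_apply_mem_lattice_iff (τ : Wt p ≃+* Wt p) {m : ℕ} {x : D0 p} :
    (τ x.1, τ x.2) ∈ lattice p m ↔ x ∈ lattice p m := by
  simp only [mem_lattice, pow_dvd_apply_iff]

variable (p) in
def shift : D0 p →ₗ[Wt p] D0 p :=
  ((p : Wt p) • LinearMap.snd (Wt p) (Wt p) (Wt p)).prod (LinearMap.fst (Wt p) (Wt p) (Wt p))

@[simp]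
theorem shift_apply (x : D0 p) : shift p x = ((p : Wt p) * x.2, x.1) := rfl

theorem shift_injective : Function.Injective (shift p) := fun x y h => by
  simp only [shift_apply, Prod.mk.injEq, mul_right_inj' natCast_ne_zero] at h
  exact Prod.ext h.2 h.1

theorem shift_mem_lattice_succ_iff {m : ℕ} {x : D0 p} :
    shift p x ∈ lattice p (m + 1) ↔ x ∈ lattice p m := by
  rw [mem_lattice, mem_lattice, show (m + 1 + 1) / 2 = m / 2 + 1 by omega, pow_succ',
    shift_apply, mul_dvd_mul_iff_left natCast_ne_zero, and_comm]

theorem exists_shift_eq {m : ℕ} {y : D0 p} (hy : y ∈ lattice p (m + 1)) :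
    ∃ x, shift p x = y := by
  obtain ⟨c, hc⟩ := (dvd_pow_self (p : Wt p) (by omega : (m + 1 + 1) / 2 ≠ 0)).trans
    (mem_lattice.1 hy).1
  exact ⟨(y.2, c), Prod.ext hc.symm rfl⟩

theorem map_shift_lattice (m : ℕ) : (lattice p m).map (shift p) = lattice p (m + 1) := by
  ext y
  refine ⟨fun ⟨x, hx, hxy⟩ => hxy ▸ shift_mem_lattice_succ_iff.2 hx, fun hy => ?_⟩
  obtain ⟨x, rfl⟩ := exists_shift_eq hy
  exact ⟨x, shift_mem_lattice_succ_iff.1 hy, rfl⟩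

theorem lattice_one_covBy_top : lattice p 1 ⋖ ⊤ := by
  have : lattice p 1 =
      Submodule.comap (LinearMap.fst (Wt p) (Wt p) (Wt p)) (maximalIdeal (Wt p)) := by
    ext x
    simp [mem_lattice, maximalIdeal_eq_span, Ideal.mem_span_singleton]
  rw [this, covBy_top_iff, Submodule.isCoatom_comap_iff LinearMap.fst_surjective,
    ← Ideal.isMaximal_def]
  infer_instance

theorem lattice_succ_covBy (m : ℕ) : lattice p (m + 1) ⋖ lattice p m := by
  induction m with
  | zero => simpa [lattice_zero] using lattice_one_covBy_top
  | succ m ih =>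
    simpa only [map_shift_lattice] using Submodule.map_covBy_of_injective shift_injective ih

theorem lattice_antitone : Antitone (lattice p) :=
  antitone_nat_of_succ_le fun m => (lattice_succ_covBy m).le

theorem rank_lattice (m : ℕ) : Module.rank (Wt p) (lattice p m) = 2 := by
  induction m with
  | zero => rw [lattice_zero, rank_top, rank_prod', Module.rank_self]; norm_num
  | succ m ih =>
    rw [← map_shift_lattice, ← ih]
    exact (Submodule.equivMapOfInjective _ shift_injective _).rank_eq.symm

theorem lattice_two_mul_le {L : Submodule (Wt p) (D0 p)} {n : ℕ}
    (h : ∀ y : D0 p, (p : Wt p) ^ n • y ∈ L) : lattice p (2 * n) ≤ L := by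
  intro x hx
  rw [mem_lattice, show (2 * n + 1) / 2 = n by omega, show 2 * n / 2 = n by omega] at hx
  obtain ⟨⟨c, hc⟩, ⟨d, hd⟩⟩ := hx
  convert h (c, d)
  exact Prod.ext hc hd

theorem F0_eq_shift (x : D0 p) : F0 p x = shift p (σW p x.1, σW p x.2) := rfl

theorem V0_eq_shift (x : D0 p) : V0 p x = shift p ((σW p).symm x.1, (σW p).symm x.2) := rfl

theorem F0_add (x y : D0 p) : F0 p (x + y) = F0 p x + F0 p y := by
  simp only [F0_eq_shift, Prod.fst_add, Prod.snd_add, map_add, ← Prod.mk_add_mk]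

theorem F0_mem_lattice_succ_iff {m : ℕ} {x : D0 p} :
    F0 p x ∈ lattice p (m + 1) ↔ x ∈ lattice p m := by
  rw [F0_eq_shift, shift_mem_lattice_succ_iff, map_apply_mem_lattice_iff]

theorem V0_mem_lattice_succ_iff {m : ℕ} {x : D0 p} :
    V0 p x ∈ lattice p (m + 1) ↔ x ∈ lattice p m := by
  rw [V0_eq_shift, shift_mem_lattice_succ_iff, map_apply_mem_lattice_iff]

theorem exists_F0_eq {m : ℕ} {y : D0 p} (hy : y ∈ lattice p (m + 1)) :
    ∃ x ∈ lattice p m, F0 p x = y := by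
  obtain ⟨z, rfl⟩ := exists_shift_eq hy
  refine ⟨((σW p).symm z.1, (σW p).symm z.2), ?_, by simp [F0_eq_shift]⟩
  rwa [map_apply_mem_lattice_iff, ← shift_mem_lattice_succ_iff]

theorem lattice_succ_le_sup {L : Submodule (Wt p) (D0 p)} (hF : ∀ x ∈ L, F0 p x ∈ L) {q : ℕ}
    (h : lattice p q ≤ L ⊔ lattice p (q + 1)) : lattice p (q + 1) ≤ L ⊔ lattice p (q + 2) := by
  intro y hy
  obtain ⟨x, hx, rfl⟩ := exists_F0_eq hy
  obtain ⟨l, hl, z, hz, rfl⟩ := Submodule.mem_sup.1 (h hx)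
  rw [F0_add]
  exact Submodule.add_mem_sup (hF l hl) (F0_mem_lattice_succ_iff.2 hz)

theorem exists_le_lattice_not_le_lattice_succ {L : Submodule (Wt p) (D0 p)} {n : ℕ}
    (hL : lattice p (2 * n) ≤ L) : ∃ m, L ≤ lattice p m ∧ ¬ L ≤ lattice p (m + 1) := by
  by_contra! h
  have hle : ∀ m, L ≤ lattice p m := fun m => by
    induction m with
    | zero => simp [lattice_zero]
    | succ m ih => exact h m ih
  exact (lattice_succ_covBy (2 * n)).lt.not_ge (hL.trans (hle _))

theorem exists_eq_lattice_of_F0_mem {L : Submodule (Wt p) (D0 p)} (hF : ∀ x ∈ L, F0 p x ∈ L)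
    {n : ℕ} (hL : lattice p (2 * n) ≤ L) : ∃ m, L = lattice p m := by
  obtain ⟨m, hLm, hLm'⟩ := exists_le_lattice_not_le_lattice_succ hL
  have hstep : ∀ j, lattice p (m + j) ≤ L ⊔ lattice p (m + j + 1) := by
    intro j
    induction j with
    | zero =>
      rcases (lattice_succ_covBy m).wcovBy.eq_or_eq le_sup_right
        (sup_le hLm (lattice_succ_covBy m).le) with h | h
      · exact absurd (h ▸ le_sup_left) hLm'
      · exact h.ge
    | succ j ih => exact lattice_succ_le_sup hF ih
  have hchain : ∀ j, lattice p m ≤ L ⊔ lattice p (m + j) := by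
    intro j
    induction j with
    | zero => exact le_sup_right
    | succ j ih => exact ih.trans (sup_le le_sup_left (hstep j))
  refine ⟨m, le_antisymm hLm ?_⟩
  calc lattice p m ≤ L ⊔ lattice p (m + 2 * n) := hchain _
    _ ≤ L := sup_le le_rfl ((lattice_antitone (by omega)).trans hL)

theorem isGoodSubmodule_lattice (m : ℕ) : IsGoodSubmodule p m (lattice p m) := by
  refine ⟨rank_lattice m, fun x hx => (lattice_succ_covBy m).le (F0_mem_lattice_succ_iff.2 hx),
    fun x hx => (lattice_succ_covBy m).le (V0_mem_lattice_succ_iff.2 hx), ?_⟩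
  simpa [lattice_zero] using exists_compositionSeries_quotient (lattice_succ_covBy (p := p)) m

end D0

open D0 in
theorem IsGoodSubmodule.eq_lattice {p : ℕ} [Fact p.Prime] {n : ℕ} {L : Submodule (Wt p) (D0 p)}
    (h : IsGoodSubmodule p n L) : L = lattice p n := by
  obtain ⟨-, hF, -, s, hs₀, hs₁, rfl⟩ := h
  have hkill : lattice p (2 * s.length) ≤ L := lattice_two_mul_le fun y => by
    have hy : Submodule.Quotient.mk y ∈ s.last := hs₁ ▸ Submodule.mem_top
    have := s.pow_length_smul_mem_head natCast_mem_maximalIdeal hy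
    rwa [hs₀, Submodule.mem_bot, ← Submodule.Quotient.mk_smul,
      Submodule.Quotient.mk_eq_zero] at this
  obtain ⟨m, rfl⟩ := exists_eq_lattice_of_F0_mem hF hkill
  obtain ⟨-, -, -, t, ht₀, ht₁, htm⟩ := isGoodSubmodule_lattice (p := p) m
  have hlen : (s.length : ℕ∞) = t.length :=
    (Module.length_compositionSeries s hs₀ hs₁).trans
      (Module.length_compositionSeries t ht₀ ht₁).symm
  rw [Nat.cast_injective hlen, htm]

theorem statement0_general (p : ℕ) [Fact p.Prime] (n : ℕ) :
    (∃! L : Submodule (Wt p) (D0 p), IsGoodSubmodule p n L) ∧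
    (∀ r : ℕ, n = 2 * r →
      IsGoodSubmodule p n
        (Submodule.span (Wt p) {((p : Wt p) ^ r, 0), (0, (p : Wt p) ^ r)})) ∧
    (∀ r : ℕ, n = 2 * r + 1 →
      IsGoodSubmodule p n
        (Submodule.span (Wt p) {((p : Wt p) ^ (r + 1), 0), (0, (p : Wt p) ^ r)})) := by
  refine ⟨⟨D0.lattice p n, D0.isGoodSubmodule_lattice n, fun L hL => hL.eq_lattice⟩, ?_, ?_⟩
  · rintro r rfl
    have h := D0.lattice_eq_span (p := p) (2 * r)
    rw [show (2 * r + 1) / 2 = r by omega, show 2 * r / 2 = r by omega] at h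
    exact h ▸ D0.isGoodSubmodule_lattice _
  · rintro r rfl
    have h := D0.lattice_eq_span (p := p) (2 * r + 1)
    rw [show (2 * r + 1 + 1) / 2 = r + 1 by omega, show (2 * r + 1) / 2 = r by omega] at h
    exact h ▸ D0.isGoodSubmodule_lattice _

/-- for every `n ≥ 0` there is a unique rank-2 submodule `L ⊆ D₀` stable under
`F₀` and `V₀` with `D₀/L` of finite length `n`; explicitly `L = ⟨pʳe, pʳf⟩` if `n = 2r`
and `L = ⟨p^{r+1}e, pʳf⟩` if `n = 2r + 1`. -/
theorem statement0 (p : ℕ) [Fact p.Prime] (hp : Odd p) (n : ℕ) :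
    (∃! L : Submodule (Wt p) (D0 p), IsGoodSubmodule p n L) ∧
    (∀ r : ℕ, n = 2 * r →
      IsGoodSubmodule p n
        (Submodule.span (Wt p) {((p : Wt p) ^ r, 0), (0, (p : Wt p) ^ r)})) ∧
    (∀ r : ℕ, n = 2 * r + 1 →
      IsGoodSubmodule p n
        (Submodule.span (Wt p) {((p : Wt p) ^ (r + 1), 0), (0, (p : Wt p) ^ r)})) :=
  statement0_general p n
end
end

section
/- Let n ≥ 0 be an integer and let L(n) ⊆ D₀ be the submodule L(n) = W·pʳe + W·pʳf if n = 2r is even and L(n) = W·p^{r+1}e + W·pʳf if n = 2r+1 is odd, regarded as a Dieudonné module with the restrictions of F₀ and V₀. Then for every admissible filtration Fil ⊆ D₀, the submodule Fil ∩ L(n) is an admissible filtration of (L(n), F₀|_{L(n)}, V₀|_{L(n)}) if and only if n is even. -/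
noncomputable section

open Pointwise

/-- `Fil` is an admissible filtration of a Dieudonné module `(D, F, V)` that is free of rank
`2g` over `W`: a `W`-submodule of rank `g` such that `D/Fil` is torsion-free and the image of
`Fil` in `D/pD` equals the kernel of the endomorphism of `D/pD` induced by `F`. -/
def AdmissibleFil (p : ℕ) [Fact p.Prime] {D : Type*} [AddCommGroup D] [Module (Wt p) D]
    (F : D → D) (g : ℕ) (Fil : Submodule (Wt p) D) : Prop :=
  Module.rank (Wt p) Fil = g ∧
  NoZeroSMulDivisors (Wt p) (D ⧸ Fil) ∧
  ∀ d : D, (∃ m ∈ Fil, ∃ d' : D, d = m + (p : Wt p) • d') ↔ (∃ d' : D, F d = (p : Wt p) • d')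

/-- The submodule `L(n) ⊆ D₀`: `L(n) = ⟨pʳe, pʳf⟩` if `n = 2r` is even and
`L(n) = ⟨p^{r+1}e, pʳf⟩` if `n = 2r+1` is odd. -/
def Ln (p : ℕ) [Fact p.Prime] (n : ℕ) : Submodule (Wt p) (D0 p) :=
  if n % 2 = 0 then
    Submodule.span (Wt p) {((p : Wt p) ^ (n / 2), 0), (0, (p : Wt p) ^ (n / 2))}
  else
    Submodule.span (Wt p) {((p : Wt p) ^ (n / 2 + 1), 0), (0, (p : Wt p) ^ (n / 2))}

/-- `Fil'` is an admissible filtration of the Dieudonné submodule `L ⊆ D` (of rank `2g`,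
with the restrictions of `F` and `V`): `Fil' ⊆ L` is a rank-`g` submodule, the quotient
`L/Fil'` is torsion-free, and the image of `Fil'` in `L/pL` equals the kernel of the map
induced by `F` on `L/pL`. -/
def AdmissibleFilIn (p : ℕ) [Fact p.Prime] {D : Type*} [AddCommGroup D] [Module (Wt p) D]
    (L : Submodule (Wt p) D) (F : D → D) (g : ℕ) (Fil : Submodule (Wt p) D) : Prop :=
  Fil ≤ L ∧
  Module.rank (Wt p) Fil = g ∧
  (∀ a : Wt p, a ≠ 0 → ∀ m ∈ L, a • m ∈ Fil → m ∈ Fil) ∧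
  ∀ d ∈ L, ((∃ m ∈ Fil, ∃ d' ∈ L, d = m + (p : Wt p) • d') ↔
    (∃ d' ∈ L, F d = (p : Wt p) • d'))

/-!
For `n = 2r`, `L(n) = pʳ D₀`, and multiplication by `pʳ` commutes with `F₀` (as `σ` fixes `p`);
since `D₀/Fil` is torsion-free it maps `Fil` onto `Fil ∩ L(n)`, so all three admissibility
conditions transport from `D₀` to `L(n)`.

For `n = 2r + 1`, `Fil` contains a lift `m` of `f` modulo `p` (as `F₀ f = p e`). Then
`pʳ m ∈ Fil ∩ L(n)`, but the `e`-coordinate of `F₀ (pʳ m)` is `p^{r+1} σ(m_f)` with `m_f` a unit,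
while `p L(n)` has `e`-coordinates in `p^{r+2} W`; so `Fil ∩ L(n)` fails the mod-`p` condition.
-/

theorem Submodule.mem_of_smul_mem_of_ne_zero {R M : Type*} [Ring R] [AddCommGroup M] [Module R M]
    {N : Submodule R M} [NoZeroSMulDivisors R (M ⧸ N)] {a : R} (ha : a ≠ 0) {m : M}
    (h : a • m ∈ N) : m ∈ N := by
  rw [← Submodule.Quotient.mk_eq_zero, Submodule.Quotient.mk_smul] at h
  rw [← Submodule.Quotient.mk_eq_zero]
  exact (eq_zero_or_eq_zero_of_smul_eq_zero h).resolve_left ha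

namespace AdmissibleFil

variable {p : ℕ} [Fact p.Prime] {D : Type*} [AddCommGroup D] [Module (Wt p) D]
  {F : D → D} {g : ℕ} {Fil : Submodule (Wt p) D}

theorem mem_of_smul_mem (hFil : AdmissibleFil p F g Fil) {a : Wt p} (ha : a ≠ 0) {m : D}
    (h : a • m ∈ Fil) : m ∈ Fil :=
  have := hFil.2.1
  Submodule.mem_of_smul_mem_of_ne_zero ha h

theorem inf_smul_top_eq (hFil : AdmissibleFil p F g Fil) {q : Wt p} (hq : q ≠ 0) :
    Fil ⊓ q • ⊤ = q • Fil := by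
  ext m
  simp only [Submodule.mem_inf, Submodule.mem_smul_pointwise_iff_exists, Submodule.mem_top,
    true_and]
  constructor
  · rintro ⟨hm, d, rfl⟩
    exact ⟨d, hFil.mem_of_smul_mem hq hm, rfl⟩
  · rintro ⟨d, hd, rfl⟩
    exact ⟨Fil.smul_mem q hd, d, rfl⟩

theorem admissibleFilIn_inf_smul_top [Module.IsTorsionFree (Wt p) D]
    (hFil : AdmissibleFil p F g Fil) {q : Wt p} (hq : q ≠ 0)
    (hF : ∀ d, F (q • d) = q • F d) :
    AdmissibleFilIn p (q • ⊤) F g (Fil ⊓ q • ⊤) := by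
  have hinj : Function.Injective (q • · : D → D) := smul_right_injective D hq
  have mem_top (d : D) : d ∈ q • (⊤ : Submodule (Wt p) D) ↔ ∃ d₀, q • d₀ = d := by
    simp [Submodule.mem_smul_pointwise_iff_exists]
  refine ⟨inf_le_right, ?_, ?_, ?_⟩
  · rw [hFil.inf_smul_top_eq hq, ← hFil.1]
    exact (Fil.equivMapOfInjective (DistribSMul.toLinearMap (Wt p) D q) hinj).rank_eq.symm
  · intro a ha m hmL ham
    exact ⟨hFil.mem_of_smul_mem ha ham.1, hmL⟩
  · rintro _ hdL
    obtain ⟨d, rfl⟩ := (mem_top _).mp hdL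
    constructor
    · rintro ⟨_, ⟨hmFil, hmL⟩, _, hd'L, hsum⟩
      obtain ⟨m, rfl⟩ := (mem_top _).mp hmL
      obtain ⟨d', rfl⟩ := (mem_top _).mp hd'L
      have hd : d = m + (p : Wt p) • d' := hinj (by simp only [hsum, smul_add, smul_comm q])
      obtain ⟨e, he⟩ := (hFil.2.2 d).mp ⟨m, hFil.mem_of_smul_mem hq hmFil, d', hd⟩
      exact ⟨q • e, (mem_top _).mpr ⟨e, rfl⟩, by rw [hF, he, smul_comm]⟩
    · rintro ⟨_, he'L, heq⟩
      obtain ⟨e, rfl⟩ := (mem_top _).mp he'L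
      have hFd : F d = (p : Wt p) • e := hinj (by simp only [← hF, heq, smul_comm q])
      obtain ⟨m, hm, d', hd⟩ := (hFil.2.2 d).mpr ⟨e, hFd⟩
      refine ⟨q • m, ⟨Submodule.smul_mem _ _ hm, (mem_top _).mpr ⟨m, rfl⟩⟩, q • d',
        (mem_top _).mpr ⟨d', rfl⟩, ?_⟩
      rw [hd, smul_add, smul_comm]

end AdmissibleFil

section D0

variable {p : ℕ} [Fact p.Prime]

theorem F0_smul (c : Wt p) (d : D0 p) : F0 p (c • d) = σW p c • F0 p d := by
  simp only [F0, Prod.smul_fst, Prod.smul_snd, Prod.smul_mk, smul_eq_mul, map_mul]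
  exact Prod.ext (mul_left_comm _ _ _) rfl

theorem F0_pow_smul (r : ℕ) (d : D0 p) :
    F0 p ((p : Wt p) ^ r • d) = (p : Wt p) ^ r • F0 p d := by
  rw [F0_smul, map_pow, map_natCast]

theorem Ln_eq_smul_top_of_even {n : ℕ} (hn : n % 2 = 0) :
    Ln p n = (p : Wt p) ^ (n / 2) • ⊤ := by
  ext d
  rw [Ln, if_pos hn, Submodule.mem_span_pair, Submodule.mem_smul_pointwise_iff_exists]
  constructor
  · rintro ⟨a, b, rfl⟩
    exact ⟨(a, b), trivial, by simp [mul_comm]⟩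
  · rintro ⟨⟨a, b⟩, -, rfl⟩
    exact ⟨a, b, by simp [mul_comm]⟩

theorem mem_Ln_of_odd {n : ℕ} (hn : n % 2 = 1) {d : D0 p} :
    d ∈ Ln p n ↔ ∃ a b : Wt p, d = ((p : Wt p) ^ (n / 2 + 1) * a, (p : Wt p) ^ (n / 2) * b) := by
  rw [Ln, if_neg (by omega), Submodule.mem_span_pair]
  constructor
  · rintro ⟨a, b, rfl⟩
    exact ⟨a, b, by simp [mul_comm]⟩
  · rintro ⟨a, b, rfl⟩
    exact ⟨a, b, by simp [mul_comm]⟩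

theorem dvd_snd_of_F0_pow_smul_mem {n : ℕ} (hn : n % 2 = 1) {m : D0 p}
    (h : ∃ d' ∈ Ln p n, F0 p ((p : Wt p) ^ (n / 2) • m) = (p : Wt p) • d') :
    (p : Wt p) ∣ m.2 := by
  obtain ⟨d', hd'L, heq⟩ := h
  obtain ⟨a, b, rfl⟩ := (mem_Ln_of_odd hn).mp hd'L
  have hp : (p : Wt p) ^ (n / 2 + 1) ≠ 0 := pow_ne_zero _ (WittVector.irreducible p).ne_zero
  have hfst : (p : Wt p) ^ (n / 2 + 1) * σW p m.2 = (p : Wt p) ^ (n / 2 + 1) * (p * a) := by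
    have := congrArg Prod.fst heq
    rw [F0_pow_smul] at this
    simp only [F0, Prod.smul_fst, smul_eq_mul] at this
    linear_combination this
  simpa using map_dvd (σW p).symm ⟨a, mul_left_cancel₀ hp hfst⟩

theorem not_admissibleFilIn_Ln_of_odd {n g g' : ℕ} (hn : n % 2 = 1)
    {Fil : Submodule (Wt p) (D0 p)} (hFil : AdmissibleFil p (F0 p) g Fil) :
    ¬ AdmissibleFilIn p (Ln p n) (F0 p) g' (Fil ⊓ Ln p n) := by
  intro h
  obtain ⟨m, hm, d, hd⟩ := (hFil.2.2 (0, 1)).mpr ⟨(1, 0), by simp [F0]⟩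
  have hmL : (p : Wt p) ^ (n / 2) • m ∈ Ln p n := by
    rw [mem_Ln_of_odd hn]
    refine ⟨-d.1, m.2, Prod.ext ?_ rfl⟩
    have := congrArg Prod.fst hd
    simp only [Prod.smul_fst, smul_eq_mul, Prod.fst_add] at this ⊢
    linear_combination -(p : Wt p) ^ (n / 2) * this
  have hFm := (h.2.2.2 _ hmL).mp
    ⟨_, ⟨Fil.smul_mem _ hm, hmL⟩, 0, Submodule.zero_mem _, by simp⟩
  obtain ⟨c, hc⟩ := dvd_snd_of_F0_pow_smul_mem hn hFm
  refine (WittVector.irreducible p).not_isUnit (.of_mul_eq_one (c + d.2) ?_)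
  have := congrArg Prod.snd hd
  simp only [Prod.smul_snd, smul_eq_mul, Prod.snd_add] at this
  linear_combination -this - hc

end D0

theorem statement1_general (p : ℕ) [Fact p.Prime] (n : ℕ)
    (Fil : Submodule (Wt p) (D0 p)) (hFil : AdmissibleFil p (F0 p) 1 Fil) :
    AdmissibleFilIn p (Ln p n) (F0 p) 1 (Fil ⊓ Ln p n) ↔ Even n := by
  constructor
  · intro h
    by_contra hodd
    exact not_admissibleFilIn_Ln_of_odd (Nat.odd_iff.mp (Nat.not_even_iff_odd.mp hodd)) hFil h
  · intro hn
    rw [Ln_eq_smul_top_of_even (Nat.even_iff.mp hn)]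
    exact hFil.admissibleFilIn_inf_smul_top
      (pow_ne_zero _ (WittVector.irreducible p).ne_zero) (F0_pow_smul _)

/-- for every admissible filtration `Fil ⊆ D₀`, the submodule `Fil ∩ L(n)` is an
admissible filtration of `(L(n), F₀|_{L(n)}, V₀|_{L(n)})` if and only if `n` is even. -/
theorem statement1 (p : ℕ) [Fact p.Prime] (hp : Odd p) (n : ℕ)
    (Fil : Submodule (Wt p) (D0 p)) (hFil : AdmissibleFil p (F0 p) 1 Fil) :
    AdmissibleFilIn p (Ln p n) (F0 p) 1 (Fil ⊓ Ln p n) ↔ Even n :=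
  statement1_general p n Fil hFil
end
end

section
/- Let (D, F, V) be a Dieudonné module that is free of rank 4 over W, let D' = D₀ ⊕ D₀ with F' = F₀ ⊕ F₀ and V' = V₀ ⊕ V₀, and write e₁' = (e,0), f₁' = (f,0), e₂' = (0,e), f₂' = (0,f). Suppose φ : D → D' is an isogeny of Dieudonné modules. Then there exist x ∈ W and a W-basis {e₁, f₁, e₂, f₂} of D such that F(e₁) = f₁, F(f₁) = pe₁, F(e₂) = f₂, F(f₂) = pe₂ + xf₁, V(e₁) = f₁, V(f₁) = pe₁, V(e₂) = f₂ − σ⁻¹(x)e₁, V(f₂) = pe₂, and such that φ(We₁ + Wf₁) ⊆ We₁' + Wf₁'. -/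
noncomputable section

open Pointwise

/-- `D' = D₀ ⊕ D₀`. -/
abbrev D2 (p : ℕ) [Fact p.Prime] : Type _ := D0 p × D0 p

/-- `F' = F₀ ⊕ F₀`. -/
def F2 (p : ℕ) [Fact p.Prime] : D2 p → D2 p := fun m => (F0 p m.1, F0 p m.2)

/-- `V' = V₀ ⊕ V₀`. -/
def V2 (p : ℕ) [Fact p.Prime] : D2 p → D2 p := fun m => (V0 p m.1, V0 p m.2)

/-!
The lattices `{x | (x, 0) ∈ φ(D)}` and `pr₂ φ(D)` in `D₀` are `F₀`-stable and contain `pⁿ D₀`.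
Such a lattice is some `F₀ʲ D₀`: if it contains a vector with unit first coordinate it is all of
`D₀`, otherwise it lies in `F₀ D₀` and one descends along `F₀`. Hence it is spanned by `u, F₀ u`
with `F₀² u = p u`. Lifting these generators gives a basis `b, F b, c, F c` of `D` with
`F² b = p b` and `F² c = p c + α b + β F b`. Since `p c ∈ F(D)`, comparing coefficients gives
`p ∣ α`, and replacing `c` by `c + s b` with `s - σ² s = α / p` removes the `b`-term; this equation
is solved by successive approximation, because `X^{p²} - X + a` has a root in `k`. The relations
for `V` follow from those for `F`, as `F` is injective.
-/

section AdicApproximation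

variable {R : Type*} [CommRing R] (π : R) (T : R →+ R)

theorem AddMonoidHom.map_pow_mul (hT : ∀ x, T (π * x) = π * T x) (n : ℕ) (x : R) :
    T (π ^ n * x) = π ^ n * T x := by
  induction n with
  | zero => simp
  | succ n ih => rw [pow_succ', mul_assoc, hT, ih, mul_assoc]

theorem AddMonoidHom.exists_seq_dvd_sub (hT : ∀ x, T (π * x) = π * T x)
    (hmod : ∀ c, ∃ t, π ∣ c - T t) (c : R) :
    ∃ s : ℕ → R, (∀ n, π ^ n ∣ c - T (s n)) ∧ ∀ n, π ^ n ∣ s n - s (n + 1) := by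
  have hstep (n : ℕ) (x : R) :
      ∃ y, π ^ n ∣ c - T x → π ^ n ∣ x - y ∧ π ^ (n + 1) ∣ c - T y := by
    by_cases hx : π ^ n ∣ c - T x
    · obtain ⟨d, hd⟩ := hx
      obtain ⟨t, e, he⟩ := hmod d
      refine ⟨x + π ^ n * t, fun _ => ⟨⟨-t, by ring⟩, ⟨e, ?_⟩⟩⟩
      rw [map_add, T.map_pow_mul π hT, pow_succ, mul_assoc, ← he]
      linear_combination hd
    · exact ⟨x, fun h => absurd h hx⟩
  choose next hnext using hstep
  let s : ℕ → R := fun n => Nat.rec 0 next n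
  have hs (n : ℕ) : π ^ n ∣ c - T (s n) := by
    induction n with
    | zero => simp
    | succ n ih => exact (hnext n (s n) ih).2
  exact ⟨s, hs, fun n => (hnext n (s n) (hs n)).1⟩

theorem AddMonoidHom.surjective_of_isAdicComplete [IsAdicComplete (Ideal.span {π}) R]
    (hT : ∀ x, T (π * x) = π * T x) (hmod : ∀ c, ∃ t, π ∣ c - T t) : Function.Surjective T := by
  intro c
  obtain ⟨s, hs, hsucc⟩ := T.exists_seq_dvd_sub π hT hmod c
  have hcauchy {m n : ℕ} (hmn : m ≤ n) : π ^ m ∣ s m - s n := by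
    induction n, hmn using Nat.le_induction with
    | base => simp
    | succ n hmn ih => simpa using dvd_add ih ((pow_dvd_pow π hmn).trans (hsucc n))
  have hprec : IsPrecomplete (Ideal.span {π}) R := inferInstance
  have hhaus : IsHausdorff (Ideal.span {π}) R := inferInstance
  simp only [isPrecomplete_iff, isHausdorff_iff, Ideal.span_singleton_pow, smul_eq_mul,
    Ideal.mul_top, SModEq.sub_mem, Ideal.mem_span_singleton, sub_zero] at hprec hhaus
  obtain ⟨L, hL⟩ := hprec s hcauchy
  refine ⟨L, (sub_eq_zero.1 (hhaus _ fun n => ?_)).symm⟩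
  obtain ⟨e, he⟩ := hL n
  have hsplit : c - T L = (c - T (s n)) + π ^ n * T e := by
    rw [← T.map_pow_mul π hT, ← he, map_sub]; ring
  exact hsplit ▸ dvd_add (hs n) (dvd_mul_right _ _)

end AdicApproximation

namespace WittVector

open Polynomial

variable {p : ℕ} [Fact p.Prime] {k : Type*} [Field k] [CharP k p]

theorem isUnit_iff_constantCoeff_ne_zero (x : WittVector p k) : IsUnit x ↔ constantCoeff x ≠ 0 :=
  ⟨fun h => (h.map constantCoeff).ne_zero, isUnit_of_coeff_zero_ne_zero x⟩

theorem p_dvd_iff_constantCoeff_eq_zero [PerfectRing k p] (x : WittVector p k) :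
    (p : WittVector p k) ∣ x ↔ constantCoeff x = 0 := by
  rw [← Ideal.mem_span_singleton, mem_span_p_iff_coeff_zero_eq_zero, constantCoeff_apply]

theorem p_dvd_of_not_isUnit [PerfectRing k p] {x : WittVector p k} (hx : ¬IsUnit x) :
    (p : WittVector p k) ∣ x := by
  rwa [p_dvd_iff_constantCoeff_eq_zero, ← not_ne_iff, ← isUnit_iff_constantCoeff_ne_zero]

theorem constantCoeff_frobenius (x : WittVector p k) :
    constantCoeff (frobenius x) = constantCoeff x ^ p := by
  simp only [constantCoeff_apply, coeff_frobenius_charP]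

theorem exists_sub_frobenius_frobenius_eq [IsAlgClosed k] (c : WittVector p k) :
    ∃ s, s - frobenius (frobenius s) = c := by
  let T : WittVector p k →+ WittVector p k :=
    AddMonoidHom.mk' (fun s => s - frobenius (frobenius s)) fun x y => by simp only [map_add]; ring
  have hT : ∀ x, T (p * x) = p * T x := by
    intro x
    simp only [T, AddMonoidHom.mk'_apply, map_mul, map_natCast]
    ring
  refine AddMonoidHom.surjective_of_isAdicComplete (p : WittVector p k) T hT (fun c => ?_) c
  have hdeg : (X ^ (p ^ 2) - X + C (constantCoeff c)).natDegree ≠ 0 := by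
    rw [natDegree_add_C, FiniteField.X_pow_card_pow_sub_X_natDegree_eq k two_ne_zero
      (Fact.out : p.Prime).one_lt]
    exact pow_ne_zero 2 (Fact.out : p.Prime).ne_zero
  obtain ⟨r, hr⟩ := IsAlgClosed.exists_root _ (degree_ne_of_natDegree_ne hdeg)
  refine ⟨teichmuller p r, (p_dvd_iff_constantCoeff_eq_zero _).2 ?_⟩
  have hr' : constantCoeff (teichmuller p r) = r := teichmuller_coeff_zero p r
  simp only [IsRoot, eval_add, eval_sub, eval_pow, eval_X, eval_C] at hr
  simp only [T, AddMonoidHom.mk'_apply, map_sub, constantCoeff_frobenius, hr', ← pow_mul, ← sq]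
  linear_combination hr

end WittVector

theorem Submodule.eq_top_of_isUnit_det {R : Type*} [CommRing R] {L : Submodule R (R × R)}
    {a b : R × R} (ha : a ∈ L) (hb : b ∈ L) (hdet : IsUnit (a.1 * b.2 - a.2 * b.1)) : L = ⊤ := by
  have h := ((Module.Basis.finTwoProd R).is_basis_iff_det (v := ![a, b])).2 (by
    rw [Module.Basis.det_apply, Matrix.det_fin_two]
    simpa [Module.Basis.toMatrix_apply, Module.Basis.finTwoProd, mul_comm b.1] using hdet)
  rw [eq_top_iff, ← h.2, Submodule.span_le, Set.range_subset_iff]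
  simp [Fin.forall_fin_two, ha, hb]

theorem Module.Basis.exists_of_ker_range {R D N : Type*} [CommRing R] [AddCommGroup D]
    [Module R D] [AddCommGroup N] [Module R N] (ψ : D →ₗ[R] N) {v₀ v₁ w₀ w₁ : D}
    (hv : LinearIndependent R ![v₀, v₁]) (hker : Submodule.span R {v₀, v₁} = LinearMap.ker ψ)
    (hw : LinearIndependent R ![ψ w₀, ψ w₁])
    (hrange : Submodule.span R {ψ w₀, ψ w₁} = LinearMap.range ψ) :
    ∃ B : Module.Basis (Fin 4) R D, ⇑B = ![v₀, v₁, w₀, w₁] := by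
  have hψv : ψ v₀ = 0 ∧ ψ v₁ = 0 := by
    simp only [← LinearMap.mem_ker, ← hker]
    exact ⟨Submodule.subset_span (by simp), Submodule.subset_span (by simp)⟩
  have hli : LinearIndependent R ![v₀, v₁, w₀, w₁] := by
    rw [Fintype.linearIndependent_iff]
    intro g hg
    simp only [Fin.sum_univ_four, Matrix.cons_val] at hg
    obtain ⟨h₂, h₃⟩ := LinearIndependent.pair_iff.1 hw (g 2) (g 3) (by
      simpa [hψv] using congrArg ψ hg)
    obtain ⟨h₀, h₁⟩ := LinearIndependent.pair_iff.1 hv (g 0) (g 1) (by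
      simpa [h₂, h₃] using hg)
    intro i
    fin_cases i <;> assumption
  have hsp : ⊤ ≤ Submodule.span R (Set.range ![v₀, v₁, w₀, w₁]) := by
    intro d _
    obtain ⟨a, b, hab⟩ := Submodule.mem_span_pair.1 (hrange ▸ LinearMap.mem_range_self ψ d)
    obtain ⟨c, e, hce⟩ := Submodule.mem_span_pair.1
      (hker ▸ (show d - (a • w₀ + b • w₁) ∈ LinearMap.ker ψ by simp [← hab]))
    have hmem (i : Fin 4) : ![v₀, v₁, w₀, w₁] i ∈ Submodule.span R (Set.range ![v₀, v₁, w₀, w₁]) :=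
      Submodule.subset_span ⟨i, rfl⟩
    rw [eq_add_of_sub_eq hce.symm]
    exact add_mem (add_mem (Submodule.smul_mem _ c (hmem 0)) (Submodule.smul_mem _ e (hmem 1)))
      (add_mem (Submodule.smul_mem _ a (hmem 2)) (Submodule.smul_mem _ b (hmem 3)))
  exact ⟨.mk hli hsp, Module.Basis.coe_mk hli hsp⟩

theorem dvd_of_smul_mem_range {R D : Type*} [CommRing R] [IsDomain R] [AddCommGroup D]
    [Module R D] {σ : R →+* R} (F : D →ₛₗ[σ] D) {π α β : R} (hπ : π ≠ 0) {b c : D}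
    (B : Module.Basis (Fin 4) R D) (hB : ⇑B = ![b, F b, c, F c]) (hb : F (F b) = π • b)
    (hc : F (F c) = π • c + α • b + β • F b) (hrange : π • c ∈ Set.range F) : π ∣ α := by
  obtain ⟨w, hw⟩ := hrange
  set a := B.repr w
  have hw_eq : w = a 0 • b + a 1 • F b + a 2 • c + a 3 • F c := by
    conv_lhs => rw [← B.sum_repr w, Fin.sum_univ_four, hB]
    rfl
  -- the coordinates of `F w - π • c = 0` in the basis `B`
  have hcoeff := Fintype.linearIndependent_iff.1 (hB ▸ B.linearIndependent)
    ![σ (a 1) * π + σ (a 3) * α, σ (a 0) + σ (a 3) * β, σ (a 3) * π - π, σ (a 2)] (by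
      rw [hw_eq, map_add, map_add, map_add, map_smulₛₗ, map_smulₛₗ, map_smulₛₗ, map_smulₛₗ, hb,
        hc] at hw
      simp only [Fin.sum_univ_four, Matrix.cons_val]
      linear_combination (norm := module) hw)
  have hσa₃ : σ (a 3) = 1 := by
    have h := hcoeff 2
    simp only [Matrix.cons_val] at h
    exact (mul_left_inj' hπ).1 (by linear_combination h)
  have h := hcoeff 0
  simp only [Matrix.cons_val, hσa₃, one_mul] at h
  exact ⟨-σ (a 1), by linear_combination h⟩

section StandardLattice

variable (p : ℕ) [Fact p.Prime]

local notation "σ" => (σW p : Wt p →+* Wt p)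

def F0ₛₗ : D0 p →ₛₗ[σ] D0 p where
  toFun := F0 p
  map_add' m n := by simp only [F0, Prod.fst_add, Prod.snd_add, map_add, mul_add, Prod.mk_add_mk]
  map_smul' a m := by
    simp only [F0, Prod.smul_fst, Prod.smul_snd, smul_eq_mul, map_mul, Prod.smul_mk,
      RingHom.coe_coe]
    rw [mul_left_comm]

@[simp] theorem coe_F0ₛₗ : ⇑(F0ₛₗ p) = F0 p := rfl

theorem σW_apply (x : Wt p) : σW p x = WittVector.frobenius x := rfl

theorem constantCoeff_σW (x : Wt p) :
    WittVector.constantCoeff (σW p x) = WittVector.constantCoeff x ^ p :=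
  WittVector.constantCoeff_frobenius x

theorem F0_zero : F0 p 0 = 0 := (F0ₛₗ p).map_zero

theorem F0_F0 (m : D0 p) : F0 p (F0 p m) = (p : Wt p) • (σW p (σW p m.1), σW p (σW p m.2)) := by
  simp [F0, map_natCast]

theorem F0_injective : Function.Injective (F0 p) := by
  intro m n h
  simp only [F0, Prod.mk.injEq] at h
  exact Prod.ext ((σW p).injective h.2)
    ((σW p).injective (mul_left_cancel₀ (WittVector.p_nonzero p _) h.1))

theorem F2_injective : Function.Injective (F2 p) := fun _ _ h =>
  Prod.ext (F0_injective p (congrArg Prod.fst h)) (F0_injective p (congrArg Prod.snd h))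

theorem exists_F0_eq_of_p_dvd_fst {m : D0 p} (h : (p : Wt p) ∣ m.1) : ∃ m', F0 p m' = m := by
  obtain ⟨a, ha⟩ := h
  exact ⟨((σW p).symm m.2, (σW p).symm a), by simp [F0, ← ha]⟩

/-- The lattices `F₀ʲ D₀`, with `u = F₀ʲ e`; they are `pᵏ D₀` and `pᵏ (W f + W p e)`. -/
def IsStandardLattice (L : Submodule (Wt p) (D0 p)) : Prop :=
  ∃ u : D0 p, F0 p (F0 p u) = (p : Wt p) • u ∧ LinearIndependent (Wt p) ![u, F0 p u] ∧
    L = Submodule.span (Wt p) {u, F0 p u}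

theorem isStandardLattice_top : IsStandardLattice p ⊤ := by
  refine ⟨(1, 0), by simp [F0_F0], ?_, ?_⟩
  · rw [LinearIndependent.pair_iff]
    intro s t hst
    simpa [F0, Prod.ext_iff] using hst
  · exact (Submodule.eq_top_of_isUnit_det (a := (1, 0)) (b := F0 p (1, 0))
      (Submodule.subset_span (by simp)) (Submodule.subset_span (by simp)) (by simp [F0])).symm

theorem eq_top_of_F0_mem_of_isUnit_fst {L : Submodule (Wt p) (D0 p)}
    (hF : ∀ m ∈ L, F0 p m ∈ L) {a : D0 p} (ha : a ∈ L) (hunit : IsUnit a.1) : L = ⊤ := by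
  refine Submodule.eq_top_of_isUnit_det ha (hF a ha) ?_
  rw [WittVector.isUnit_iff_constantCoeff_ne_zero] at hunit ⊢
  simp only [F0, map_sub, map_mul, map_natCast, constantCoeff_σW, CharP.cast_eq_zero, zero_mul,
    mul_zero, sub_zero]
  exact mul_ne_zero hunit (pow_ne_zero _ hunit)

theorem IsStandardLattice.of_comap_F0 {L : Submodule (Wt p) (D0 p)}
    (hL : ∀ m ∈ L, (p : Wt p) ∣ m.1) (h : IsStandardLattice p (L.comap (F0ₛₗ p))) :
    IsStandardLattice p L := by
  obtain ⟨u, hFFu, hind, hspan⟩ := h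
  refine ⟨F0 p u, by rw [hFFu, ← coe_F0ₛₗ, map_smulₛₗ]; simp, ?_, ?_⟩
  · convert hind.map_of_injective_injectiveₛ (σW p).symm (F0ₛₗ p).toAddMonoidHom
      (σW p).symm.injective (F0_injective p) (fun r m => by simp) using 1
    funext i
    fin_cases i <;> rfl
  · rw [← Submodule.map_comap_eq_self (f := F0ₛₗ p) (q := L) fun m hm =>
      exists_F0_eq_of_p_dvd_fst p (hL m hm), hspan, Submodule.map_span, Set.image_pair]
    rfl

theorem isStandardLattice_of_F0_iterate_mem (j : ℕ) {L : Submodule (Wt p) (D0 p)}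
    (hF : ∀ m ∈ L, F0 p m ∈ L) (hj : ∀ m, (F0 p)^[j] m ∈ L) : IsStandardLattice p L := by
  induction j generalizing L with
  | zero =>
    rw [show L = ⊤ from eq_top_iff.2 fun m _ => hj m]
    exact isStandardLattice_top p
  | succ j ih =>
    by_cases hA : ∃ a ∈ L, IsUnit a.1
    · obtain ⟨a, ha, hunit⟩ := hA
      rw [eq_top_of_F0_mem_of_isUnit_fst p hF ha hunit]
      exact isStandardLattice_top p
    · push Not at hA
      refine IsStandardLattice.of_comap_F0 p (fun m hm => ?_) (ih (fun m hm => ?_) fun m => ?_)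
      · exact WittVector.p_dvd_of_not_isUnit (hA m hm)
      · rw [Submodule.mem_comap, coe_F0ₛₗ] at hm ⊢
        exact hF _ hm
      · rw [Submodule.mem_comap, coe_F0ₛₗ, ← Function.iterate_succ_apply' (F0 p)]
        exact hj m

theorem exists_F0_iterate_two_mul_eq (n : ℕ) (m : D0 p) :
    ∃ m', (F0 p)^[2 * n] m = (p : Wt p) ^ n • m' := by
  induction n with
  | zero => exact ⟨m, by simp⟩
  | succ n ih =>
    obtain ⟨m', hm'⟩ := ih
    refine ⟨(σW p (σW p m'.1), σW p (σW p m'.2)), ?_⟩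
    rw [show 2 * (n + 1) = 2 * n + 1 + 1 by ring, Function.iterate_succ_apply',
      Function.iterate_succ_apply', hm', ← coe_F0ₛₗ, map_smulₛₗ, map_smulₛₗ, coe_F0ₛₗ, F0_F0,
      smul_smul, pow_succ]
    simp

theorem isStandardLattice_of_p_pow_smul_mem (n : ℕ) {L : Submodule (Wt p) (D0 p)}
    (hF : ∀ m ∈ L, F0 p m ∈ L) (hn : ∀ m, (p : Wt p) ^ n • m ∈ L) : IsStandardLattice p L :=
  isStandardLattice_of_F0_iterate_mem p (2 * n) hF fun m => by
    obtain ⟨m', hm'⟩ := exists_F0_iterate_two_mul_eq p n m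
    exact hm' ▸ hn m'

end StandardLattice

section Isogeny

variable {p : ℕ} [Fact p.Prime] {D : Type*} [AddCommGroup D] [Module (Wt p) D]

local notation "σ" => (σW p : Wt p →+* Wt p)

def inlLattice (φ : D →ₗ[Wt p] D2 p) : Submodule (Wt p) (D0 p) :=
  (LinearMap.range φ).comap (LinearMap.inl (Wt p) (D0 p) (D0 p))

def sndLattice (φ : D →ₗ[Wt p] D2 p) : Submodule (Wt p) (D0 p) :=
  LinearMap.range (LinearMap.snd (Wt p) (D0 p) (D0 p) ∘ₗ φ)

theorem mem_inlLattice {φ : D →ₗ[Wt p] D2 p} {m : D0 p} :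
    m ∈ inlLattice φ ↔ ∃ d, φ d = (m, 0) := by
  simp [inlLattice]

theorem mem_sndLattice {φ : D →ₗ[Wt p] D2 p} {m : D0 p} :
    m ∈ sndLattice φ ↔ ∃ d, (φ d).2 = m := by
  simp [sndLattice]

theorem isStandardLattice_inlLattice (φ : D →ₗ[Wt p] D2 p) (F : D → D)
    (hφF : ∀ m, φ (F m) = F2 p (φ m)) (n : ℕ)
    (hn : ∀ d : D2 p, (p : Wt p) ^ n • d ∈ LinearMap.range φ) :
    IsStandardLattice p (inlLattice φ) := by
  refine isStandardLattice_of_p_pow_smul_mem p n (fun m hm => ?_) fun m => ?_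
  · obtain ⟨d, hd⟩ := mem_inlLattice.1 hm
    exact mem_inlLattice.2 ⟨F d, by simp [hφF, hd, F2, F0_zero]⟩
  · obtain ⟨d, hd⟩ := hn (m, 0)
    exact mem_inlLattice.2 ⟨d, by simp [hd]⟩

theorem isStandardLattice_sndLattice (φ : D →ₗ[Wt p] D2 p) (F : D → D)
    (hφF : ∀ m, φ (F m) = F2 p (φ m)) (n : ℕ)
    (hn : ∀ d : D2 p, (p : Wt p) ^ n • d ∈ LinearMap.range φ) :
    IsStandardLattice p (sndLattice φ) := by
  refine isStandardLattice_of_p_pow_smul_mem p n (fun m hm => ?_) fun m => ?_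
  · obtain ⟨d, hd⟩ := mem_sndLattice.1 hm
    exact mem_sndLattice.2 ⟨F d, by simp [hφF, hd, F2]⟩
  · obtain ⟨d, hd⟩ := hn (0, m)
    exact mem_sndLattice.2 ⟨d, by simp [hd]⟩

theorem span_eq_ker_snd_comp {φ : D →ₗ[Wt p] D2 p} (hφinj : Function.Injective φ)
    {v v' : D0 p} (hspan : inlLattice φ = Submodule.span (Wt p) {v, v'}) {b b' : D}
    (hb : φ b = (v, 0)) (hb' : φ b' = (v', 0)) :
    Submodule.span (Wt p) {b, b'} = LinearMap.ker (LinearMap.snd (Wt p) (D0 p) (D0 p) ∘ₗ φ) := by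
  refine le_antisymm (Submodule.span_le.2 ?_) fun d hd => ?_
  · simp [Set.insert_subset_iff, hb, hb']
  · have hφd : φ d = ((φ d).1, 0) := Prod.ext rfl hd
    obtain ⟨x, y, hxy⟩ := Submodule.mem_span_pair.1
      (hspan ▸ mem_inlLattice.2 ⟨d, hφd⟩ : (φ d).1 ∈ Submodule.span (Wt p) {v, v'})
    refine Submodule.mem_span_pair.2 ⟨x, y, hφinj ?_⟩
    rw [hφd, ← hxy]
    simp [hb, hb']

theorem exists_adapted_basis (φ : D →ₗ[Wt p] D2 p) (hφinj : Function.Injective φ)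
    (F : D →ₛₗ[σ] D) (hφF : ∀ m, φ (F m) = F2 p (φ m)) (n : ℕ)
    (hn : ∀ d : D2 p, (p : Wt p) ^ n • d ∈ LinearMap.range φ) :
    ∃ (b c : D) (α β : Wt p), (φ b).2 = 0 ∧ F (F b) = (p : Wt p) • b ∧
      F (F c) = (p : Wt p) • c + α • b + β • F b ∧
      ∀ s : Wt p,
        ∃ B : Module.Basis (Fin 4) (Wt p) D, ⇑B = ![b, F b, c + s • b, F (c + s • b)] := by
  obtain ⟨u, hFFu, hu_ind, hu_span⟩ := isStandardLattice_inlLattice φ F hφF n hn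
  obtain ⟨u', hFFu', hu'_ind, hu'_span⟩ := isStandardLattice_sndLattice φ F hφF n hn
  obtain ⟨b, hb⟩ := mem_inlLattice.1
    (hu_span ▸ Submodule.subset_span (by simp) : u ∈ inlLattice φ)
  obtain ⟨c, hc⟩ := mem_sndLattice.1
    (hu'_span ▸ Submodule.subset_span (by simp) : u' ∈ sndLattice φ)
  set ψ := LinearMap.snd (Wt p) (D0 p) (D0 p) ∘ₗ φ
  have hψc : ψ c = u' := hc
  have hψF (d : D) : ψ (F d) = F0 p (ψ d) := by simp [ψ, hφF, F2]
  have hφFb : φ (F b) = (F0 p u, 0) := by simp [hφF, hb, F2, F0_zero]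
  have hker := span_eq_ker_snd_comp hφinj hu_span hb hφFb
  have hFFb : F (F b) = (p : Wt p) • b := hφinj (by simp [hφF, hb, F2, F0_zero, hFFu])
  have hFFc : F (F c) - (p : Wt p) • c ∈ LinearMap.ker ψ := by simp [hψF, hψc, hFFu']
  obtain ⟨α, β, hαβ⟩ := Submodule.mem_span_pair.1 (hker ▸ hFFc)
  refine ⟨b, c, α, β, by simp [hb], hFFb, by rw [add_assoc, hαβ, add_sub_cancel], fun s => ?_⟩
  have hψ : ψ (c + s • b) = u' := by simp [ψ, hb, hc]
  refine Module.Basis.exists_of_ker_range ψ ?_ hker ?_ ?_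
  · refine LinearIndependent.of_comp (LinearMap.fst (Wt p) (D0 p) (D0 p) ∘ₗ φ) ?_
    convert hu_ind using 1
    funext i
    fin_cases i <;> simp [hb, hφFb]
  · rwa [hψF, hψ]
  · rw [hψF, hψ]
    exact hu'_span.symm

theorem exists_normal_basis (φ : D →ₗ[Wt p] D2 p) (hφinj : Function.Injective φ)
    (F : D →ₛₗ[σ] D) (hφF : ∀ m, φ (F m) = F2 p (φ m))
    (hFV : ∀ m, (p : Wt p) • m ∈ Set.range F) (n : ℕ)
    (hn : ∀ d : D2 p, (p : Wt p) ^ n • d ∈ LinearMap.range φ) :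
    ∃ (x : Wt p) (B : Module.Basis (Fin 4) (Wt p) D),
      F (B 0) = B 1 ∧ F (B 1) = (p : Wt p) • B 0 ∧
      F (B 2) = B 3 ∧ F (B 3) = (p : Wt p) • B 2 + x • B 1 ∧
      (φ (B 0)).2 = 0 ∧ (φ (B 1)).2 = 0 := by
  obtain ⟨b, c, α, β, hφb, hFFb, hFFc, hbasis⟩ := exists_adapted_basis φ hφinj F hφF n hn
  obtain ⟨B₀, hB₀⟩ := hbasis 0
  obtain ⟨α', rfl⟩ : (p : Wt p) ∣ α :=
    dvd_of_smul_mem_range F (WittVector.p_nonzero p _) B₀ (by simpa using hB₀) hFFb hFFc (hFV c)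
  obtain ⟨s, hs⟩ := WittVector.exists_sub_frobenius_frobenius_eq α'
  obtain ⟨B, hB⟩ := hbasis s
  refine ⟨β, B, ?_, ?_, ?_, ?_, ?_, ?_⟩ <;> simp only [hB, Matrix.cons_val]
  · exact hFFb
  · rw [map_add, map_smulₛₗ, map_add, map_smulₛₗ, hFFc, hFFb, ← hs]
    simp only [σW_apply, RingHom.coe_coe]
    module
  · exact hφb
  · simp [hφF, F2, hφb, F0_zero]

theorem map_span_le_span_inl (φ : D →ₗ[Wt p] D2 p) {a b : D} (ha : (φ a).2 = 0)
    (hb : (φ b).2 = 0) :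
    Submodule.map φ (Submodule.span (Wt p) {a, b})
      ≤ Submodule.span (Wt p)
          {(((1 : Wt p), (0 : Wt p)), ((0 : Wt p), (0 : Wt p))),
           (((0 : Wt p), (1 : Wt p)), ((0 : Wt p), (0 : Wt p)))} := by
  have hmem {m : D2 p} (hm : m.2 = 0) : m ∈ Submodule.span (Wt p)
      {(((1 : Wt p), (0 : Wt p)), ((0 : Wt p), (0 : Wt p))),
       (((0 : Wt p), (1 : Wt p)), ((0 : Wt p), (0 : Wt p)))} :=
    Submodule.mem_span_pair.2 ⟨m.1.1, m.1.2, by ext <;> simp [hm]⟩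
  rw [Submodule.map_span, Set.image_pair, Submodule.span_le, Set.insert_subset_iff,
    Set.singleton_subset_iff]
  exact ⟨hmem ha, hmem hb⟩

end Isogeny

theorem statement2_general (p : ℕ) [Fact p.Prime]
    (D : Type*) [AddCommGroup D] [Module (Wt p) D]
    (F V : D → D)
    (hFadd : ∀ m n : D, F (m + n) = F m + F n)
    (hFsemi : ∀ (a : Wt p) (m : D), F (a • m) = σW p a • F m)
    (hFV : ∀ m : D, F (V m) = (p : Wt p) • m)
    (hVF : ∀ m : D, V (F m) = (p : Wt p) • m)
    (φ : D →ₗ[Wt p] D2 p)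
    (hφinj : Function.Injective φ)
    (hφF : ∀ m : D, φ (F m) = F2 p (φ m))
    (hφcoker : ∃ n : ℕ, ∀ d : D2 p, (p : Wt p) ^ n • d ∈ LinearMap.range φ)
    :
    ∃ (x : Wt p) (b : Module.Basis (Fin 4) (Wt p) D),
      F (b 0) = b 1 ∧ F (b 1) = (p : Wt p) • b 0 ∧
      F (b 2) = b 3 ∧ F (b 3) = (p : Wt p) • b 2 + x • b 1 ∧
      V (b 0) = b 1 ∧ V (b 1) = (p : Wt p) • b 0 ∧
      V (b 2) = b 3 - (σW p).symm x • b 0 ∧ V (b 3) = (p : Wt p) • b 2 ∧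
      Submodule.map φ (Submodule.span (Wt p) {b 0, b 1})
        ≤ Submodule.span (Wt p)
            {(((1 : Wt p), (0 : Wt p)), ((0 : Wt p), (0 : Wt p))),
             (((0 : Wt p), (1 : Wt p)), ((0 : Wt p), (0 : Wt p)))} := by
  obtain ⟨n, hn⟩ := hφcoker
  let Fₛ : D →ₛₗ[(σW p : Wt p →+* Wt p)] D :=
    { toFun := F, map_add' := hFadd, map_smul' := hFsemi }
  have hFinj : Function.Injective F := fun m m' h =>
    hφinj (F2_injective p (by rw [← hφF, ← hφF, h]))
  obtain ⟨x, b, hF₀, hF₁, hF₂, hF₃, hφ₀, hφ₁⟩ :=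
    exists_normal_basis φ hφinj Fₛ hφF (fun m => ⟨V m, hFV m⟩) n hn
  have hFₛ : ⇑Fₛ = F := rfl
  rw [hFₛ] at hF₀ hF₁ hF₂ hF₃
  refine ⟨x, b, hF₀, hF₁, hF₂, hF₃, hFinj ?_, by rw [← hF₀, hVF], hFinj ?_, by rw [← hF₂, hVF],
    map_span_le_span_inl φ hφ₀ hφ₁⟩
  · rw [hFV, hF₁]
  · rw [hFV, ← hFₛ, map_sub, map_smulₛₗ, hFₛ, hF₀, hF₃]
    simp

/-- an isogeny `φ : (D,F,V) → D₀ ⊕ D₀` of Dieudonné modules, with `D` free of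
rank 4, forces the existence of a basis `e₁ = b 0, f₁ = b 1, e₂ = b 2, f₂ = b 3` of `D` in
which `F` and `V` take the standard shape for some `x ∈ W`, with
`φ(We₁ + Wf₁) ⊆ We₁′ + Wf₁′`. -/
theorem statement2 (p : ℕ) [Fact p.Prime] (hp : Odd p)
    (D : Type*) [AddCommGroup D] [Module (Wt p) D]
    [Module.Free (Wt p) D] [Module.Finite (Wt p) D]
    (hD : Module.finrank (Wt p) D = 4)
    (F V : D → D)
    (hFadd : ∀ m n : D, F (m + n) = F m + F n)
    (hFsemi : ∀ (a : Wt p) (m : D), F (a • m) = σW p a • F m)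
    (hVadd : ∀ m n : D, V (m + n) = V m + V n)
    (hVsemi : ∀ (a : Wt p) (m : D), V (a • m) = (σW p).symm a • V m)
    (hFV : ∀ m : D, F (V m) = (p : Wt p) • m)
    (hVF : ∀ m : D, V (F m) = (p : Wt p) • m)
    (φ : D →ₗ[Wt p] D2 p)
    (hφinj : Function.Injective φ)
    (hφF : ∀ m : D, φ (F m) = F2 p (φ m))
    (hφV : ∀ m : D, φ (V m) = V2 p (φ m))
    (hφcoker : ∃ n : ℕ, ∀ d : D2 p, (p : Wt p) ^ n • d ∈ LinearMap.range φ)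
    :
    ∃ (x : Wt p) (b : Module.Basis (Fin 4) (Wt p) D),
      F (b 0) = b 1 ∧ F (b 1) = (p : Wt p) • b 0 ∧
      F (b 2) = b 3 ∧ F (b 3) = (p : Wt p) • b 2 + x • b 1 ∧
      V (b 0) = b 1 ∧ V (b 1) = (p : Wt p) • b 0 ∧
      V (b 2) = b 3 - (σW p).symm x • b 0 ∧ V (b 3) = (p : Wt p) • b 2 ∧
      Submodule.map φ (Submodule.span (Wt p) {b 0, b 1})
        ≤ Submodule.span (Wt p)
            {(((1 : Wt p), (0 : Wt p)), ((0 : Wt p), (0 : Wt p))),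
             (((0 : Wt p), (1 : Wt p)), ((0 : Wt p), (0 : Wt p)))} :=
  statement2_general p D F V hFadd hFsemi hFV hVF φ hφinj hφF hφcoker
end
end

section
/- Let x, y, z ∈ W with x, y ∈ W^×, and let x', y', z' ∈ W. If there exists an isomorphism of Dieudonné modules D(x, y, z) ≅ D(x', y', z'), then x' ∈ W^× and y' ∈ W^×. -/
noncomputable section

open Pointwise

/-- Frobenius of the Dieudonné module `D(x,y,z)`, which is free of rank 6 over `W` with basis
`e₁, f₁, e₂, f₂, e₃, f₃` (coordinates `0,…,5`): `F e₁ = f₁`, `F f₁ = p e₁`, `F e₂ = f₂`,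
`F f₂ = p e₂ + x f₁`, `F e₃ = f₃`, `F f₃ = p e₃ + y f₂ + z f₁`, extended `σ`-semilinearly. -/
def FD (p : ℕ) [Fact p.Prime] (x y z : Wt p) : (Fin 6 → Wt p) → (Fin 6 → Wt p) := fun v =>
  ![(p : Wt p) * σW p (v 1),
    σW p (v 0) + x * σW p (v 3) + z * σW p (v 5),
    (p : Wt p) * σW p (v 3),
    σW p (v 2) + y * σW p (v 5),
    (p : Wt p) * σW p (v 5),
    σW p (v 4)]

/-- Verschiebung of `D(x,y,z)`: `V e₁ = f₁`, `V f₁ = p e₁`, `V e₂ = f₂ − σ⁻¹(x) e₁`,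
`V f₂ = p e₂`, `V e₃ = f₃ − σ⁻¹(y) e₂ − σ⁻¹(z) e₁`, `V f₃ = p e₃`, extended
`σ⁻¹`-semilinearly. -/
def VD (p : ℕ) [Fact p.Prime] (x y z : Wt p) : (Fin 6 → Wt p) → (Fin 6 → Wt p) := fun v =>
  ![(p : Wt p) * (σW p).symm (v 1) - (σW p).symm x * (σW p).symm (v 2)
      - (σW p).symm z * (σW p).symm (v 4),
    (σW p).symm (v 0),
    (p : Wt p) * (σW p).symm (v 3) - (σW p).symm y * (σW p).symm (v 4),
    (σW p).symm (v 2),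
    (p : Wt p) * (σW p).symm (v 5),
    (σW p).symm (v 4)]

/-- An isomorphism of Dieudonné modules `D(x,y,z) ≅ D(x',y',z')`: a bijective `W`-linear map
commuting with the Frobenii and the Verschiebungen. -/
def DIso (p : ℕ) [Fact p.Prime] (x y z x' y' z' : Wt p) : Prop :=
  ∃ φ : (Fin 6 → Wt p) ≃ₗ[Wt p] (Fin 6 → Wt p),
    (∀ v, φ (FD p x y z v) = FD p x' y' z' (φ v)) ∧
    (∀ v, φ (VD p x y z v) = VD p x' y' z' (φ v))

section Test
variable (p : ℕ) [Fact p.Prime]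

def rK : Wt p →+* Kbar p := WittVector.constantCoeff

lemma rK_p : rK p (p : Wt p) = 0 := by
  rw [map_natCast]; exact CharP.cast_eq_zero (Kbar p) p

lemma rK_sigma (w : Wt p) : rK p (σW p w) = (rK p w) ^ p := by
  show (σW p w).coeff 0 = (w.coeff 0) ^ p
  rw [σW, WittVector.frobeniusEquiv_apply]
  exact WittVector.coeff_frobenius_charP (p := p) w 0

lemma vec6_at5 {α : Type*} (a0 a1 a2 a3 a4 a5 : α) :
    ![a0, a1, a2, a3, a4, a5] (5 : Fin 6) = a5 := rfl

lemma G2_eq (x y z : Wt p) :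
    FD p x y z (FD p x y z ![0, 0, 1, 0, 0, 0]) = ![0, x, (p : Wt p), 0, 0, 0] := by
  funext i
  fin_cases i <;> simp [FD, vec6_at5]

lemma G4_eq (x y z : Wt p) :
    FD p x y z (FD p x y z ![0, 0, 0, 0, 1, 0]) = ![0, z, 0, y, (p : Wt p), 0] := by
  funext i
  fin_cases i <;> simp [FD, vec6_at5]

lemma red_FDFD (a b c : Wt p) (w : Fin 6 → Wt p) :
    (fun i => rK p ((FD p a b c (FD p a b c w)) i)) =
    ![0,
      rK p a * (((rK p (w 2)) ^ p) ^ p + (rK p b) ^ p * ((rK p (w 5)) ^ p) ^ p)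
        + rK p c * ((rK p (w 4)) ^ p) ^ p,
      0,
      rK p b * ((rK p (w 4)) ^ p) ^ p,
      0, 0] := by
  have hp0 : p ≠ 0 := (Fact.out : p.Prime).ne_zero
  funext i
  fin_cases i <;>
    simp [FD, vec6_at5, rK_sigma, rK_p, zero_pow hp0, mul_pow, map_add, map_mul]


lemma key_contra {K : Type*} [Field K] (N : Matrix (Fin 6) (Fin 6) K)
    (hN : ∀ w, N.mulVec w = 0 → w = 0)
    (a b c : K) (ha : a ≠ 0) (hb : b ≠ 0) (cv : Fin 6 → K) (α β : K)
    (h1 : N.mulVec ![0, a, 0, 0, 0, 0] = α • cv)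
    (h2 : N.mulVec ![0, c, 0, b, 0, 0] = β • cv) : False := by
  have h3 : N.mulVec (β • ![0, a, 0, 0, 0, 0] - α • ![0, c, 0, b, 0, 0]) = 0 := by
    rw [Matrix.mulVec_sub, Matrix.mulVec_smul, Matrix.mulVec_smul, h1, h2,
      smul_smul, smul_smul, mul_comm, sub_self]
  have h4 := hN _ h3
  have h5 : α * b = 0 := by
    have := congrFun h4 3
    simpa using this
  have hα : α = 0 := by
    rcases mul_eq_zero.mp h5 with h | h
    · exact h
    · exact absurd h hb
  rw [hα, zero_smul] at h1
  have h6 := congrFun (hN _ h1) 1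
  simp at h6
  exact ha h6

section Red
variable (p : ℕ) [Fact p.Prime]

lemma reduction (φ : (Fin 6 → Wt p) ≃ₗ[Wt p] (Fin 6 → Wt p)) :
    ∃ N : Matrix (Fin 6) (Fin 6) (Kbar p),
      (∀ w, N.mulVec w = 0 → w = 0) ∧
      (∀ (v : Fin 6 → Wt p), (fun i => rK p ((φ v) i)) = N.mulVec (fun j => rK p (v j))) := by
  set M := LinearMap.toMatrix' (φ : (Fin 6 → Wt p) →ₗ[Wt p] (Fin 6 → Wt p)) with hM
  set M' := LinearMap.toMatrix' (φ.symm : (Fin 6 → Wt p) →ₗ[Wt p] (Fin 6 → Wt p)) with hM'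
  refine ⟨M.map (rK p), ?_, ?_⟩
  · have hMM : M' * M = 1 := by
      rw [hM, hM', ← LinearMap.toMatrix'_comp]
      have : (φ.symm : (Fin 6 → Wt p) →ₗ[Wt p] _) ∘ₗ (φ : (Fin 6 → Wt p) →ₗ[Wt p] _)
          = LinearMap.id := by
        ext v : 1
        simp
      rw [this, LinearMap.toMatrix'_id]
    have hNN : (M'.map (rK p)) * (M.map (rK p)) = 1 := by
      rw [← Matrix.map_mul, hMM, Matrix.map_one _ (map_zero _) (map_one _)]
    intro w hw
    have : (M'.map (rK p)).mulVec ((M.map (rK p)).mulVec w) = w := by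
      rw [Matrix.mulVec_mulVec, hNN, Matrix.one_mulVec]
    rw [hw, Matrix.mulVec_zero] at this
    exact this.symm
  · intro v
    have hφ : φ v = M.mulVec v := by
      rw [hM, ← Matrix.toLin'_apply, Matrix.toLin'_toMatrix']
      rfl
    funext i
    rw [hφ]
    simp [Matrix.mulVec, dotProduct, map_sum, Matrix.map_apply]

end Red

/-- if `x, y ∈ W^×` and `D(x,y,z) ≅ D(x',y',z')` then `x', y' ∈ W^×`. -/
theorem statement6 (p : ℕ) [Fact p.Prime] (hp : Odd p) (x y z x' y' z' : Wt p)
    (hx : IsUnit x) (hy : IsUnit y) (h : DIso p x y z x' y' z') :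
    IsUnit x' ∧ IsUnit y' := by
  obtain ⟨φ, hF, -⟩ := h
  obtain ⟨N, hNinj, hred⟩ := reduction p φ
  have hxa : rK p x ≠ 0 := (hx.map (rK p)).ne_zero
  have hya : rK p y ≠ 0 := (hy.map (rK p)).ne_zero
  have hG : ∀ v, φ (FD p x y z (FD p x y z v)) = FD p x' y' z' (FD p x' y' z' (φ v)) :=
    fun v => by rw [hF, hF]
  set w2 : Fin 6 → Wt p := φ ![0, 0, 1, 0, 0, 0] with hw2
  set w4 : Fin 6 → Wt p := φ ![0, 0, 0, 0, 1, 0] with hw4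
  have E2 : N.mulVec ![0, rK p x, 0, 0, 0, 0] =
      ![0,
        rK p x' * (((rK p (w2 2)) ^ p) ^ p + (rK p y') ^ p * ((rK p (w2 5)) ^ p) ^ p)
          + rK p z' * ((rK p (w2 4)) ^ p) ^ p,
        0,
        rK p y' * ((rK p (w2 4)) ^ p) ^ p,
        0, 0] := by
    have h2 := hG ![0, 0, 1, 0, 0, 0]
    rw [G2_eq] at h2
    have lhs : (fun i => rK p ((φ ![0, x, (p : Wt p), 0, 0, 0]) i))
        = N.mulVec ![0, rK p x, 0, 0, 0, 0] := by
      have hv : (fun j => rK p (![0, x, (p : Wt p), 0, 0, 0] j))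
          = ![0, rK p x, (0 : Kbar p), 0, 0, 0] := by
        funext j
        fin_cases j <;> simp [rK_p, vec6_at5]
      rw [hred, hv]
    calc N.mulVec ![0, rK p x, 0, 0, 0, 0]
        = fun i => rK p ((φ ![0, x, (p : Wt p), 0, 0, 0]) i) := lhs.symm
      _ = fun i => rK p ((FD p x' y' z' (FD p x' y' z' w2)) i) := by rw [h2]
      _ = _ := by rw [red_FDFD]
  have E4 : N.mulVec ![0, rK p z, 0, rK p y, 0, 0] =
      ![0,
        rK p x' * (((rK p (w4 2)) ^ p) ^ p + (rK p y') ^ p * ((rK p (w4 5)) ^ p) ^ p)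
          + rK p z' * ((rK p (w4 4)) ^ p) ^ p,
        0,
        rK p y' * ((rK p (w4 4)) ^ p) ^ p,
        0, 0] := by
    have h4 := hG ![0, 0, 0, 0, 1, 0]
    rw [G4_eq] at h4
    have lhs : (fun i => rK p ((φ ![0, z, 0, y, (p : Wt p), 0]) i))
        = N.mulVec ![0, rK p z, 0, rK p y, 0, 0] := by
      have hv : (fun j => rK p (![0, z, 0, y, (p : Wt p), 0] j))
          = ![0, rK p z, (0 : Kbar p), rK p y, 0, 0] := by
        funext j
        fin_cases j <;> simp [rK_p, vec6_at5]
      rw [hred, hv]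
    calc N.mulVec ![0, rK p z, 0, rK p y, 0, 0]
        = fun i => rK p ((φ ![0, z, 0, y, (p : Wt p), 0]) i) := lhs.symm
      _ = fun i => rK p ((FD p x' y' z' (FD p x' y' z' w4)) i) := by rw [h4]
      _ = _ := by rw [red_FDFD]
  constructor
  · refine WittVector.isUnit_of_coeff_zero_ne_zero x' ?_
    intro hx0
    have hx0' : rK p x' = 0 := hx0
    refine key_contra N hNinj (rK p x) (rK p y) (rK p z) hxa hya
      ![0, rK p z', 0, rK p y', 0, 0]
      (((rK p (w2 4)) ^ p) ^ p) (((rK p (w4 4)) ^ p) ^ p) ?_ ?_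
    · rw [E2]
      funext i
      fin_cases i <;> simp [hx0', mul_comm, vec6_at5]
    · rw [E4]
      funext i
      fin_cases i <;> simp [hx0', mul_comm, vec6_at5]
  · refine WittVector.isUnit_of_coeff_zero_ne_zero y' ?_
    intro hy0
    have hy0' : rK p y' = 0 := hy0
    refine key_contra N hNinj (rK p x) (rK p y) (rK p z) hxa hya
      ![0, 1, 0, 0, 0, 0]
      (rK p x' * (((rK p (w2 2)) ^ p) ^ p + (rK p y') ^ p * ((rK p (w2 5)) ^ p) ^ p)
        + rK p z' * ((rK p (w2 4)) ^ p) ^ p)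
      (rK p x' * (((rK p (w4 2)) ^ p) ^ p + (rK p y') ^ p * ((rK p (w4 5)) ^ p) ^ p)
        + rK p z' * ((rK p (w4 4)) ^ p) ^ p) ?_ ?_
    · rw [E2]
      funext i
      fin_cases i <;> simp [hy0', vec6_at5]
    · rw [E4]
      funext i
      fin_cases i <;> simp [hy0', vec6_at5]
end Test
end
end

section
/- Let x, y, z, x', y', z' ∈ W with x, y ∈ W^×, and suppose M ∈ GL₆(W) satisfies A(x,y,z)·σ(M) = M·A(x',y',z'), where σ(M) denotes the matrix obtained by applying σ to every entry of M. Then: (i) the entries M₃₁, M₅₁, M₆₁ and M₅₃ of M are divisible by p; (ii) M₁₁, M₃₃, M₅₅ and σ(M₃₃) + y·σ(M₆₃) are units of W; (iii) x'·σ(M₁₁) ≡ x·M₃₃ (mod pW). In particular, x' ∈ W^×. -/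
noncomputable section

open Pointwise

/-- The matrix `A(x,y,z)` of the Frobenius of `D(x,y,z)` in its standard basis. -/
def AD (p : ℕ) [Fact p.Prime] (x y z : Wt p) : Matrix (Fin 6) (Fin 6) (Wt p) :=
  Matrix.of
    ![![0, (p : Wt p), 0, 0, 0, 0],
      ![1, 0, 0, x, 0, z],
      ![0, 0, 0, (p : Wt p), 0, 0],
      ![0, 0, 1, 0, 0, y],
      ![0, 0, 0, 0, 0, (p : Wt p)],
      ![0, 0, 0, 0, 1, 0]]

/- ====================  auxiliary material  ==================== -/

@[simp]
lemma cons_val_five' {α : Type*} {m : ℕ} (x : α) (u : Fin (m + 5) → α) :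
    Matrix.vecCons x u 5 =
      Matrix.vecHead (Matrix.vecTail (Matrix.vecTail (Matrix.vecTail (Matrix.vecTail u)))) :=
  rfl

/-- generic version of `AD` over any commutative ring -/
def ADg {R : Type*} [CommRing R] (q x y z : R) : Matrix (Fin 6) (Fin 6) R :=
  Matrix.of
    ![![0, q, 0, 0, 0, 0],
      ![1, 0, 0, x, 0, z],
      ![0, 0, 0, q, 0, 0],
      ![0, 0, 1, 0, 0, y],
      ![0, 0, 0, 0, 0, q],
      ![0, 0, 0, 0, 1, 0]]

/-- `q · ADg⁻¹`, the matrix of Verschiebung. -/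
def BDg {R : Type*} [CommRing R] (q x y z : R) : Matrix (Fin 6) (Fin 6) R :=
  Matrix.of
    ![![0, q, -x, 0, -z, 0],
      ![1, 0, 0, 0, 0, 0],
      ![0, 0, 0, q, -y, 0],
      ![0, 0, 1, 0, 0, 0],
      ![0, 0, 0, 0, 0, q],
      ![0, 0, 0, 0, 1, 0]]

set_option maxHeartbeats 1000000 in
lemma BDg_mul_ADg {R : Type*} [CommRing R] (q x y z : R) :
    BDg q x y z * ADg q x y z = q • 1 := by
  ext i j
  fin_cases i <;> fin_cases j <;>
    simp [ADg, BDg, Matrix.mul_apply, Fin.sum_univ_six, Matrix.vecHead, Matrix.vecTail] <;>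
    ring

set_option maxHeartbeats 1000000 in
lemma ADg_mul_BDg {R : Type*} [CommRing R] (q x y z : R) :
    ADg q x y z * BDg q x y z = q • 1 := by
  ext i j
  fin_cases i <;> fin_cases j <;>
    simp [ADg, BDg, Matrix.mul_apply, Fin.sum_univ_six, Matrix.vecHead, Matrix.vecTail] <;>
    ring

lemma E2_of_E1 {R : Type*} [CommRing R] [IsDomain R] {q x y z x' y' z' : R} (hq : q ≠ 0)
    {Ms M : Matrix (Fin 6) (Fin 6) R}
    (h : ADg q x y z * Ms = M * ADg q x' y' z') :
    BDg q x y z * M = Ms * BDg q x' y' z' := by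
  have h1 : q • (BDg q x y z * M) = q • (Ms * BDg q x' y' z') := by
    calc q • (BDg q x y z * M)
        = BDg q x y z * M * (ADg q x' y' z' * BDg q x' y' z') := by
          rw [ADg_mul_BDg, Matrix.mul_smul, mul_one]
      _ = BDg q x y z * (M * ADg q x' y' z') * BDg q x' y' z' := by
          rw [mul_assoc, mul_assoc, mul_assoc]
      _ = BDg q x y z * (ADg q x y z * Ms) * BDg q x' y' z' := by rw [h]
      _ = (BDg q x y z * ADg q x y z) * (Ms * BDg q x' y' z') := by
          simp only [mul_assoc]
      _ = q • (Ms * BDg q x' y' z') := by rw [BDg_mul_ADg, Matrix.smul_mul, one_mul]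
  ext i j
  have h2 := congrFun (congrFun h1 i) j
  simp only [Matrix.smul_apply, smul_eq_mul] at h2
  exact mul_left_cancel₀ hq h2

lemma unit_dvd_cancel {R : Type*} [CommRing R] {y m q : R} (hy : IsUnit y)
    (h : q ∣ y * m) : q ∣ m := by
  obtain ⟨u, rfl⟩ := hy
  obtain ⟨c, hc⟩ := h
  exact ⟨(↑u⁻¹ : Rˣ) * c, by
    have : ((↑u⁻¹ : Rˣ) : R) * ((u : R) * m) = ((↑u⁻¹ : Rˣ) : R) * (q * c) := by rw [hc]
    calc m = ((↑u⁻¹ : Rˣ) : R) * ((u : R) * m) := by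
            rw [← mul_assoc, Units.inv_mul, one_mul]
      _ = q * (((↑u⁻¹ : Rˣ) : R) * c) := by rw [this]; ring⟩

lemma dvd_sigma_iff (p : ℕ) [Fact p.Prime] (t : Wt p) :
    (p : Wt p) ∣ σW p t ↔ (p : Wt p) ∣ t := by
  constructor
  · rintro ⟨c, hc⟩
    refine ⟨(σW p).symm c, ?_⟩
    apply (σW p).injective
    rw [map_mul, map_natCast, RingEquiv.apply_symm_apply, hc]
  · rintro ⟨c, hc⟩
    exact ⟨σW p c, by rw [hc, map_mul, map_natCast]⟩

lemma wt_dvd_of_not_unit (p : ℕ) [Fact p.Prime] {u : Wt p} (h : ¬ IsUnit u) :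
    (p : Wt p) ∣ u := by
  rcases eq_or_ne u 0 with rfl | h0
  · exact dvd_zero _
  · obtain ⟨m, b, hb⟩ := WittVector.exists_eq_pow_p_mul' u h0
    cases m with
    | zero => exact absurd (hb ▸ (by simpa using b.isUnit)) h
    | succ n => exact ⟨(p : Wt p) ^ n * b, by rw [hb]; ring⟩

lemma wt_unit_of_quot (p : ℕ) [Fact p.Prime] {u : Wt p}
    (h : IsUnit ((Ideal.Quotient.mk (Ideal.span {(p : Wt p)})) u)) : IsUnit u := by
  by_contra hu
  have hd := wt_dvd_of_not_unit p hu
  have h0 : (Ideal.Quotient.mk (Ideal.span {(p : Wt p)})) u = 0 := by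
    rw [Ideal.Quotient.eq_zero_iff_mem, Ideal.mem_span_singleton]
    exact hd
  rw [h0] at h
  have : Nontrivial (Wt p ⧸ Ideal.span {(p : Wt p)}) := by
    refine Ideal.Quotient.nontrivial_iff.mpr ?_
    rw [Ne, Ideal.span_singleton_eq_top]
    exact (WittVector.irreducible p).not_isUnit
  exact not_isUnit_zero h


/-- the permutation (0 2 4)(1 3 5)... reordering basis to `1,3,5,0,2,4`. -/
def eP : Fin 6 ≃ Fin 6 :=
  ⟨![1, 3, 5, 0, 2, 4], ![3, 0, 4, 1, 5, 2], by decide, by decide⟩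

set_option maxHeartbeats 1000000 in
lemma det_pattern {R : Type*} [CommRing R] (m : Matrix (Fin 6) (Fin 6) R)
    (h01 : m 0 1 = 0) (h03 : m 0 3 = 0) (h05 : m 0 5 = 0)
    (h20 : m 2 0 = 0) (h21 : m 2 1 = 0) (h23 : m 2 3 = 0) (h25 : m 2 5 = 0)
    (h31 : m 3 1 = 0)
    (h40 : m 4 0 = 0) (h41 : m 4 1 = 0) (h42 : m 4 2 = 0) (h43 : m 4 3 = 0) (h45 : m 4 5 = 0)
    (h50 : m 5 0 = 0) (h51 : m 5 1 = 0) (h53 : m 5 3 = 0) :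
    m.det = m 0 0 * m 1 1 * m 2 2 * m 3 3 * m 4 4 * m 5 5 := by
  have hbt : (m.submatrix eP eP).BlockTriangular id := by
    intro i j hji
    simp only [id] at hji
    fin_cases i <;> fin_cases j <;>
      simp_all [Matrix.submatrix_apply, eP] <;> omega
  calc m.det = (m.submatrix eP eP).det := (Matrix.det_submatrix_equiv_self eP m).symm
    _ = ∏ i, (m.submatrix eP eP) i i := Matrix.det_of_upperTriangular hbt
    _ = m 0 0 * m 1 1 * m 2 2 * m 3 3 * m 4 4 * m 5 5 := by
        simp [Fin.prod_univ_six, Matrix.submatrix_apply, eP]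
        ring

set_option maxHeartbeats 2000000 in
/-- if `M ∈ GL₆(W)` satisfies `A(x,y,z)·σ(M) = M·A(x',y',z')` with `x, y ∈ W^×`,
then (i) `p ∣ M₃₁, M₅₁, M₆₁, M₅₃`; (ii) `M₁₁, M₃₃, M₅₅, σ(M₃₃) + y·σ(M₆₃) ∈ W^×`;
(iii) `x'·σ(M₁₁) ≡ x·M₃₃ (mod p)`; in particular `x' ∈ W^×`.
(Matrix indices are 1-based in the informal statement, 0-based here.) -/
theorem statement8 (p : ℕ) [Fact p.Prime] (hp : Odd p) (x y z x' y' z' : Wt p)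
    (hx : IsUnit x) (hy : IsUnit y)
    (M : Matrix (Fin 6) (Fin 6) (Wt p)) (hM : IsUnit M.det)
    (heq : AD p x y z * M.map (σW p) = M * AD p x' y' z') :
    ((p : Wt p) ∣ M 2 0 ∧ (p : Wt p) ∣ M 4 0 ∧ (p : Wt p) ∣ M 5 0 ∧ (p : Wt p) ∣ M 4 2) ∧
    (IsUnit (M 0 0) ∧ IsUnit (M 2 2) ∧ IsUnit (M 4 4) ∧
      IsUnit (σW p (M 2 2) + y * σW p (M 5 2))) ∧
    ((p : Wt p) ∣ (x' * σW p (M 0 0) - x * M 2 2)) ∧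
    IsUnit x' := by
  have hq : (p : Wt p) ≠ 0 := WittVector.p_nonzero p (Kbar p)
  set q : Wt p := (p : Wt p) with hqdef
  set S : Wt p ≃+* Wt p := σW p with hSdef
  have heq' : ADg q x y z * M.map S = M * ADg q x' y' z' := heq
  have heq2 : BDg q x y z * M = M.map S * BDg q x' y' z' := E2_of_E1 hq heq'
  have hA : ∀ i j, (ADg q x y z * M.map S) i j = (M * ADg q x' y' z') i j :=
    fun i j => by rw [heq']
  have hB : ∀ i j, (BDg q x y z * M) i j = (M.map S * BDg q x' y' z') i j :=
    fun i j => by rw [heq2]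
  -- E1 scalar relations
  have e100 : q * S (M 1 0) = M 0 1 := by
    have h := hA 0 0
    simp [ADg, Matrix.mul_apply, Fin.sum_univ_six, Matrix.vecHead, Matrix.vecTail,
      Matrix.map_apply] at h
    linear_combination h
  have e102 : q * S (M 1 2) = M 0 3 := by
    have h := hA 0 2
    simp [ADg, Matrix.mul_apply, Fin.sum_univ_six, Matrix.vecHead, Matrix.vecTail,
      Matrix.map_apply] at h
    linear_combination h
  have e104 : q * S (M 1 4) = M 0 5 := by
    have h := hA 0 4
    simp [ADg, Matrix.mul_apply, Fin.sum_univ_six, Matrix.vecHead, Matrix.vecTail,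
      Matrix.map_apply] at h
    linear_combination h
  have e120 : q * S (M 3 0) = M 2 1 := by
    have h := hA 2 0
    simp [ADg, Matrix.mul_apply, Fin.sum_univ_six, Matrix.vecHead, Matrix.vecTail,
      Matrix.map_apply] at h
    linear_combination h
  have e122 : q * S (M 3 2) = M 2 3 := by
    have h := hA 2 2
    simp [ADg, Matrix.mul_apply, Fin.sum_univ_six, Matrix.vecHead, Matrix.vecTail,
      Matrix.map_apply] at h
    linear_combination h
  have e124 : q * S (M 3 4) = M 2 5 := by
    have h := hA 2 4
    simp [ADg, Matrix.mul_apply, Fin.sum_univ_six, Matrix.vecHead, Matrix.vecTail,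
      Matrix.map_apply] at h
    linear_combination h
  have e140 : q * S (M 5 0) = M 4 1 := by
    have h := hA 4 0
    simp [ADg, Matrix.mul_apply, Fin.sum_univ_six, Matrix.vecHead, Matrix.vecTail,
      Matrix.map_apply] at h
    linear_combination h
  have e142 : q * S (M 5 2) = M 4 3 := by
    have h := hA 4 2
    simp [ADg, Matrix.mul_apply, Fin.sum_univ_six, Matrix.vecHead, Matrix.vecTail,
      Matrix.map_apply] at h
    linear_combination h
  have e144 : q * S (M 5 4) = M 4 5 := by
    have h := hA 4 4
    simp [ADg, Matrix.mul_apply, Fin.sum_univ_six, Matrix.vecHead, Matrix.vecTail,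
      Matrix.map_apply] at h
    linear_combination h
  have e130 : S (M 2 0) + y * S (M 5 0) = M 3 1 := by
    have h := hA 3 0
    simp [ADg, Matrix.mul_apply, Fin.sum_univ_six, Matrix.vecHead, Matrix.vecTail,
      Matrix.map_apply] at h
    linear_combination h
  have e132 : S (M 2 2) + y * S (M 5 2) = M 3 3 := by
    have h := hA 3 2
    simp [ADg, Matrix.mul_apply, Fin.sum_univ_six, Matrix.vecHead, Matrix.vecTail,
      Matrix.map_apply] at h
    linear_combination h
  have e150 : S (M 4 0) = M 5 1 := by
    have h := hA 5 0
    simp [ADg, Matrix.mul_apply, Fin.sum_univ_six, Matrix.vecHead, Matrix.vecTail,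
      Matrix.map_apply] at h
    linear_combination h
  have e152 : S (M 4 2) = M 5 3 := by
    have h := hA 5 2
    simp [ADg, Matrix.mul_apply, Fin.sum_univ_six, Matrix.vecHead, Matrix.vecTail,
      Matrix.map_apply] at h
    linear_combination h
  -- E2 scalar relations
  have f20 : q * M 3 0 - y * M 4 0 = S (M 2 1) := by
    have h := hB 2 0
    simp [BDg, Matrix.mul_apply, Fin.sum_univ_six, Matrix.vecHead, Matrix.vecTail,
      Matrix.map_apply] at h
    linear_combination h
  have f00 : q * M 1 0 - x * M 2 0 - z * M 4 0 = S (M 0 1) := by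
    have h := hB 0 0
    simp [BDg, Matrix.mul_apply, Fin.sum_univ_six, Matrix.vecHead, Matrix.vecTail,
      Matrix.map_apply] at h
    linear_combination h
  have f30 : M 2 0 = S (M 3 1) := by
    have h := hB 3 0
    simp [BDg, Matrix.mul_apply, Fin.sum_univ_six, Matrix.vecHead, Matrix.vecTail,
      Matrix.map_apply] at h
    linear_combination h
  have f22 : q * M 3 2 - y * M 4 2 = S (M 2 3) - x' * S (M 2 0) := by
    have h := hB 2 2
    simp [BDg, Matrix.mul_apply, Fin.sum_univ_six, Matrix.vecHead, Matrix.vecTail,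
      Matrix.map_apply] at h
    linear_combination h
  have f02 : q * M 1 2 - x * M 2 2 - z * M 4 2 = S (M 0 3) - x' * S (M 0 0) := by
    have h := hB 0 2
    simp [BDg, Matrix.mul_apply, Fin.sum_univ_six, Matrix.vecHead, Matrix.vecTail,
      Matrix.map_apply] at h
    linear_combination h
  -- divisibility facts
  have hd01 : q ∣ M 0 1 := ⟨S (M 1 0), e100.symm⟩
  have hd03 : q ∣ M 0 3 := ⟨S (M 1 2), e102.symm⟩
  have hd05 : q ∣ M 0 5 := ⟨S (M 1 4), e104.symm⟩
  have hd21 : q ∣ M 2 1 := ⟨S (M 3 0), e120.symm⟩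
  have hd23 : q ∣ M 2 3 := ⟨S (M 3 2), e122.symm⟩
  have hd25 : q ∣ M 2 5 := ⟨S (M 3 4), e124.symm⟩
  have hd41 : q ∣ M 4 1 := ⟨S (M 5 0), e140.symm⟩
  have hd43 : q ∣ M 4 3 := ⟨S (M 5 2), e142.symm⟩
  have hd45 : q ∣ M 4 5 := ⟨S (M 5 4), e144.symm⟩
  have hd40 : q ∣ M 4 0 := by
    apply unit_dvd_cancel hy
    have : y * M 4 0 = q * M 3 0 - S (M 2 1) := by linear_combination -f20
    rw [this]
    exact dvd_sub (Dvd.intro _ rfl) ((dvd_sigma_iff p _).mpr hd21)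
  have hd20 : q ∣ M 2 0 := by
    apply unit_dvd_cancel hx
    have : x * M 2 0 = q * M 1 0 - z * M 4 0 - S (M 0 1) := by linear_combination -f00
    rw [this]
    exact dvd_sub (dvd_sub (Dvd.intro _ rfl) (hd40.mul_left z)) ((dvd_sigma_iff p _).mpr hd01)
  have hd31 : q ∣ M 3 1 := (dvd_sigma_iff p _).mp (f30 ▸ hd20)
  have hd50 : q ∣ M 5 0 := by
    rw [← dvd_sigma_iff p]
    apply unit_dvd_cancel hy
    have : y * S (M 5 0) = M 3 1 - S (M 2 0) := by linear_combination e130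
    rw [this]
    exact dvd_sub hd31 ((dvd_sigma_iff p _).mpr hd20)
  have hd42 : q ∣ M 4 2 := by
    apply unit_dvd_cancel hy
    have : y * M 4 2 = q * M 3 2 - S (M 2 3) + x' * S (M 2 0) := by linear_combination -f22
    rw [this]
    exact dvd_add (dvd_sub (Dvd.intro _ rfl) ((dvd_sigma_iff p _).mpr hd23))
      (((dvd_sigma_iff p _).mpr hd20).mul_left x')
  have hd51 : q ∣ M 5 1 := e150 ▸ (dvd_sigma_iff p _).mpr hd40
  have hd53 : q ∣ M 5 3 := e152 ▸ (dvd_sigma_iff p _).mpr hd42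
  -- (iii)
  have hiii : q ∣ (x' * S (M 0 0) - x * M 2 2) := by
    have : x' * S (M 0 0) - x * M 2 2 = S (M 0 3) + z * M 4 2 - q * M 1 2 := by
      linear_combination f02
    rw [this]
    exact dvd_sub (dvd_add ((dvd_sigma_iff p _).mpr hd03) (hd42.mul_left z))
      (Dvd.intro _ rfl)
  -- units via the quotient modulo p
  set I : Ideal (Wt p) := Ideal.span {q} with hIdef
  set π : Wt p →+* Wt p ⧸ I := Ideal.Quotient.mk I with hπdef
  have hzero : ∀ {u : Wt p}, q ∣ u → π u = 0 := by
    intro u hu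
    rw [hπdef, Ideal.Quotient.eq_zero_iff_mem, hIdef, Ideal.mem_span_singleton]
    exact hu
  have hdetN : (M.map π).det =
      π (M 0 0) * π (M 1 1) * π (M 2 2) * π (M 3 3) * π (M 4 4) * π (M 5 5) := by
    have h := det_pattern (M.map π)
      (by simpa using hzero hd01) (by simpa using hzero hd03) (by simpa using hzero hd05)
      (by simpa using hzero hd20) (by simpa using hzero hd21) (by simpa using hzero hd23)
      (by simpa using hzero hd25) (by simpa using hzero hd31) (by simpa using hzero hd40)
      (by simpa using hzero hd41) (by simpa using hzero hd42) (by simpa using hzero hd43)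
      (by simpa using hzero hd45) (by simpa using hzero hd50) (by simpa using hzero hd51)
      (by simpa using hzero hd53)
    simpa using h
  have hu : IsUnit ((M.map π).det) := by
    have h := hM.map π
    rwa [RingHom.map_det, RingHom.mapMatrix_apply] at h
  rw [hdetN] at hu
  simp only [IsUnit.mul_iff] at hu
  obtain ⟨⟨⟨⟨⟨hu00, hu11⟩, hu22⟩, hu33⟩, hu44⟩, hu55⟩ := hu
  have hM00 : IsUnit (M 0 0) := wt_unit_of_quot p hu00
  have hM22 : IsUnit (M 2 2) := wt_unit_of_quot p hu22
  have hM33 : IsUnit (M 3 3) := wt_unit_of_quot p hu33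
  have hM44 : IsUnit (M 4 4) := wt_unit_of_quot p hu44
  -- x' is a unit
  have hx' : IsUnit x' := by
    apply wt_unit_of_quot p (u := x')
    have hmod : π x' * π (S (M 0 0)) = π x * π (M 2 2) := by
      rw [← map_mul, ← map_mul]
      have : x' * S (M 0 0) - x * M 2 2 ∈ I := by
        rw [hIdef, Ideal.mem_span_singleton]; exact hiii
      exact (Ideal.Quotient.mk_eq_mk_iff_sub_mem _ _).mpr this
    have : IsUnit (π x' * π (S (M 0 0))) := by
      rw [hmod]; exact (hx.map π).mul (hM22.map π)
    exact isUnit_of_mul_isUnit_left this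
  refine ⟨⟨hd20, hd40, hd50, hd42⟩, ⟨hM00, hM22, hM44, ?_⟩, hiii, hx'⟩
  rw [e132]
  exact hM33
end
end

section
/- For every w ∈ W there exists Q ∈ W such that σ²(Q) − Q = w and such that Q, 1 − Q and Q − σ(Q) all lie in W^×. -/
noncomputable section

open Pointwise

/-!
Modulo `p` the equation `σ²(Q) - Q = w` reads `q ^ p ^ 2 - q = w₀` in `k`, and this has a root
`q ∉ 𝔽_p` (shift any root by an element of `𝔽_{p²} ∖ 𝔽_p`). Since `W` is `p`-adically complete and the additive map `σ² - 1` is surjective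
modulo `p`, successive approximation lifts `q` to a solution `Q`. The residues of `Q`, `1 - Q`
and `Q - σ(Q)` are `q`, `1 - q` and `q - q ^ p`, all nonzero because `q ^ p ≠ q`.
-/

open Polynomial

section AlgClosed

variable {K : Type*} [Field K] [IsAlgClosed K]

theorem IsAlgClosed.exists_pow_sub_self_eq {n : ℕ} (hn : 2 ≤ n) (a : K) :
    ∃ x : K, x ^ n - x = a := by
  have hdeg : (X ^ n - X - C a : K[X]).degree = n := by
    rw [sub_sub, degree_sub_eq_left_of_degree_lt] <;> rw [degree_X_pow]
    rw [degree_X_add_C]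
    exact_mod_cast hn
  obtain ⟨x, hx⟩ := IsAlgClosed.exists_root _
    (by rw [hdeg]; exact_mod_cast (by omega : n ≠ 0))
  exact ⟨x, by simpa [sub_eq_zero] using hx⟩

variable (p : ℕ) [Fact p.Prime] [CharP K p]

theorem IsAlgClosed.exists_pow_sq_eq_self_and_pow_ne :
    ∃ t : K, t ^ p ^ 2 = t ∧ t ^ p ≠ t := by
  have hp := Fact.out (p := p.Prime)
  obtain ⟨s, hs⟩ := IsAlgClosed.exists_pow_nat_eq (-1 : K) (Nat.sub_pos_of_lt hp.one_lt)
  obtain ⟨t, ht⟩ := IsAlgClosed.exists_pow_sub_self_eq hp.two_le s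
  have hsp : s ^ p = -s := by
    rw [← Nat.sub_add_cancel hp.one_lt.le, pow_succ, hs, neg_one_mul]
  refine ⟨t, ?_, fun h => ?_⟩
  · calc t ^ p ^ 2 = (t + s) ^ p := by rw [pow_two, pow_mul, ← ht, add_sub_cancel]
      _ = t := by rw [add_pow_char, hsp]; linear_combination ht
  · rw [h, sub_self] at ht
    rw [← ht, zero_pow (by have := hp.one_lt; omega)] at hs
    simp at hs

theorem IsAlgClosed.exists_pow_sq_sub_self_eq_and_pow_ne (a : K) :
    ∃ q : K, q ^ p ^ 2 - q = a ∧ q ^ p ≠ q := by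
  have hp := Fact.out (p := p.Prime)
  obtain ⟨q, hq⟩ := IsAlgClosed.exists_pow_sub_self_eq
    (by nlinarith [hp.two_le] : 2 ≤ p ^ 2) a
  by_cases hqp : q ^ p = q
  · obtain ⟨t, ht2, htp⟩ := IsAlgClosed.exists_pow_sq_eq_self_and_pow_ne (K := K) p
    refine ⟨q + t, ?_, ?_⟩
    · rw [add_pow_char_pow, ht2]
      linear_combination hq
    · rw [add_pow_char, hqp]
      exact fun h => htp (add_left_cancel h)
  · exact ⟨q, hq, hqp⟩

end AlgClosed

theorem smodEq_span_singleton_pow_iff {A : Type*} [CommRing A] (a : A) (n : ℕ) (x y : A) :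
    x ≡ y [SMOD (Ideal.span {a} ^ n • ⊤ : Submodule A A)] ↔ a ^ n ∣ x - y := by
  rw [SModEq.sub_mem, smul_eq_mul, Ideal.mul_top, Ideal.span_singleton_pow,
    Ideal.mem_span_singleton]

theorem AddMonoidHom.surjective_of_exists_dvd_sub {A : Type*} [CommRing A] {a : A}
    [IsAdicComplete (Ideal.span {a}) A] {f : A →+ A} (hf : ∀ x, f (a * x) = a * f x)
    (h : ∀ y, ∃ x, a ∣ y - f x) : Function.Surjective f := by
  choose g r hr using h
  have hf_pow : ∀ n x, f (a ^ n * x) = a ^ n * f x := by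
    intro n
    induction n with
    | zero => simp
    | succ n ih => intro x; rw [pow_succ, mul_assoc, ih, hf, mul_assoc]
  intro y
  let z : ℕ → A := fun n => r^[n] y
  let X : ℕ → A := fun n => ∑ i ∈ Finset.range n, a ^ i * g (z i)
  have hX : ∀ n, y - f (X n) = a ^ n * z n := by
    intro n
    induction n with
    | zero => simp [X, z]
    | succ n ih =>
      have hz : z (n + 1) = r (z n) := Function.iterate_succ_apply' r n y
      rw [show X (n + 1) = X n + a ^ n * g (z n) from Finset.sum_range_succ _ _, map_add, hf_pow,
        hz, pow_succ, mul_assoc, ← hr]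
      linear_combination ih
  have hcauchy : ∀ {m n}, m ≤ n →
      X m ≡ X n [SMOD (Ideal.span {a} ^ m • ⊤ : Submodule A A)] := by
    intro m n hmn
    rw [smodEq_span_singleton_pow_iff, ← dvd_neg, neg_sub]
    induction n, hmn using Nat.le_induction with
    | base => simp
    | succ n hmn ih =>
      rw [show X (n + 1) = X n + a ^ n * g (z n) from Finset.sum_range_succ _ _,
        add_sub_right_comm]
      exact dvd_add ih (dvd_mul_of_dvd_left (pow_dvd_pow a hmn) _)
  obtain ⟨L, hL⟩ := IsPrecomplete.prec inferInstance hcauchy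
  refine ⟨L, (sub_eq_zero.mp
    (IsHausdorff.haus (I := Ideal.span {a}) inferInstance _ fun n => ?_)).symm⟩
  obtain ⟨t, ht⟩ := (smodEq_span_singleton_pow_iff a n _ _).mp (hL n)
  rw [smodEq_span_singleton_pow_iff, sub_zero,
    show y - f L = (y - f (X n)) + f (X n - L) by rw [map_sub]; ring, ht, hX, hf_pow, ← mul_add]
  exact dvd_mul_right _ _

namespace WittVector

variable {p : ℕ} [Fact p.Prime]

theorem sub_coeff_zero {R : Type*} [CommRing R] (x y : WittVector p R) :
    (x - y).coeff 0 = x.coeff 0 - y.coeff 0 :=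
  map_sub constantCoeff x y

variable {k : Type*} [Field k] [CharP k p]

theorem natCast_dvd_sub_iff_coeff_zero_eq [PerfectRing k p] (x y : WittVector p k) :
    (p : WittVector p k) ∣ x - y ↔ x.coeff 0 = y.coeff 0 := by
  rw [← Ideal.mem_span_singleton, mem_span_p_iff_coeff_zero_eq_zero, sub_coeff_zero, sub_eq_zero]

theorem coeff_zero_frobenius_frobenius_sub_self (x : WittVector p k) :
    (frobenius (frobenius x) - x).coeff 0 = x.coeff 0 ^ p ^ 2 - x.coeff 0 := by
  rw [sub_coeff_zero, coeff_frobenius_charP, coeff_frobenius_charP, ← pow_mul, ← pow_two]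

variable [IsAlgClosed k]

theorem exists_frobenius_frobenius_sub_self_eq_coeff_zero_eq (w : WittVector p k) (q : k)
    (hq : q ^ p ^ 2 - q = w.coeff 0) :
    ∃ Q : WittVector p k, frobenius (frobenius Q) - Q = w ∧ Q.coeff 0 = q := by
  let f : WittVector p k →+ WittVector p k :=
    (frobenius.comp frobenius).toAddMonoidHom - AddMonoidHom.id _
  have hf_apply : ∀ x, f x = frobenius (frobenius x) - x := fun _ => rfl
  have hf_mul : ∀ x, f (p * x) = p * f x := fun x => by
    rw [← nsmul_eq_mul, map_nsmul, nsmul_eq_mul]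
  have hf_dvd : ∀ y x, x.coeff 0 ^ p ^ 2 - x.coeff 0 = y.coeff 0 →
      (p : WittVector p k) ∣ y - f x := fun y x hx => by
    rw [natCast_dvd_sub_iff_coeff_zero_eq, hf_apply, coeff_zero_frobenius_frobenius_sub_self, hx]
  have hf_surj : Function.Surjective f := by
    refine AddMonoidHom.surjective_of_exists_dvd_sub hf_mul fun y => ?_
    obtain ⟨c, hc⟩ := IsAlgClosed.exists_pow_sub_self_eq
      (by nlinarith [(Fact.out : p.Prime).two_le] : 2 ≤ p ^ 2) (y.coeff 0)
    obtain ⟨x, rfl⟩ := constantCoeff_surjective p c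
    exact ⟨x, hf_dvd y x hc⟩
  obtain ⟨Q₀, rfl⟩ := constantCoeff_surjective p q
  obtain ⟨s, hs⟩ := hf_dvd w Q₀ hq
  obtain ⟨R, rfl⟩ := hf_surj s
  refine ⟨Q₀ + p * R, ?_, ?_⟩
  · rw [← hf_apply, map_add, hf_mul, ← hs, add_sub_cancel]
  · rw [add_coeff_zero, mul_comm, mul_charP_coeff_zero, add_zero]
    rfl

end WittVector

theorem statement10_general (p : ℕ) [Fact p.Prime] (w : Wt p) :
    ∃ Q : Wt p, σW p (σW p Q) - Q = w ∧
      IsUnit Q ∧ IsUnit (1 - Q) ∧ IsUnit (Q - σW p Q) := by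
  obtain ⟨q, hq, hqp⟩ := IsAlgClosed.exists_pow_sq_sub_self_eq_and_pow_ne p (w.coeff 0)
  obtain ⟨Q, hQ, rfl⟩ := WittVector.exists_frobenius_frobenius_sub_self_eq_coeff_zero_eq w q hq
  have hσ : ∀ x, σW p x = WittVector.frobenius x := fun _ => rfl
  simp only [hσ]
  refine ⟨Q, hQ, ?_, ?_, ?_⟩ <;> apply WittVector.isUnit_of_coeff_zero_ne_zero
  · rintro h
    rw [h, zero_pow (Fact.out : p.Prime).ne_zero] at hqp
    exact hqp rfl
  · rw [WittVector.sub_coeff_zero, WittVector.one_coeff_zero, sub_ne_zero]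
    rintro h
    rw [← h, one_pow] at hqp
    exact hqp rfl
  · rw [WittVector.sub_coeff_zero, WittVector.coeff_frobenius_charP, sub_ne_zero]
    exact hqp.symm

/-- For every `w ∈ W` there exists `Q ∈ W` with `σ²(Q) − Q = w` such that
`Q`, `1 − Q` and `Q − σ(Q)` all lie in `W^×`. -/
theorem statement10 (p : ℕ) [Fact p.Prime] (hp : Odd p) (w : Wt p) :
    ∃ Q : Wt p, σW p (σW p Q) - Q = w ∧
      IsUnit Q ∧ IsUnit (1 - Q) ∧ IsUnit (Q - σW p Q) :=
  statement10_general p w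
end
end

section
/- Let x ∈ W^×, let β ∈ W^× satisfy σ²(β) − β = x, let ζ ∈ W be a primitive (p² − 1)-th root of unity (i.e. ζ^{p²−1} = 1 and ζ^m ≠ 1 for all 0 < m < p² − 1), and set u := σ(ζ) − ζ. Then there exists b ∈ W^× such that pβb² + ub − σ⁻¹(β) = 0. -/
noncomputable section

open Pointwise

/-! Modulo `p` the equation reads `u b ≡ σ⁻¹(β)`. The residue of `ζ` has order `p² - 1`, so it is
not fixed by the `p`-th power map and `u = σ(ζ) - ζ` is a unit; hence `σ⁻¹(β) / u` is a simple
root modulo `p`, and it lifts to a root in `W` by Hensel's lemma, `W` being `p`-adically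
complete. -/

open Polynomial

theorem isUnit_of_sub_mem_of_le_jacobson_bot {R : Type*} [CommRing R] {I : Ideal R}
    (hI : I ≤ Ideal.jacobson ⊥) {a a₀ : R} (ha₀ : IsUnit a₀) (h : a - a₀ ∈ I) : IsUnit a := by
  have := isLocalHom_of_le_jacobson_bot I hI
  apply isUnit_of_map_unit (Ideal.Quotient.mk I)
  rw [Ideal.Quotient.eq.mpr h]
  exact ha₀.map _

/- Hensel's lemma is applied to the monic equation satisfied by `a = b⁻¹`, namely
`a² - (u/c) a - πβ/c = 0`, at the simple root `u/c` modulo `I`. -/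
theorem HenselianRing.exists_isUnit_root_of_mem {R : Type*} [CommRing R] {I : Ideal R}
    [HenselianRing R I] {π β u c : R} (hπ : π ∈ I) (hu : IsUnit u) (hc : IsUnit c) :
    ∃ b : R, IsUnit b ∧ π * β * b ^ 2 + u * b - c = 0 := by
  obtain ⟨c, rfl⟩ := hc
  set a₀ := u * ↑c⁻¹
  set f : R[X] := X ^ 2 - (C a₀ * X + C (π * β * ↑c⁻¹))
  have hf : f.Monic := monic_X_pow_sub (degree_linear_le.trans_lt (by norm_num))
  have hfa₀ : f.eval a₀ ∈ I := by
    have : f.eval a₀ = -(π * (β * ↑c⁻¹)) := by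
      simp only [f, eval_sub, eval_add, eval_pow, eval_mul, eval_C, eval_X]
      ring
    rw [this]
    exact I.neg_mem (I.mul_mem_right _ hπ)
  have ha₀ : IsUnit a₀ := hu.mul c⁻¹.isUnit
  have hf'a₀ : f.derivative.eval a₀ = a₀ := by
    simp only [f, derivative_sub, derivative_add, derivative_X_pow, derivative_C_mul_X,
      derivative_C, eval_sub, eval_zero, eval_add, eval_mul, eval_C, eval_pow, eval_X]
    ring
  obtain ⟨a, hroot, haa₀⟩ :=
    HenselianRing.is_henselian f hf a₀ hfa₀ (by rw [hf'a₀]; exact ha₀.map _)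
  obtain ⟨a, rfl⟩ := isUnit_of_sub_mem_of_le_jacobson_bot HenselianRing.jac ha₀ haa₀
  refine ⟨↑a⁻¹, a⁻¹.isUnit, ?_⟩
  have hroot : (a : R) ^ 2 - (a₀ * a + π * β * ↑c⁻¹) = 0 := by
    simpa only [f, IsRoot, eval_sub, eval_add, eval_pow, eval_mul, eval_C, eval_X] using hroot
  linear_combination (-(c : R) * ↑a⁻¹ ^ 2) * hroot
    + (-(π * β * ↑a⁻¹ ^ 2) - u * ↑a⁻¹ ^ 2 * a) * c.mul_inv
    + (c * (a * ↑a⁻¹ + 1) - u * ↑a⁻¹) * a.mul_inv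

namespace WittVector

variable {p : ℕ} [Fact p.Prime]

theorem eq_one_of_pow_eq_one_of_constantCoeff_eq_one {k : Type*} [CommRing k] [IsDomain k]
    [CharP k p] {w : WittVector p k} {n : ℕ} (hn : (n : k) ≠ 0) (hw : w ^ n = 1)
    (hw1 : constantCoeff w = 1) : w = 1 := by
  have hsum : constantCoeff (∑ i ∈ Finset.range n, w ^ i) = n := by
    simp_rw [map_sum, map_pow, hw1, one_pow, Finset.sum_const, Finset.card_range, nsmul_one]
  have hgeom := geom_sum_mul w n
  rw [hw, sub_self, mul_eq_zero] at hgeom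
  refine sub_eq_zero.mp (hgeom.resolve_left fun h0 => hn ?_)
  rw [← hsum, h0, map_zero]

variable {k : Type*} [Field k] [CharP k p]

/- The reduction of `ζ` is not in `𝔽_p`: otherwise `ζ ^ (p - 1)` would be a `(p + 1)`-th root of
unity reducing to `1`, and since `p ∤ p + 1` it would equal `1`. -/
theorem _root_.IsPrimitiveRoot.constantCoeff_pow_ne_self {ζ : WittVector p k}
    (hζ : IsPrimitiveRoot ζ (p ^ 2 - 1)) : constantCoeff ζ ^ p ≠ constantCoeff ζ := by
  have hp := (Fact.out : p.Prime).two_le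
  have hsq : p ^ 2 - 1 = (p - 1) * (p + 1) := by
    rw [mul_comm, ← Nat.sq_sub_sq, one_pow]
  intro hfix
  have hp2 : p < p ^ 2 := by nlinarith
  have hz : constantCoeff ζ ≠ 0 := ((hζ.isUnit (by omega)).map constantCoeff).ne_zero
  have hz1 : constantCoeff (ζ ^ (p - 1)) = 1 := by
    rw [map_pow]
    refine mul_right_cancel₀ hz ?_
    rw [← pow_succ, Nat.sub_add_cancel (by omega), hfix, one_mul]
  have hw : ζ ^ (p - 1) = 1 := by
    refine eq_one_of_pow_eq_one_of_constantCoeff_eq_one (n := p + 1) ?_ ?_ hz1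
    · simp [CharP.cast_eq_zero]
    · rw [← pow_mul, ← hsq, hζ.pow_eq_one]
  have := Nat.le_of_dvd (by omega) (hζ.pow_eq_one_iff_dvd _ |>.mp hw)
  omega

theorem _root_.IsPrimitiveRoot.isUnit_frobenius_sub_self {ζ : WittVector p k}
    (hζ : IsPrimitiveRoot ζ (p ^ 2 - 1)) : IsUnit (frobenius ζ - ζ) := by
  apply isUnit_of_coeff_zero_ne_zero
  rw [← constantCoeff_apply, map_sub, constantCoeff_apply, coeff_frobenius_charP,
    ← constantCoeff_apply]
  exact sub_ne_zero.mpr hζ.constantCoeff_pow_ne_self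

end WittVector

theorem statement11_general (p : ℕ) [Fact p.Prime] (β ζ : Wt p)
    (hβu : IsUnit β)
    (hζ1 : ζ ^ (p ^ 2 - 1) = 1) (hζ2 : ∀ m : ℕ, 0 < m → m < p ^ 2 - 1 → ζ ^ m ≠ 1) :
    ∃ b : Wt p, IsUnit b ∧
      (p : Wt p) * β * b ^ 2 + (σW p ζ - ζ) * b - (σW p).symm β = 0 := by
  have hp := (Fact.out : p.Prime).two_le
  have hζ : IsPrimitiveRoot ζ (p ^ 2 - 1) :=
    .mk_of_lt ζ (Nat.sub_pos_of_lt (by nlinarith)) hζ1 hζ2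
  have hu : IsUnit (σW p ζ - ζ) := by
    rw [σW, WittVector.frobeniusEquiv_apply]
    exact hζ.isUnit_frobenius_sub_self
  exact HenselianRing.exists_isUnit_root_of_mem (Ideal.mem_span_singleton_self (p : Wt p)) hu
    (hβu.map (σW p).symm)

/-- with `x ∈ W^×`, `β ∈ W^×` with `σ²(β) − β = x`, `ζ` a primitive
`(p²−1)`-th root of unity and `u = σ(ζ) − ζ`, there is `b ∈ W^×` with
`pβb² + ub − σ⁻¹(β) = 0`. -/
theorem statement11 (p : ℕ) [Fact p.Prime] (hp : Odd p) (x β ζ : Wt p)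
    (hx : IsUnit x) (hβu : IsUnit β) (hβ : σW p (σW p β) - β = x)
    (hζ1 : ζ ^ (p ^ 2 - 1) = 1) (hζ2 : ∀ m : ℕ, 0 < m → m < p ^ 2 - 1 → ζ ^ m ≠ 1) :
    ∃ b : Wt p, IsUnit b ∧
      (p : Wt p) * β * b ^ 2 + (σW p ζ - ζ) * b - (σW p).symm β = 0 :=
  statement11_general p β ζ hβu hζ1 hζ2
end
end

section
/- Let x ∈ W^×, let β ∈ W^× satisfy σ²(β) − β = x, let ζ ∈ W be a primitive (p² − 1)-th root of unity, set u := σ(ζ) − ζ, and let b ∈ W^× satisfy pβb² + ub − σ⁻¹(β) = 0. Write {e₁, f₁, e₂, f₂} for the standard basis of D(x) and {e₁', f₁', e₂', f₂'} for the standard basis of D(0). Then the W-linear map φ : D(x) → D(0) determined by φ(e₁) = pe₁', φ(f₁) = pf₁', φ(e₂) = ζe₁' + βf₁' + e₂', φ(f₂) = pσ(β)e₁' + σ(ζ)f₁' + f₂' is an isogeny of Dieudonné modules; the submodules Fil := W(f₁ + pbe₁) + W(f₂ + pbe₂ − σ⁻¹(x)e₁) ⊆ D(x) and Fil' := W(f₁'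 + pbe₁') + W(f₂' + pbe₂') ⊆ D(0) are admissible filtrations; and φ(Fil) ⊆ Fil'. -/
noncomputable section

open Pointwise

/-- Frobenius of the Dieudonné module `D(x)`, free of rank 4 over `W` with standard basis
`e₁, f₁, e₂, f₂` (coordinates `0,…,3`): `F e₁ = f₁`, `F f₁ = p e₁`, `F e₂ = f₂`,
`F f₂ = p e₂ + x f₁`, extended `σ`-semilinearly. -/
def FX (p : ℕ) [Fact p.Prime] (x : Wt p) : (Fin 4 → Wt p) → (Fin 4 → Wt p) := fun v =>
  ![(p : Wt p) * σW p (v 1),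
    σW p (v 0) + x * σW p (v 3),
    (p : Wt p) * σW p (v 3),
    σW p (v 2)]

/-- Verschiebung of `D(x)`: `V e₁ = f₁`, `V f₁ = p e₁`, `V e₂ = f₂ − σ⁻¹(x) e₁`,
`V f₂ = p e₂`, extended `σ⁻¹`-semilinearly. -/
def VX (p : ℕ) [Fact p.Prime] (x : Wt p) : (Fin 4 → Wt p) → (Fin 4 → Wt p) := fun v =>
  ![(p : Wt p) * (σW p).symm (v 1) - (σW p).symm x * (σW p).symm (v 2),
    (σW p).symm (v 0),
    (p : Wt p) * (σW p).symm (v 3),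
    (σW p).symm (v 2)]

lemma p_dvd_of_coeff_zero (p : ℕ) [Fact p.Prime] (x : Wt p) (h : x.coeff 0 = 0) :
    (p : Wt p) ∣ x := by
  have h1 : x = WittVector.verschiebung (x.shift 1) := by
    have := WittVector.eq_iterate_verschiebung (x := x) (n := 1)
      (by intro i hi; interval_cases i; exact h)
    simpa using this
  obtain ⟨z, hz⟩ := (WittVector.frobenius_bijective p (Kbar p)).surjective (x.shift 1)
  exact ⟨z, by rw [h1, ← hz, WittVector.verschiebung_frobenius]; ring⟩

lemma binom_aux {R : Type*} [CommRing R] (ζ w : R) :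
    ∀ n : ℕ, w ^ 2 ∣ (ζ + w) ^ (n + 1) - ζ ^ (n + 1) - (n + 1 : ℕ) * ζ ^ n * w := by
  intro n
  induction n with
  | zero => exact ⟨0, by push_cast; ring⟩
  | succ n ih =>
    obtain ⟨s, hs⟩ := ih
    refine ⟨(ζ + w) * s + (n + 1 : ℕ) * ζ ^ n, ?_⟩
    push_cast
    push_cast at hs
    linear_combination (ζ + w) * hs

/-- A `(p² − 1)`-st root of unity in `W` is fixed by `σ²`. -/
lemma sigma_sq_fixed (p : ℕ) [Fact p.Prime] (ζ : Wt p) (hζ1 : ζ ^ (p ^ 2 - 1) = 1) :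
    σW p (σW p ζ) = ζ := by
  have h2 : 2 ≤ p := (Fact.out : p.Prime).two_le
  have hsq : p ^ 2 = p * p := sq p
  have hn4 : 4 ≤ p ^ 2 := by nlinarith
  have hpne : (p : Wt p) ≠ 0 := WittVector.p_nonzero p _
  set c : Kbar p := ζ.coeff 0 with hc
  have hcn : c ^ (p ^ 2 - 1) = 1 := by
    have := congrArg (WittVector.constantCoeff : Wt p →+* Kbar p) hζ1
    simpa [map_pow] using this
  have hcne : c ≠ 0 := by
    intro h0
    rw [h0, zero_pow (by omega)] at hcn
    exact zero_ne_one hcn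
  have hσcoeff : (σW p (σW p ζ)).coeff 0 = c := by
    show ((WittVector.frobenius (WittVector.frobenius ζ)) : Wt p).coeff 0 = c
    rw [WittVector.coeff_frobenius_charP, WittVector.coeff_frobenius_charP, ← pow_mul, ← hc]
    have hp2 : p * p = (p ^ 2 - 1) + 1 := by omega
    rw [hp2, pow_succ, hcn, one_mul]
  have h0 : WittVector.constantCoeff ((σW p (σW p ζ)) - ζ) = 0 := by
    rw [map_sub]
    show (σW p (σW p ζ)).coeff 0 - ζ.coeff 0 = 0
    rw [hσcoeff, ← hc, sub_self]
  obtain ⟨t, ht⟩ := p_dvd_of_coeff_zero p (σW p (σW p ζ) - ζ) h0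
  by_cases htz : t = 0
  · rw [htz, mul_zero, sub_eq_zero] at ht; exact ht
  have hw : σW p (σW p ζ) = ζ + (p : Wt p) * t := by linear_combination ht
  have h1 : (ζ + (p : Wt p) * t) ^ (p ^ 2 - 1) = 1 := by
    rw [← hw, ← map_pow, ← map_pow, hζ1, map_one, map_one]
  obtain ⟨s, hs⟩ := binom_aux ζ ((p : Wt p) * t) (p ^ 2 - 2)
  have hnn : (p ^ 2 - 2) + 1 = p ^ 2 - 1 := by omega
  rw [hnn] at hs
  rw [h1, hζ1] at hs
  have hzero : ((p : Wt p) * t) * (((p ^ 2 - 1 : ℕ) : Wt p) * ζ ^ (p ^ 2 - 2)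
      + ((p : Wt p) * t) * s) = 0 := by linear_combination -hs
  have hptne : (p : Wt p) * t ≠ 0 := mul_ne_zero hpne htz
  have hkey := (mul_eq_zero.1 hzero).resolve_left hptne
  have := congrArg (WittVector.constantCoeff : Wt p →+* Kbar p) hkey
  simp only [map_add, map_mul, map_natCast, map_pow, map_zero] at this
  have hcc : WittVector.constantCoeff ζ = c := rfl
  rw [hcc, CharP.cast_eq_zero (Kbar p) p] at this
  simp only [zero_mul, add_zero] at this
  have hnk : ((p ^ 2 - 1 : ℕ) : Kbar p) ≠ 0 := by
    have he : ((p ^ 2 - 1 : ℕ) : Kbar p) = (p : Kbar p) ^ 2 - 1 := by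
      push_cast [Nat.cast_sub (by omega : 1 ≤ p ^ 2)]; ring
    rw [he, CharP.cast_eq_zero (Kbar p) p]
    simp
  exact absurd this (mul_ne_zero hnk (pow_ne_zero _ hcne))

/-- The filtration spanned by `f₁ + p b e₁` and `f₂ + p b e₂ − σ⁻¹(x) e₁` is admissible
in `D(x)`, for any `x` and `b`. -/
lemma admissible_general (p : ℕ) [Fact p.Prime] (x b : Wt p) :
    AdmissibleFil p (FX p x) 2
      (Submodule.span (Wt p)
        {![(p : Wt p) * b, 1, 0, 0], ![-(σW p).symm x, 0, (p : Wt p) * b, 1]}) := by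
  set u1 : Fin 4 → Wt p := ![(p : Wt p) * b, 1, 0, 0] with hu1
  set u2 : Fin 4 → Wt p := ![-(σW p).symm x, 0, (p : Wt p) * b, 1] with hu2
  refine ⟨?_, ?_, ?_⟩
  · -- rank
    have hli : LinearIndependent (Wt p) ![u1, u2] := by
      rw [LinearIndependent.pair_iff]
      intro s t hst
      have h1 := congrFun hst 1
      have h3 := congrFun hst 3
      simp [hu1, hu2] at h1 h3
      exact ⟨h1, h3⟩
    have hrange : Set.range ![u1, u2] = {u1, u2} := by
      simp [Matrix.range_cons, Matrix.range_empty, Set.pair_comm]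
    rw [← hrange, rank_span hli, Cardinal.mk_range_eq _ hli.injective]
    simp
  · -- torsion-free quotient
    refine ⟨fun {c₀ m} h => ?_⟩
    obtain ⟨v, rfl⟩ := Submodule.Quotient.mk_surjective _ m
    by_cases hc : c₀ = 0
    · exact Or.inl hc
    right
    rw [← Submodule.Quotient.mk_smul, Submodule.Quotient.mk_eq_zero] at h
    rw [Submodule.Quotient.mk_eq_zero]
    obtain ⟨a, e, hae⟩ := Submodule.mem_span_pair.1 h
    have h0 := congrFun hae 0
    have h1 := congrFun hae 1
    have h2 := congrFun hae 2
    have h3 := congrFun hae 3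
    simp [hu1, hu2] at h0 h1 h2 h3
    refine Submodule.mem_span_pair.2 ⟨v 1, v 3, ?_⟩
    funext i; fin_cases i
    · show v 1 * ((p : Wt p) * b) + v 3 * (-(σW p).symm x) = v 0
      apply mul_left_cancel₀ hc
      linear_combination h0 - ((p : Wt p) * b) * h1 + (σW p).symm x * h3
    · show v 1 * 1 + v 3 * 0 = v 1
      ring
    · show v 1 * 0 + v 3 * ((p : Wt p) * b) = v 2
      apply mul_left_cancel₀ hc
      linear_combination h2 - ((p : Wt p) * b) * h3
    · show v 1 * 0 + v 3 * 1 = v 3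
      ring
  · -- kernel condition
    intro d
    have key : (∃ d', FX p x d = (p : Wt p) • d') ↔
        ((p : Wt p) ∣ d 0 + (σW p).symm x * d 3 ∧ (p : Wt p) ∣ d 2) := by
      constructor
      · rintro ⟨d', hd⟩
        have h1 : σW p (d 0) + x * σW p (d 3) = (p : Wt p) * d' 1 := by
          have := congrFun hd 1; simpa [FX] using this
        have h3 : σW p (d 2) = (p : Wt p) * d' 3 := by
          have := congrFun hd 3; simpa [FX] using this
        have h1' := congrArg (σW p).symm h1
        have h3' := congrArg (σW p).symm h3
        simp only [map_add, map_mul, map_natCast, RingEquiv.symm_apply_apply] at h1' h3'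
        exact ⟨⟨(σW p).symm (d' 1), by linear_combination h1'⟩,
          ⟨(σW p).symm (d' 3), by linear_combination h3'⟩⟩
      · rintro ⟨⟨y1, hy1⟩, ⟨y2, hy2⟩⟩
        refine ⟨![σW p (d 1), σW p y1, σW p (d 3), σW p y2], ?_⟩
        funext i; fin_cases i
        · show (p : Wt p) * σW p (d 1) = (p : Wt p) * σW p (d 1)
          rfl
        · show σW p (d 0) + x * σW p (d 3) = (p : Wt p) * σW p y1
          have := congrArg (σW p) hy1
          simp only [map_add, map_mul, map_natCast, RingEquiv.apply_symm_apply] at this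
          linear_combination this
        · show (p : Wt p) * σW p (d 3) = (p : Wt p) * σW p (d 3)
          rfl
        · show σW p (d 2) = (p : Wt p) * σW p y2
          have := congrArg (σW p) hy2
          simp only [map_mul, map_natCast] at this
          linear_combination this
    rw [key]
    constructor
    · rintro ⟨m, hm, d', rfl⟩
      obtain ⟨a, c, hac⟩ := Submodule.mem_span_pair.1 hm
      have h0 := congrFun hac 0
      have h2 := congrFun hac 2
      have h3 := congrFun hac 3
      simp [hu1, hu2] at h0 h2 h3
      constructor
      · exact ⟨a * b + d' 0 + (σW p).symm x * d' 3, by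
          show m 0 + (p : Wt p) * d' 0 + (σW p).symm x * (m 3 + (p : Wt p) * d' 3) = _
          linear_combination -h0 - (σW p).symm x * h3⟩
      · exact ⟨c * b + d' 2, by
          show m 2 + (p : Wt p) * d' 2 = _
          linear_combination -h2⟩
    · rintro ⟨⟨y1, hy1⟩, ⟨y2, hy2⟩⟩
      refine ⟨d 1 • u1 + d 3 • u2, Submodule.mem_span_pair.2 ⟨d 1, d 3, rfl⟩,
        ![y1 - d 1 * b, 0, y2 - d 3 * b, 0], ?_⟩
      funext i; fin_cases i
      · show d 0 = (d 1 * ((p : Wt p) * b) + d 3 * (-(σW p).symm x)) + (p : Wt p) * (y1 - d 1 * b)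
        linear_combination hy1
      · show d 1 = (d 1 * 1 + d 3 * 0) + (p : Wt p) * 0
        ring
      · show d 2 = (d 1 * 0 + d 3 * ((p : Wt p) * b)) + (p : Wt p) * (y2 - d 3 * b)
        linear_combination hy2
      · show d 3 = (d 1 * 0 + d 3 * 1) + (p : Wt p) * 0
        ring

/-- the explicit map `φ : D(x) → D(0)` is an isogeny of Dieudonné modules,
`Fil ⊆ D(x)` and `Fil' ⊆ D(0)` are admissible filtrations, and `φ(Fil) ⊆ Fil'`. -/
theorem statement12 (p : ℕ) [Fact p.Prime] (hp : Odd p) (x β ζ b : Wt p)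
    (hx : IsUnit x) (hβu : IsUnit β) (hβ : σW p (σW p β) - β = x)
    (hζ1 : ζ ^ (p ^ 2 - 1) = 1) (hζ2 : ∀ m : ℕ, 0 < m → m < p ^ 2 - 1 → ζ ^ m ≠ 1)
    (hbu : IsUnit b)
    (hb : (p : Wt p) * β * b ^ 2 + (σW p ζ - ζ) * b - (σW p).symm β = 0)
    (φ : (Fin 4 → Wt p) →ₗ[Wt p] (Fin 4 → Wt p))
    (hφ0 : φ (Pi.single 0 1) = ![(p : Wt p), 0, 0, 0])
    (hφ1 : φ (Pi.single 1 1) = ![0, (p : Wt p), 0, 0])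
    (hφ2 : φ (Pi.single 2 1) = ![ζ, β, 1, 0])
    (hφ3 : φ (Pi.single 3 1) = ![(p : Wt p) * σW p β, σW p ζ, 0, 1]) :
    (Function.Injective φ ∧
      (∀ v, φ (FX p x v) = FX p 0 (φ v)) ∧
      (∀ v, φ (VX p x v) = VX p 0 (φ v)) ∧
      (∃ n : ℕ, ∀ d : Fin 4 → Wt p, (p : Wt p) ^ n • d ∈ LinearMap.range φ)) ∧
    AdmissibleFil p (FX p x) 2
      (Submodule.span (Wt p)
        {![(p : Wt p) * b, 1, 0, 0], ![-(σW p).symm x, 0, (p : Wt p) * b, 1]}) ∧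
    AdmissibleFil p (FX p 0) 2
      (Submodule.span (Wt p) {![(p : Wt p) * b, 1, 0, 0], ![0, 0, (p : Wt p) * b, 1]}) ∧
    Submodule.map φ
        (Submodule.span (Wt p)
          {![(p : Wt p) * b, 1, 0, 0], ![-(σW p).symm x, 0, (p : Wt p) * b, 1]})
      ≤ Submodule.span (Wt p) {![(p : Wt p) * b, 1, 0, 0], ![0, 0, (p : Wt p) * b, 1]} := by
  have hpne : (p : Wt p) ≠ 0 := WittVector.p_nonzero p _
  have hσζ : σW p (σW p ζ) = ζ := sigma_sq_fixed p ζ hζ1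
  have hσζ' : (σW p).symm ζ = σW p ζ := by
    have := congrArg (σW p).symm hσζ
    rw [RingEquiv.symm_apply_apply] at this
    exact this.symm
  have hβ' : σW p β - (σW p).symm β = (σW p).symm x := by
    have := congrArg (σW p).symm hβ
    simpa [map_sub] using this
  have hφv : ∀ v, φ v = ![(p : Wt p) * v 0 + ζ * v 2 + (p : Wt p) * σW p β * v 3,
      (p : Wt p) * v 1 + β * v 2 + σW p ζ * v 3, v 2, v 3] := by
    intro v
    have hv : v = v 0 • (Pi.single 0 1 : Fin 4 → Wt p) + v 1 • (Pi.single 1 1 : Fin 4 → Wt p)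
        + v 2 • (Pi.single 2 1 : Fin 4 → Wt p) + v 3 • (Pi.single 3 1 : Fin 4 → Wt p) := by
      funext i; fin_cases i <;> simp [Pi.single_apply]
    rw [hv, map_add, map_add, map_add, map_smul, map_smul, map_smul, map_smul,
      hφ0, hφ1, hφ2, hφ3]
    funext i; fin_cases i <;> simp <;> ring
  have h30 : (![0, 0, (p : Wt p) * b, 1] : Fin 4 → Wt p)
      = ![-(σW p).symm 0, 0, (p : Wt p) * b, 1] := by simp
  refine ⟨⟨?_, ?_, ?_, ?_⟩, admissible_general p x b, ?_, ?_⟩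
  · -- injectivity
    intro v w h
    rw [hφv v, hφv w] at h
    have h0 := congrFun h 0
    have h1 := congrFun h 1
    have h2 := congrFun h 2
    have h3 := congrFun h 3
    simp only [Matrix.cons_val_zero, Matrix.cons_val_one, Matrix.head_cons,
      Matrix.cons_val_two, Matrix.tail_cons, Matrix.cons_val_three] at h0 h1 h2 h3
    funext i; fin_cases i
    · show v 0 = w 0
      apply mul_left_cancel₀ hpne
      linear_combination h0 - ζ * h2 - ((p : Wt p) * σW p β) * h3
    · show v 1 = w 1
      apply mul_left_cancel₀ hpne
      linear_combination h1 - β * h2 - (σW p ζ) * h3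
    · exact h2
    · exact h3
  · -- F-equivariance
    intro v
    rw [hφv (FX p x v), hφv v]
    funext i; fin_cases i <;>
      simp [FX, map_add, map_mul, map_natCast]
    · linear_combination (-(p : Wt p) * σW p (v 3)) * hσζ
    · linear_combination (-(p : Wt p) * σW p (v 3)) * hβ
  · -- V-equivariance
    intro v
    rw [hφv (VX p x v), hφv v]
    funext i; fin_cases i <;>
      simp [VX, map_add, map_mul, map_sub, map_natCast, RingEquiv.symm_apply_apply]
    · linear_combination ((p : Wt p) * (σW p).symm (v 2)) * hβ'
    · linear_combination (-(σW p).symm (v 2)) * hσζ'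
  · -- isogeny: p • d is in the range
    refine ⟨1, fun d => ?_⟩
    refine ⟨![d 0 - ζ * d 2 - (p : Wt p) * σW p β * d 3,
      d 1 - β * d 2 - σW p ζ * d 3, (p : Wt p) * d 2, (p : Wt p) * d 3], ?_⟩
    rw [hφv]
    funext i; fin_cases i
    · show (p : Wt p) * (d 0 - ζ * d 2 - (p : Wt p) * σW p β * d 3)
        + ζ * ((p : Wt p) * d 2) + (p : Wt p) * σW p β * ((p : Wt p) * d 3)
        = (p : Wt p) ^ 1 * d 0
      ring
    · show (p : Wt p) * (d 1 - β * d 2 - σW p ζ * d 3)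
        + β * ((p : Wt p) * d 2) + σW p ζ * ((p : Wt p) * d 3) = (p : Wt p) ^ 1 * d 1
      ring
    · show (p : Wt p) * d 2 = (p : Wt p) ^ 1 * d 2
      ring
    · show (p : Wt p) * d 3 = (p : Wt p) ^ 1 * d 3
      ring
  · -- second admissible filtration
    rw [h30]
    exact admissible_general p 0 b
  · -- φ(Fil) ⊆ Fil'
    rw [Submodule.map_span_le]
    intro m hm
    simp only [Set.mem_insert_iff, Set.mem_singleton_iff] at hm
    rcases hm with rfl | rfl
    · refine Submodule.mem_span_pair.2 ⟨(p : Wt p), 0, ?_⟩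
      rw [hφv]
      funext i; fin_cases i
      · show (p : Wt p) * ((p : Wt p) * b) + 0 * 0
          = (p : Wt p) * ((p : Wt p) * b) + ζ * 0 + (p : Wt p) * σW p β * 0
        ring
      · show (p : Wt p) * 1 + 0 * 0 = (p : Wt p) * 1 + β * 0 + σW p ζ * 0
        ring
      · show (p : Wt p) * 0 + 0 * ((p : Wt p) * b) = (0 : Wt p)
        ring
      · show (p : Wt p) * 0 + 0 * 1 = (0 : Wt p)
        ring
    · refine Submodule.mem_span_pair.2 ⟨(p : Wt p) * b * β + σW p ζ, 1, ?_⟩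
      rw [hφv]
      funext i; fin_cases i
      · show ((p : Wt p) * b * β + σW p ζ) * ((p : Wt p) * b) + 1 * 0
          = (p : Wt p) * (-(σW p).symm x) + ζ * ((p : Wt p) * b) + (p : Wt p) * σW p β * 1
        linear_combination (p : Wt p) * hb - (p : Wt p) * hβ'
      · show ((p : Wt p) * b * β + σW p ζ) * 1 + 1 * 0
          = (p : Wt p) * 0 + β * ((p : Wt p) * b) + σW p ζ * 1
        ring
      · show ((p : Wt p) * b * β + σW p ζ) * 0 + 1 * ((p : Wt p) * b) = (p : Wt p) * b
        ring
      · show ((p : Wt p) * b * β + σW p ζ) * 0 + 1 * 1 = (1 : Wt p)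
        ring
end
end

section
/- With the above data: (a) there exists c ∈ W such that c²(−ν₁ψ) + c(−λ₁ψ + μ₁θ + ν₁Φ) + (λ₁Φ − Δ₁θ) = 0; (b) for every c ∈ W satisfying this equation, θ divides Φ − ψc in W; and, setting i := (Φ − ψc)/θ, the elements σ⁻¹(Q) + piR, σ⁻¹(S) + piT, 1 + pcβ' and 1 + pc lie in W^×, and the identities (σ⁻¹(R) + iQ)(1 + pcβ') = (σ⁻¹(β') + c)(σ⁻¹(Q) + piR) and (σ⁻¹(T) + iS)(1 + pc) = (1 + c)(σ⁻¹(S) + piT) hold. -/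
noncomputable section

open Pointwise

namespace StAux

open WittVector Function

variable {p : ℕ} [hp : Fact p.Prime]

section CommRing

variable {k : Type*} [CommRing k] [CharP k p]

lemma coeff_mul_pow_p (y : WittVector p k) :
    ∀ n, ∀ i < n, (y * (p : WittVector p k) ^ n).coeff i = 0 := by
  intro n
  induction n with
  | zero => intro i hi; omega
  | succ n ih =>
    intro i hi
    have h : y * (p : WittVector p k) ^ (n + 1)
        = y * (p : WittVector p k) ^ n * (p : WittVector p k) := by ring
    rw [h]
    cases i with
    | zero => exact mul_charP_coeff_zero _
    | succ i => rw [mul_charP_coeff_succ, ih i (by omega), zero_pow hp.out.ne_zero]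

lemma iter_VF (n : ℕ) (w : WittVector p k) :
    verschiebung^[n] (frobenius^[n] w) = w * (p : WittVector p k) ^ n := by
  induction n generalizing w with
  | zero => simp
  | succ n ih =>
    rw [Function.iterate_succ_apply (f := (frobenius : WittVector p k → WittVector p k)),
      Function.iterate_succ_apply' (f := (verschiebung : WittVector p k → WittVector p k)),
      ih (frobenius w)]
    calc verschiebung (frobenius w * (p : WittVector p k) ^ n)
        = verschiebung (frobenius w * frobenius ((p : WittVector p k) ^ n)) := by
          rw [map_pow, map_natCast]
      _ = verschiebung (frobenius w) * (p : WittVector p k) ^ n :=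
          verschiebung_mul_frobenius _ _
      _ = w * (p : WittVector p k) ^ (n + 1) := by rw [verschiebung_frobenius]; ring

end CommRing

section PerfectField

variable {k : Type*} [Field k] [CharP k p] [PerfectRing k p]

lemma pow_p_dvd_iff (n : ℕ) (x : WittVector p k) :
    (p : WittVector p k) ^ n ∣ x ↔ ∀ i < n, x.coeff i = 0 := by
  constructor
  · rintro ⟨y, rfl⟩ i hi
    rw [mul_comm]
    exact coeff_mul_pow_p y n i hi
  · intro h
    refine ⟨((frobeniusEquiv p k).symm)^[n] (x.shift n), ?_⟩
    have hL : Function.LeftInverse (frobenius : WittVector p k → WittVector p k)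
        ((frobeniusEquiv p k).symm) := fun a => by
      have := (frobeniusEquiv p k).apply_symm_apply a
      rwa [WittVector.frobeniusEquiv_apply] at this
    have hF : frobenius^[n] (((frobeniusEquiv p k).symm)^[n] (x.shift n)) = x.shift n :=
      (hL.iterate n) (x.shift n)
    rw [mul_comm, ← iter_VF n, hF]
    exact eq_iterate_verschiebung h

lemma isUnit_add_p_mul (v E : WittVector p k) (hv : IsUnit v) :
    IsUnit (v + (p : WittVector p k) * E) := by
  apply isUnit_of_coeff_zero_ne_zero
  have h0 : constantCoeff (v + (p : WittVector p k) * E) = constantCoeff v := by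
    rw [map_add, map_mul, map_natCast, CharP.cast_eq_zero k p, zero_mul, add_zero]
  have hvc : IsUnit (constantCoeff v) := hv.map (constantCoeff : WittVector p k →+* k)
  have h1 : (v + (p : WittVector p k) * E).coeff 0 = constantCoeff v := h0
  rw [h1]
  exact hvc.ne_zero

lemma adicComplete : IsAdicComplete (Ideal.span {(p : WittVector p k)}) (WittVector p k) := by
  haveI h1 : IsHausdorff (Ideal.span {(p : WittVector p k)}) (WittVector p k) := by
    constructor
    intro x hx
    apply WittVector.ext
    intro i
    have h := hx (i + 1)
    rw [SModEq.zero, ← Ideal.one_eq_top, smul_eq_mul, mul_one, Ideal.span_singleton_pow,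
      Ideal.mem_span_singleton] at h
    rw [zero_coeff]
    exact (pow_p_dvd_iff (i + 1) x).mp h i (Nat.lt_succ_self i)
  haveI h2 : IsPrecomplete (Ideal.span {(p : WittVector p k)}) (WittVector p k) := by
    constructor
    intro f hf
    refine ⟨WittVector.mk p (fun i => (f (i + 1)).coeff i), fun n => ?_⟩
    rw [SModEq.sub_mem, ← Ideal.one_eq_top, smul_eq_mul, mul_one, Ideal.span_singleton_pow,
      Ideal.mem_span_singleton, pow_p_dvd_iff]
    have key : truncate n (f n) = truncate n (WittVector.mk p (fun i => (f (i + 1)).coeff i)) := by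
      apply TruncatedWittVector.ext
      intro j
      rw [coeff_truncate, coeff_truncate]
      have hj : (j : ℕ) + 1 ≤ n := j.isLt
      have h := hf hj
      rw [SModEq.sub_mem, ← Ideal.one_eq_top, smul_eq_mul, mul_one, Ideal.span_singleton_pow,
        Ideal.mem_span_singleton, pow_p_dvd_iff] at h
      have h3 : truncate ((j : ℕ) + 1) (f ((j : ℕ) + 1)) = truncate ((j : ℕ) + 1) (f n) := by
        have h4 := (mem_ker_truncate ((j : ℕ) + 1) (f ((j : ℕ) + 1) - f n)).mpr h
        rwa [RingHom.mem_ker, map_sub, sub_eq_zero] at h4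
      have h5 := congrArg (TruncatedWittVector.coeff (Fin.mk (j : ℕ) (Nat.lt_succ_self _))) h3
      rw [coeff_truncate, coeff_truncate] at h5
      rw [WittVector.coeff_mk]
      exact h5.symm
    have hker : f n - WittVector.mk p (fun i => (f (i + 1)).coeff i)
        ∈ RingHom.ker (truncate (p := p) n) := by
      rw [RingHom.mem_ker, map_sub, sub_eq_zero]
      exact key
    exact (mem_ker_truncate n _).mp hker
  exact ⟨⟩

end PerfectField

end StAux


/-- (a) there exists `c` solving the quadratic equation; (b) for every such `c`,
`θ ∣ Φ − ψc`, and with `i := (Φ − ψc)/θ`, the elements `σ⁻¹(Q) + piR`, `σ⁻¹(S) + piT`,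
`1 + pcβ′` and `1 + pc` are units, and the two stated identities hold. -/
theorem statement14 (p : ℕ) [Fact p.Prime] (hp : Odd p)
    (x y z β' Q R T : Wt p)
    (hβ'u : IsUnit β') (hQu : IsUnit Q) (hRu : IsUnit R) (hTu : IsUnit T)
    (hβ' : σW p (σW p β') - β' = x)
    (hQ : σW p (σW p Q) - Q = (p : Wt p) * y * σW p β')
    (hR : σW p (σW p R) - R = y + (p : Wt p) * z)
    (hT : σW p (σW p T) - T = y)
    (hu1 : IsUnit (1 - Q)) (hu2 : IsUnit (Q - σW p Q)) (hu3 : IsUnit (R - β' * Q))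
    (hu4 : IsUnit (T - β' * Q)) (hu5 : IsUnit (-Q * (T - 1) + R - β' * Q))
    (hu6 : IsUnit ((σW p).symm Q * (T - 1) - (R - β' * Q)))
    (S lam1 mu1 nu1 nu2 del1 del2 Phi psi theta : Wt p)
    (hS : S = 1 + (p : Wt p) * T)
    (hlam1 : lam1 = (p : Wt p) * R * (σW p).symm β' - Q)
    (hmu1 : mu1 = (σW p).symm Q - (p : Wt p) * β' * (σW p).symm R)
    (hnu1 : nu1 = (p : Wt p) * (R - β' * Q))
    (hnu2 : nu2 = (p : Wt p) * (T - S))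
    (hdel1 : del1 = (σW p).symm R - (σW p).symm Q * (σW p).symm β')
    (hdel2 : del2 = (σW p).symm T - (σW p).symm S)
    (hPhi : Phi = del1 * nu2 - del2 * nu1)
    (hpsi : psi = mu1 * nu2 - nu1)
    (htheta : theta = lam1 * nu2 + nu1)
    :
    (∃ c : Wt p, c ^ 2 * (-(nu1 * psi)) + c * (-(lam1 * psi) + mu1 * theta + nu1 * Phi)
        + (lam1 * Phi - del1 * theta) = 0) ∧
    (∀ c : Wt p, c ^ 2 * (-(nu1 * psi)) + c * (-(lam1 * psi) + mu1 * theta + nu1 * Phi)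
        + (lam1 * Phi - del1 * theta) = 0 →
      theta ∣ (Phi - psi * c) ∧
      ∀ i : Wt p, theta * i = Phi - psi * c →
        IsUnit ((σW p).symm Q + (p : Wt p) * i * R) ∧
        IsUnit ((σW p).symm S + (p : Wt p) * i * T) ∧
        IsUnit (1 + (p : Wt p) * c * β') ∧
        IsUnit (1 + (p : Wt p) * c) ∧
        ((σW p).symm R + i * Q) * (1 + (p : Wt p) * c * β')
          = ((σW p).symm β' + c) * ((σW p).symm Q + (p : Wt p) * i * R) ∧
        ((σW p).symm T + i * S) * (1 + (p : Wt p) * c)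
          = (1 + c) * ((σW p).symm S + (p : Wt p) * i * T)) := by
  classical
  have hp0 : (p : Wt p) ≠ 0 := WittVector.p_nonzero p (Kbar p)
  subst hPhi hpsi htheta hdel1 hdel2 hnu1 hnu2 hmu1 hlam1 hS
  have hσS : (σW p).symm (1 + (p : Wt p) * T) = 1 + (p : Wt p) * (σW p).symm T := by
    simp only [map_add, map_one, map_mul, map_natCast]
  simp only [hσS]
  -- basic units
  have hτQ : IsUnit ((σW p).symm Q) := hQu.map (σW p).symm
  have hτQsub : IsUnit ((σW p).symm Q - Q) := by
    have h := hu2.map (σW p).symm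
    rwa [map_sub, RingEquiv.symm_apply_apply] at h
  have hbb : IsUnit (-(((p : Wt p) * R * ((σW p).symm β') - Q) + (((σW p).symm Q) - (p : Wt p) * β' * ((σW p).symm R)) + ((((σW p).symm R) - ((σW p).symm Q) * ((σW p).symm β')) * ((p : Wt p) * (T - (1 + (p : Wt p) * T))) - (((σW p).symm T) - (1 + (p : Wt p) * ((σW p).symm T))) * ((p : Wt p) * (R - β' * Q))))) := by
    have h1 : IsUnit ((((σW p).symm Q - Q)) + (p : Wt p) * (R * ((σW p).symm β') - β' * ((σW p).symm R) + (((σW p).symm R) - ((σW p).symm Q) * ((σW p).symm β')) * (T - (1 + (p : Wt p) * T)) - (((σW p).symm T) - (1 + (p : Wt p) * ((σW p).symm T))) * (R - β' * Q))) :=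
      StAux.isUnit_add_p_mul _ _ hτQsub
    have h2 : (-(((p : Wt p) * R * ((σW p).symm β') - Q) + (((σW p).symm Q) - (p : Wt p) * β' * ((σW p).symm R)) + ((((σW p).symm R) - ((σW p).symm Q) * ((σW p).symm β')) * ((p : Wt p) * (T - (1 + (p : Wt p) * T))) - (((σW p).symm T) - (1 + (p : Wt p) * ((σW p).symm T))) * ((p : Wt p) * (R - β' * Q))))) = -((((σW p).symm Q - Q)) + (p : Wt p) * (R * ((σW p).symm β') - β' * ((σW p).symm R) + (((σW p).symm R) - ((σW p).symm Q) * ((σW p).symm β')) * (T - (1 + (p : Wt p) * T)) - (((σW p).symm T) - (1 + (p : Wt p) * ((σW p).symm T))) * (R - β' * Q))) := by ring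
    rw [h2]; exact h1.neg
  have hwU : IsUnit ((((σW p).symm Q) - (p : Wt p) * β' * ((σW p).symm R)) * (T - (1 + (p : Wt p) * T)) - (R - β' * Q)) := by
    have h2 : ((((σW p).symm Q) - (p : Wt p) * β' * ((σW p).symm R)) * (T - (1 + (p : Wt p) * T)) - (R - β' * Q)) = ((σW p).symm Q * (T - 1) - (R - β' * Q)) + (p : Wt p) * (-(((σW p).symm Q) * T) - β' * ((σW p).symm R) * (T - (1 + (p : Wt p) * T))) := by ring
    rw [h2]; exact StAux.isUnit_add_p_mul _ _ hu6
  have hth0 : IsUnit (((p : Wt p) * R * ((σW p).symm β') - Q) * (T - (1 + (p : Wt p) * T)) + (R - β' * Q)) := by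
    have h2 : (((p : Wt p) * R * ((σW p).symm β') - Q) * (T - (1 + (p : Wt p) * T)) + (R - β' * Q)) = (-Q * (T - 1) + R - β' * Q) + (p : Wt p) * (R * ((σW p).symm β') * (T - (1 + (p : Wt p) * T)) + Q * T) := by ring
    rw [h2]; exact StAux.isUnit_add_p_mul _ _ hu5
  have hthne : (((p : Wt p) * R * ((σW p).symm β') - Q) * ((p : Wt p) * (T - (1 + (p : Wt p) * T))) + ((p : Wt p) * (R - β' * Q))) ≠ 0 := by
    have h2 : (((p : Wt p) * R * ((σW p).symm β') - Q) * ((p : Wt p) * (T - (1 + (p : Wt p) * T))) + ((p : Wt p) * (R - β' * Q))) = (p : Wt p) * (((p : Wt p) * R * ((σW p).symm β') - Q) * (T - (1 + (p : Wt p) * T)) + (R - β' * Q)) := by ring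
    rw [h2]; exact mul_ne_zero hp0 hth0.ne_zero
  have hwne : ((((σW p).symm Q) - (p : Wt p) * β' * ((σW p).symm R)) * (T - (1 + (p : Wt p) * T)) - (R - β' * Q)) ≠ 0 := hwU.ne_zero
  have hn1ne : ((p : Wt p) * (R - β' * Q)) ≠ 0 := mul_ne_zero hp0 hu3.ne_zero
  constructor
  · -- existence of the root, via Hensel's lemma
    letI : IsAdicComplete (Ideal.span {(p : Wt p)}) (Wt p) := StAux.adicComplete
    obtain ⟨u, hu, humem⟩ := HenselianRing.is_henselian (R := Wt p)
        (I := Ideal.span {(p : Wt p)})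
        (Polynomial.X ^ 2 + (Polynomial.C (-(((p : Wt p) * R * ((σW p).symm β') - Q) + (((σW p).symm Q) - (p : Wt p) * β' * ((σW p).symm R)) + ((((σW p).symm R) - ((σW p).symm Q) * ((σW p).symm β')) * ((p : Wt p) * (T - (1 + (p : Wt p) * T))) - (((σW p).symm T) - (1 + (p : Wt p) * ((σW p).symm T))) * ((p : Wt p) * (R - β' * Q))))) * Polynomial.X + Polynomial.C (((((σW p).symm Q) - (p : Wt p) * β' * ((σW p).symm R)) * ((p : Wt p) * (T - (1 + (p : Wt p) * T))) - ((p : Wt p) * (R - β' * Q))) * ((((σW p).symm R) - ((σW p).symm Q) * ((σW p).symm β')) + ((p : Wt p) * R * ((σW p).symm β') - Q) * (((σW p).symm T) - (1 + (p : Wt p) * ((σW p).symm T)))))))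
        (Polynomial.monic_X_pow_add
          (lt_of_le_of_lt Polynomial.degree_linear_le (by norm_num)))
        0
        (by
          have h2 : Polynomial.eval 0 (Polynomial.X ^ 2 +
              (Polynomial.C (-(((p : Wt p) * R * ((σW p).symm β') - Q) + (((σW p).symm Q) - (p : Wt p) * β' * ((σW p).symm R)) + ((((σW p).symm R) - ((σW p).symm Q) * ((σW p).symm β')) * ((p : Wt p) * (T - (1 + (p : Wt p) * T))) - (((σW p).symm T) - (1 + (p : Wt p) * ((σW p).symm T))) * ((p : Wt p) * (R - β' * Q))))) * Polynomial.X + Polynomial.C (((((σW p).symm Q) - (p : Wt p) * β' * ((σW p).symm R)) * ((p : Wt p) * (T - (1 + (p : Wt p) * T))) - ((p : Wt p) * (R - β' * Q))) * ((((σW p).symm R) - ((σW p).symm Q) * ((σW p).symm β')) + ((p : Wt p) * R * ((σW p).symm β') - Q) * (((σW p).symm T) - (1 + (p : Wt p) * ((σW p).symm T)))))))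
              = ((((σW p).symm Q) - (p : Wt p) * β' * ((σW p).symm R)) * ((p : Wt p) * (T - (1 + (p : Wt p) * T))) - ((p : Wt p) * (R - β' * Q))) * ((((σW p).symm R) - ((σW p).symm Q) * ((σW p).symm β')) + ((p : Wt p) * R * ((σW p).symm β') - Q) * (((σW p).symm T) - (1 + (p : Wt p) * ((σW p).symm T)))) := by simp
          rw [h2, Ideal.mem_span_singleton]
          exact ⟨((((σW p).symm Q) - (p : Wt p) * β' * ((σW p).symm R)) * (T - (1 + (p : Wt p) * T)) - (R - β' * Q)) * ((((σW p).symm R) - ((σW p).symm Q) * ((σW p).symm β')) + ((p : Wt p) * R * ((σW p).symm β') - Q) * (((σW p).symm T) - (1 + (p : Wt p) * ((σW p).symm T)))), by ring⟩)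
        (by
          have h2 : Polynomial.eval 0 (Polynomial.derivative (Polynomial.X ^ 2 +
              (Polynomial.C (-(((p : Wt p) * R * ((σW p).symm β') - Q) + (((σW p).symm Q) - (p : Wt p) * β' * ((σW p).symm R)) + ((((σW p).symm R) - ((σW p).symm Q) * ((σW p).symm β')) * ((p : Wt p) * (T - (1 + (p : Wt p) * T))) - (((σW p).symm T) - (1 + (p : Wt p) * ((σW p).symm T))) * ((p : Wt p) * (R - β' * Q))))) * Polynomial.X + Polynomial.C (((((σW p).symm Q) - (p : Wt p) * β' * ((σW p).symm R)) * ((p : Wt p) * (T - (1 + (p : Wt p) * T))) - ((p : Wt p) * (R - β' * Q))) * ((((σW p).symm R) - ((σW p).symm Q) * ((σW p).symm β')) + ((p : Wt p) * R * ((σW p).symm β') - Q) * (((σW p).symm T) - (1 + (p : Wt p) * ((σW p).symm T))))))))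
              = (-(((p : Wt p) * R * ((σW p).symm β') - Q) + (((σW p).symm Q) - (p : Wt p) * β' * ((σW p).symm R)) + ((((σW p).symm R) - ((σW p).symm Q) * ((σW p).symm β')) * ((p : Wt p) * (T - (1 + (p : Wt p) * T))) - (((σW p).symm T) - (1 + (p : Wt p) * ((σW p).symm T))) * ((p : Wt p) * (R - β' * Q))))) := by simp
          rw [h2]
          exact hbb.map (Ideal.Quotient.mk _))
    have hu' : u ^ 2 + (-(((p : Wt p) * R * ((σW p).symm β') - Q) + (((σW p).symm Q) - (p : Wt p) * β' * ((σW p).symm R)) + ((((σW p).symm R) - ((σW p).symm Q) * ((σW p).symm β')) * ((p : Wt p) * (T - (1 + (p : Wt p) * T))) - (((σW p).symm T) - (1 + (p : Wt p) * ((σW p).symm T))) * ((p : Wt p) * (R - β' * Q))))) * u + ((((σW p).symm Q) - (p : Wt p) * β' * ((σW p).symm R)) * ((p : Wt p) * (T - (1 + (p : Wt p) * T))) - ((p : Wt p) * (R - β' * Q))) * ((((σW p).symm R) - ((σW p).symm Q) * ((σW p).symm β')) + ((p : Wt p) * R * ((σW p).symm β') - Q) * (((σW p).symm T) - (1 + (p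 : Wt p) * ((σW p).symm T)))) = 0 := by
      have h2 := hu
      simp only [Polynomial.IsRoot, Polynomial.eval_add, Polynomial.eval_pow,
        Polynomial.eval_mul, Polynomial.eval_X, Polynomial.eval_C] at h2
      linear_combination h2
    rw [sub_zero, Ideal.mem_span_singleton] at humem
    obtain ⟨u1, hu1⟩ := humem
    have hq : u1 * ((p : Wt p) * u1 + (-(((p : Wt p) * R * ((σW p).symm β') - Q) + (((σW p).symm Q) - (p : Wt p) * β' * ((σW p).symm R)) + ((((σW p).symm R) - ((σW p).symm Q) * ((σW p).symm β')) * ((p : Wt p) * (T - (1 + (p : Wt p) * T))) - (((σW p).symm T) - (1 + (p : Wt p) * ((σW p).symm T))) * ((p : Wt p) * (R - β' * Q)))))) + ((((σW p).symm Q) - (p : Wt p) * β' * ((σW p).symm R)) * (T - (1 + (p : Wt p) * T)) - (R - β' * Q)) * ((((σW p).symm R) - ((σW p).symm Q) * ((σW p).symm β')) + ((p : Wt p) * R * ((σW p).symm β') - Q) * (((σW p).symm T) - (1 + (p : Wt p) * ((σW p).symm T)))) = 0 := by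
      have hP : (p : Wt p) * (u1 * ((p : Wt p) * u1 + (-(((p : Wt p) * R * ((σW p).symm β') - Q) + (((σW p).symm Q) - (p : Wt p) * β' * ((σW p).symm R)) + ((((σW p).symm R) - ((σW p).symm Q) * ((σW p).symm β')) * ((p : Wt p) * (T - (1 + (p : Wt p) * T))) - (((σW p).symm T) - (1 + (p : Wt p) * ((σW p).symm T))) * ((p : Wt p) * (R - β' * Q)))))) + ((((σW p).symm Q) - (p : Wt p) * β' * ((σW p).symm R)) * (T - (1 + (p : Wt p) * T)) - (R - β' * Q)) * ((((σW p).symm R) - ((σW p).symm Q) * ((σW p).symm β')) + ((p : Wt p) * R * ((σW p).symm β') - Q) * (((σW p).symm T) - (1 + (p : Wt p) * ((σW p).symm T))))) = (p : Wt p) * 0 := by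
        rw [mul_zero]
        linear_combination hu' - ((p : Wt p) * u1 + u + (-(((p : Wt p) * R * ((σW p).symm β') - Q) + (((σW p).symm Q) - (p : Wt p) * β' * ((σW p).symm R)) + ((((σW p).symm R) - ((σW p).symm Q) * ((σW p).symm β')) * ((p : Wt p) * (T - (1 + (p : Wt p) * T))) - (((σW p).symm T) - (1 + (p : Wt p) * ((σW p).symm T))) * ((p : Wt p) * (R - β' * Q)))))) * hu1
      exact mul_left_cancel₀ hp0 hP
    refine ⟨u1 * ↑(hwU.unit)⁻¹, ?_⟩
    have hk : ((((σW p).symm Q) - (p : Wt p) * β' * ((σW p).symm R)) * (T - (1 + (p : Wt p) * T)) - (R - β' * Q)) * ↑(hwU.unit)⁻¹ = 1 := by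
      calc ((((σW p).symm Q) - (p : Wt p) * β' * ((σW p).symm R)) * (T - (1 + (p : Wt p) * T)) - (R - β' * Q)) * ↑(hwU.unit)⁻¹ = ↑(hwU.unit) * ↑(hwU.unit)⁻¹ := by rw [IsUnit.unit_spec]
        _ = 1 := hwU.unit.mul_inv
    have hQc : ((p : Wt p) * ((((σW p).symm Q) - (p : Wt p) * β' * ((σW p).symm R)) * (T - (1 + (p : Wt p) * T)) - (R - β' * Q)) * (u1 * ↑(hwU.unit)⁻¹) ^ 2 + (-(((p : Wt p) * R * ((σW p).symm β') - Q) + (((σW p).symm Q) - (p : Wt p) * β' * ((σW p).symm R)) + ((((σW p).symm R) - ((σW p).symm Q) * ((σW p).symm β')) * ((p : Wt p) * (T - (1 + (p : Wt p) * T))) - (((σW p).symm T) - (1 + (p : Wt p) * ((σW p).symm T))) * ((p : Wt p) * (R - β' * Q))))) * (u1 * ↑(hwU.unit)⁻¹) + ((((σW p).symm R) - ((σW p).symm Q) * ((σW p).symm β')) + ((p : Wt p) * R * ((σW p).symm β') - Q) * (((σW p).symm T) - (1 + (p : Wt p) * ((σW p).symm T)))))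
        * ((((σW p).symm Q) - (p : Wt p) * β' * ((σW p).symm R)) * (T - (1 + (p : Wt p) * T)) - (R - β' * Q)) ^ 2 = 0 := by
      linear_combination ((p : Wt p) * u1 ^ 2 * ((((σW p).symm Q) - (p : Wt p) * β' * ((σW p).symm R)) * (T - (1 + (p : Wt p) * T)) - (R - β' * Q)) * (((((σW p).symm Q) - (p : Wt p) * β' * ((σW p).symm R)) * (T - (1 + (p : Wt p) * T)) - (R - β' * Q)) * ↑(hwU.unit)⁻¹ + 1)
        + (-(((p : Wt p) * R * ((σW p).symm β') - Q) + (((σW p).symm Q) - (p : Wt p) * β' * ((σW p).symm R)) + ((((σW p).symm R) - ((σW p).symm Q) * ((σW p).symm β')) * ((p : Wt p) * (T - (1 + (p : Wt p) * T))) - (((σW p).symm T) - (1 + (p : Wt p) * ((σW p).symm T))) * ((p : Wt p) * (R - β' * Q))))) * u1 * ((((σW p).symm Q) - (p : Wt p) * β' * ((σW p).symm R)) * (T - (1 + (p : Wt p) * T)) - (R - β' * Q))) * hk + ((((σW p).symm Q) - (p : Wt p) * β' * ((σW p).symm R)) * (T - (1 + (p : Wt p) * T)) - (R - β' * Q)) *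 hq
    have hQ0 : (p : Wt p) * ((((σW p).symm Q) - (p : Wt p) * β' * ((σW p).symm R)) * (T - (1 + (p : Wt p) * T)) - (R - β' * Q)) * (u1 * ↑(hwU.unit)⁻¹) ^ 2 + (-(((p : Wt p) * R * ((σW p).symm β') - Q) + (((σW p).symm Q) - (p : Wt p) * β' * ((σW p).symm R)) + ((((σW p).symm R) - ((σW p).symm Q) * ((σW p).symm β')) * ((p : Wt p) * (T - (1 + (p : Wt p) * T))) - (((σW p).symm T) - (1 + (p : Wt p) * ((σW p).symm T))) * ((p : Wt p) * (R - β' * Q))))) * (u1 * ↑(hwU.unit)⁻¹) + ((((σW p).symm R) - ((σW p).symm Q) * ((σW p).symm β')) + ((p : Wt p) * R * ((σW p).symm β') - Q) * (((σW p).symm T) - (1 + (p : Wt p) * ((σW p).symm T))))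
        = 0 := by
      rcases mul_eq_zero.mp hQc with h | h
      · exact h
      · exact absurd h (pow_ne_zero 2 hwne)
    linear_combination (-((p : Wt p) * (R - β' * Q))) * hQ0
  · intro c hc
    have hQ0 : (p : Wt p) * ((((σW p).symm Q) - (p : Wt p) * β' * ((σW p).symm R)) * (T - (1 + (p : Wt p) * T)) - (R - β' * Q)) * c ^ 2 + (-(((p : Wt p) * R * ((σW p).symm β') - Q) + (((σW p).symm Q) - (p : Wt p) * β' * ((σW p).symm R)) + ((((σW p).symm R) - ((σW p).symm Q) * ((σW p).symm β')) * ((p : Wt p) * (T - (1 + (p : Wt p) * T))) - (((σW p).symm T) - (1 + (p : Wt p) * ((σW p).symm T))) * ((p : Wt p) * (R - β' * Q))))) * c + ((((σW p).symm R) - ((σW p).symm Q) * ((σW p).symm β')) + ((p : Wt p) * R * ((σW p).symm β') - Q) * (((σW p).symm T) - (1 + (p : Wt p) * ((σW p).symm T)))) = 0 := by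
      have h2 : ((p : Wt p) * (R - β' * Q)) * ((p : Wt p) * ((((σW p).symm Q) - (p : Wt p) * β' * ((σW p).symm R)) * (T - (1 + (p : Wt p) * T)) - (R - β' * Q)) * c ^ 2 + (-(((p : Wt p) * R * ((σW p).symm β') - Q) + (((σW p).symm Q) - (p : Wt p) * β' * ((σW p).symm R)) + ((((σW p).symm R) - ((σW p).symm Q) * ((σW p).symm β')) * ((p : Wt p) * (T - (1 + (p : Wt p) * T))) - (((σW p).symm T) - (1 + (p : Wt p) * ((σW p).symm T))) * ((p : Wt p) * (R - β' * Q))))) * c + ((((σW p).symm R) - ((σW p).symm Q) * ((σW p).symm β')) + ((p : Wt p) * R * ((σW p).symm β') - Q) * (((σW p).symm T) - (1 + (p : Wt p) * ((σW p).symm T))))) = ((p : Wt p) * (R - β' * Q)) * 0 := by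
        rw [mul_zero]; linear_combination -hc
      exact mul_left_cancel₀ hn1ne h2
    constructor
    · refine ⟨↑(hth0.unit)⁻¹ * (((((σW p).symm R) - ((σW p).symm Q) * ((σW p).symm β')) * (T - (1 + (p : Wt p) * T)) - (((σW p).symm T) - (1 + (p : Wt p) * ((σW p).symm T))) * (R - β' * Q)) - ((((σW p).symm Q) - (p : Wt p) * β' * ((σW p).symm R)) * (T - (1 + (p : Wt p) * T)) - (R - β' * Q)) * c), ?_⟩
      have hk2 : (((p : Wt p) * R * ((σW p).symm β') - Q) * (T - (1 + (p : Wt p) * T)) + (R - β' * Q)) * ↑(hth0.unit)⁻¹ = 1 := by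
        calc (((p : Wt p) * R * ((σW p).symm β') - Q) * (T - (1 + (p : Wt p) * T)) + (R - β' * Q)) * ↑(hth0.unit)⁻¹ = ↑(hth0.unit) * ↑(hth0.unit)⁻¹ := by rw [IsUnit.unit_spec]
          _ = 1 := hth0.unit.mul_inv
      linear_combination (-((p : Wt p) * (((((σW p).symm R) - ((σW p).symm Q) * ((σW p).symm β')) * (T - (1 + (p : Wt p) * T)) - (((σW p).symm T) - (1 + (p : Wt p) * ((σW p).symm T))) * (R - β' * Q)) - ((((σW p).symm Q) - (p : Wt p) * β' * ((σW p).symm R)) * (T - (1 + (p : Wt p) * T)) - (R - β' * Q)) * c))) * hk2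
    · intro i hi
      refine ⟨?_, ?_, ?_, ?_, ?_, ?_⟩
      · rw [show (σW p).symm Q + (p : Wt p) * i * R
            = (σW p).symm Q + (p : Wt p) * (i * R) from by ring]
        exact StAux.isUnit_add_p_mul _ _ hτQ
      · rw [show 1 + (p : Wt p) * (σW p).symm T + (p : Wt p) * i * T
            = 1 + (p : Wt p) * ((σW p).symm T + i * T) from by ring]
        exact StAux.isUnit_add_p_mul _ _ isUnit_one
      · rw [show 1 + (p : Wt p) * c * β' = 1 + (p : Wt p) * (c * β') from by ring]
        exact StAux.isUnit_add_p_mul _ _ isUnit_one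
      · exact StAux.isUnit_add_p_mul 1 c isUnit_one
      · have hD : (((p : Wt p) * R * ((σW p).symm β') - Q) * ((p : Wt p) * (T - (1 + (p : Wt p) * T))) + ((p : Wt p) * (R - β' * Q))) * (((σW p).symm R + i * Q) * (1 + (p : Wt p) * c * β'))
            = (((p : Wt p) * R * ((σW p).symm β') - Q) * ((p : Wt p) * (T - (1 + (p : Wt p) * T))) + ((p : Wt p) * (R - β' * Q))) * (((σW p).symm β' + c) * ((σW p).symm Q + (p : Wt p) * i * R)) := by
          linear_combination ((p : Wt p) * (R - β' * Q)) * hQ0 - (((p : Wt p) * R * ((σW p).symm β') - Q) + c * ((p : Wt p) * (R - β' * Q))) * hi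
        exact mul_left_cancel₀ hthne hD
      · have hD : (((p : Wt p) * R * ((σW p).symm β') - Q) * ((p : Wt p) * (T - (1 + (p : Wt p) * T))) + ((p : Wt p) * (R - β' * Q))) * (((σW p).symm T + i * (1 + (p : Wt p) * T)) * (1 + (p : Wt p) * c))
            = (((p : Wt p) * R * ((σW p).symm β') - Q) * ((p : Wt p) * (T - (1 + (p : Wt p) * T))) + ((p : Wt p) * (R - β' * Q))) * ((1 + c) * (1 + (p : Wt p) * (σW p).symm T + (p : Wt p) * i * T)) := by
          linear_combination ((p : Wt p) * (T - (1 + (p : Wt p) * T))) * hQ0 + (1 - c * ((p : Wt p) * (T - (1 + (p : Wt p) * T)))) * hi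
        exact mul_left_cancel₀ hthne hD
end
end

section
/- With the above data, let c ∈ W satisfy c²(−ν₁ψ) + c(−λ₁ψ + μ₁θ + ν₁Φ) + (λ₁Φ − Δ₁θ) = 0, and set i := (Φ − ψc)/θ, a := (σ⁻¹(R) + iQ)/(σ⁻¹(Q) + piR), b' := (σ⁻¹(T) + iS)/(σ⁻¹(S) + piT). Write {e₁, f₁, e₂, f₂, e₃, f₃} for the standard basis of D(x,y,z) and {e₁', f₁', e₂', f₂', e₃', f₃'} for the standard basis of D(0,0,0). Then the W-linear map φ : D(x,y,z) → D(0,0,0) determined by φ(e₁) = p²e₁', φ(f₁) = p²f₁', φ(e₂) = pe₁' + pβ'f₁' + pe₂' + pf₂', φ(f₂) = p²σ(β')e₁' + pf₁' + p²e₂' + pf₂', φ(e₃) = Qe₁' + Rf₁' + Se₂' + Tf₂' + e₃', φ(f₃) = pσ(R)e₁' + σ(Q)f₁' + pσ(T)e₂' + σ(S)f₂' + f₃' is an isogeny of Dieudonné modules; the submodules Fil := W(f₁ + pae₁) + W(f₂ − σ⁻¹(x)e₁ + pce₂) + W(f₃ − σ⁻¹(y)e₂ − σ⁻¹(z)e₁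 + pie₃) ⊆ D(x,y,z) and Fil' := W(f₁' + pae₁') + W(f₂' + pb'e₂') + W(f₃' + pie₃') ⊆ D(0,0,0) are admissible filtrations; and φ(Fil) ⊆ Fil'. -/
noncomputable section

open Pointwise

/-!
The map `φ` is multiplication by an explicit matrix `M` over `W`, so everything reduces to
coordinate computations. `φ` commutes with `F` and `V` because applying `σ² - 1` to the entries
of `M` produces exactly the corrections `x, y, z` of `D(x,y,z)`; this is what the relations on
`β', Q, R, T` say. Since `det M = p⁶ (1 - p)` and `1 - p` is a unit, `φ` is injective and its
image contains `p⁶ D(0,0,0)`.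

Each filtration is the kernel of an explicit map `W⁶ → W³` with a section. This gives the rank,
the torsion-freeness of the quotient, and identifies `Fil + pD` with the vectors whose image
under `F` is divisible by `p`.

The pair `(c, i)` solves the bilinear system `Δ₁ = iλ₁ + cμ₁ + icν₁`, `Δ₂ = c - i + icν₂`:
the quadratic for `c` is `ν₁` times the equation obtained by eliminating `i`. These two
equations say exactly that `a = (c + σ⁻¹β') / (1 + pcβ')` and `b' = (c + 1) / (1 + pc)`, which
is what makes `φ` send the generators of `Fil` into `Fil'`.
-/

theorem IsLocalRing.isUnit_add_mul_of_not_isUnit {R : Type*} [CommRing R] [IsLocalRing R]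
    {u m : R} (hu : IsUnit u) (hm : ¬IsUnit m) (w : R) : IsUnit (u + m * w) := by
  refine (IsLocalRing.isUnit_or_isUnit_of_isUnit_add (b := -(m * w)) ?_).resolve_right ?_
  · simpa using hu
  · exact fun h => hm (isUnit_of_mul_isUnit_left (IsUnit.neg_iff _ |>.mp h))

section Modules

variable {R M N : Type*} [CommRing R] [AddCommGroup M] [Module R M] [AddCommGroup N] [Module R N]

theorem exists_eq_smul_iff_forall_dvd {ι : Type*} (r : R) (v : ι → R) :
    (∃ w, v = r • w) ↔ ∀ j, r ∣ v j :=
  ⟨fun ⟨w, hw⟩ j => ⟨w j, by simp [hw]⟩,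
    fun h => ⟨fun j => (h j).choose, funext fun j => (h j).choose_spec⟩⟩

theorem LinearMap.exists_mem_ker_add_smul_iff (f : M →ₗ[R] N) {s : N → M}
    (hs : ∀ w, f (s w) = w) (r : R) (d : M) :
    (∃ m ∈ LinearMap.ker f, ∃ d', d = m + r • d') ↔ ∃ w, f d = r • w := by
  constructor
  · rintro ⟨m, hm, d', rfl⟩
    exact ⟨f d', by simp [LinearMap.mem_ker.mp hm]⟩
  · rintro ⟨w, hw⟩
    exact ⟨d - r • s w, by simp [hw, hs], s w, by simp⟩

theorem LinearMap.noZeroSMulDivisors_quotient_ker (f : M →ₗ[R] N) [NoZeroSMulDivisors R N] :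
    NoZeroSMulDivisors R (M ⧸ LinearMap.ker f) :=
  Function.Injective.noZeroSMulDivisors ((LinearMap.ker f).liftQ f le_rfl)
    (LinearMap.ker_eq_bot.mp (Submodule.ker_liftQ_eq_bot _ f _ le_rfl)) (map_zero _) (map_smul _)

end Modules

theorem Matrix.smul_mem_range_toLin'_of_det_eq {R n : Type*} [CommRing R] [Fintype n]
    [DecidableEq n] {A : Matrix n n R} {r u : R} (hA : A.det = r * u) (hu : IsUnit u)
    (v : n → R) : r • v ∈ LinearMap.range (Matrix.toLin' A) := by
  refine ⟨A.adjugate.mulVec (((hu.unit⁻¹ : Rˣ) : R) • v), ?_⟩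
  rw [Matrix.toLin'_apply, Matrix.mulVec_mulVec, Matrix.mul_adjugate, hA, Matrix.smul_mulVec,
    Matrix.one_mulVec, smul_smul, mul_assoc, IsUnit.mul_val_inv, mul_one]

theorem bilinear_system_of_quadratic {K : Type*} [CommRing K] [IsDomain K]
    {lam1 mu1 nu1 nu2 del1 del2 Phi psi theta c i : K}
    (hPhi : Phi = del1 * nu2 - del2 * nu1) (hpsi : psi = mu1 * nu2 - nu1)
    (htheta : theta = lam1 * nu2 + nu1) (hnu1 : nu1 ≠ 0) (htheta0 : theta ≠ 0)
    (hc : c ^ 2 * (-(nu1 * psi)) + c * (-(lam1 * psi) + mu1 * theta + nu1 * Phi)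
      + (lam1 * Phi - del1 * theta) = 0)
    (hi : theta * i = Phi - psi * c) :
    del1 = i * lam1 + c * mu1 + i * c * nu1 ∧ del2 = c - i + i * c * nu2 := by
  subst hPhi hpsi htheta
  have hq : -(c ^ 2 * (mu1 * nu2 - nu1)) + c * (lam1 + mu1 + (del1 * nu2 - del2 * nu1))
      - (lam1 * del2 + del1) = 0 :=
    mul_left_cancel₀ hnu1 (by linear_combination hc)
  constructor
  · refine mul_left_cancel₀ htheta0 ?_
    linear_combination (-(lam1 + c * nu1)) * hi - hc
  · refine mul_left_cancel₀ htheta0 ?_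
    linear_combination (1 - c * nu2) * hi - nu2 * hq

namespace Wt

variable {p : ℕ} [Fact p.Prime]

theorem natCast_ne_zero : (p : Wt p) ≠ 0 := (WittVector.irreducible p).ne_zero

theorem isUnit_add_natCast_mul {u : Wt p} (hu : IsUnit u) (w : Wt p) : IsUnit (u + p * w) :=
  IsLocalRing.isUnit_add_mul_of_not_isUnit hu (WittVector.irreducible p).not_isUnit w

theorem natCast_dvd_σW_iff {u : Wt p} : (p : Wt p) ∣ σW p u ↔ (p : Wt p) ∣ u := by
  conv_lhs => rw [← map_natCast (σW p) p]
  exact map_dvd_iff (σW p)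

theorem isUnit_one_sub_natCast : IsUnit (1 - p : Wt p) := by
  simpa [sub_eq_add_neg] using isUnit_add_natCast_mul isUnit_one (-1 : Wt p)

theorem σW_sub_symm_of_σW_σW_sub {u v : Wt p} (h : σW p (σW p u) - u = v) :
    σW p u - (σW p).symm u = (σW p).symm v := by
  simp [← h]

end Wt

section Filtration

variable {p : ℕ} [Fact p.Prime] (x y z a c i : Wt p)

def filtrationEquations : (Fin 6 → Wt p) →ₗ[Wt p] (Fin 3 → Wt p) where
  toFun v := ![v 0 + (σW p).symm x * v 3 + (σW p).symm z * v 5 - p * a * v 1,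
    v 2 + (σW p).symm y * v 5 - p * c * v 3,
    v 4 - p * i * v 5]
  map_add' u v := by funext j; fin_cases j <;> (simp; ring)
  map_smul' r v := by funext j; fin_cases j <;> (simp; ring)

theorem ker_filtrationEquations :
    LinearMap.ker (filtrationEquations x y z a c i) =
      Submodule.span (Wt p)
        {![(p : Wt p) * a, 1, 0, 0, 0, 0],
          ![-(σW p).symm x, 0, (p : Wt p) * c, 1, 0, 0],
          ![-(σW p).symm z, 0, -(σW p).symm y, 0, (p : Wt p) * i, 1]} := by
  ext v : 1
  rw [LinearMap.mem_ker, Submodule.mem_span_triple]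
  constructor
  · intro hv
    have h0 := congrFun hv 0
    have h1 := congrFun hv 1
    have h2 := congrFun hv 2
    simp only [filtrationEquations, LinearMap.coe_mk, AddHom.coe_mk, Matrix.cons_val,
      Pi.zero_apply] at h0 h1 h2
    refine ⟨v 1, v 3, v 5, funext fun j => ?_⟩
    fin_cases j <;> simp
    · linear_combination -h0
    · linear_combination -h1
    · linear_combination -h2
  · rintro ⟨α, β, γ, rfl⟩
    funext j
    fin_cases j <;> (simp [filtrationEquations]; ring)

theorem linearIndependent_filtrationGenerators :
    LinearIndependent (Wt p)
      ![![(p : Wt p) * a, 1, 0, 0, 0, 0],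
        ![-(σW p).symm x, 0, (p : Wt p) * c, 1, 0, 0],
        ![-(σW p).symm z, 0, -(σW p).symm y, 0, (p : Wt p) * i, 1]] := by
  rw [Fintype.linearIndependent_iff]
  intro g hg
  have h1 := congrFun hg 1
  have h3 := congrFun hg 3
  have h5 := congrFun hg 5
  simp only [Fin.sum_univ_three, Finset.sum_apply, Pi.smul_apply, smul_eq_mul, Matrix.cons_val,
    mul_zero, mul_one, add_zero, zero_add] at h1 h3 h5
  intro j
  fin_cases j <;> simp_all

theorem exists_FD_eq_smul_iff (d : Fin 6 → Wt p) :
    (∃ d', FD p x y z d = (p : Wt p) • d') ↔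
      ∃ w, filtrationEquations x y z a c i d = (p : Wt p) • w := by
  have dvd_sub_p_mul (u w : Wt p) : (p : Wt p) ∣ u - p * w ↔ (p : Wt p) ∣ u :=
    dvd_sub_left (dvd_mul_right _ _)
  simp only [exists_eq_smul_iff_forall_dvd, Fin.forall_fin_succ, IsEmpty.forall_iff, and_true]
  simp only [FD, filtrationEquations, LinearMap.coe_mk, AddHom.coe_mk, Matrix.cons_val,
    Fin.succ_zero_eq_one, Fin.succ_one_eq_two, Fin.reduceSucc, dvd_mul_right, true_and]
  refine and_congr ?_ (and_congr ?_ ?_) <;>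
    rw [mul_assoc, dvd_sub_p_mul, Iff.comm, ← Wt.natCast_dvd_σW_iff] <;> simp

theorem admissibleFil_span :
    AdmissibleFil p (FD p x y z) 3
      (Submodule.span (Wt p)
        {![(p : Wt p) * a, 1, 0, 0, 0, 0],
          ![-(σW p).symm x, 0, (p : Wt p) * c, 1, 0, 0],
          ![-(σW p).symm z, 0, -(σW p).symm y, 0, (p : Wt p) * i, 1]}) := by
  rw [← ker_filtrationEquations]
  refine ⟨?_, (filtrationEquations x y z a c i).noZeroSMulDivisors_quotient_ker, fun d => ?_⟩
  · rw [ker_filtrationEquations, ← Set.singleton_union, ← Matrix.range_cons_cons_empty _ _ ![],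
      ← Matrix.range_cons,
      rank_span (linearIndependent_filtrationGenerators x y z a c i),
      Cardinal.mk_range_eq _ (linearIndependent_filtrationGenerators x y z a c i).injective]
    simp
  · rw [exists_FD_eq_smul_iff x y z a c i]
    exact (filtrationEquations x y z a c i).exists_mem_ker_add_smul_iff
      (s := fun w => ![w 0, 0, w 1, 0, w 2, 0])
      (fun w => by funext j; fin_cases j <;> simp [filtrationEquations]) _ d

end Filtration

section Isogeny

variable {p : ℕ} [Fact p.Prime]

def isogenyMatrix (β' Q R S T : Wt p) : Matrix (Fin 6) (Fin 6) (Wt p) :=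
  !![(p : Wt p) ^ 2, 0, p, p ^ 2 * σW p β', Q, p * σW p R;
     0, (p : Wt p) ^ 2, p * β', p, R, σW p Q;
     0, 0, p, (p : Wt p) ^ 2, S, p * σW p T;
     0, 0, p, p, T, σW p S;
     0, 0, 0, 0, 1, 0;
     0, 0, 0, 0, 0, 1]

theorem det_isogenyMatrix (β' Q R S T : Wt p) :
    (isogenyMatrix β' Q R S T).det = p ^ 6 * (1 - p) := by
  simp [isogenyMatrix, Matrix.det_succ_column_zero, Fin.sum_univ_succ]
  simp [show Fin.succAbove (1 : Fin 4) (2 : Fin 3) = 3 by decide]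
  ring

theorem eq_toLin'_isogenyMatrix {β' Q R S T : Wt p}
    (φ : (Fin 6 → Wt p) →ₗ[Wt p] (Fin 6 → Wt p))
    (hφ0 : φ (Pi.single 0 1) = ![(p : Wt p) ^ 2, 0, 0, 0, 0, 0])
    (hφ1 : φ (Pi.single 1 1) = ![0, (p : Wt p) ^ 2, 0, 0, 0, 0])
    (hφ2 : φ (Pi.single 2 1) = ![(p : Wt p), (p : Wt p) * β', (p : Wt p), (p : Wt p), 0, 0])
    (hφ3 : φ (Pi.single 3 1)
      = ![(p : Wt p) ^ 2 * σW p β', (p : Wt p), (p : Wt p) ^ 2, (p : Wt p), 0, 0])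
    (hφ4 : φ (Pi.single 4 1) = ![Q, R, S, T, 1, 0])
    (hφ5 : φ (Pi.single 5 1)
      = ![(p : Wt p) * σW p R, σW p Q, (p : Wt p) * σW p T, σW p S, 0, 1]) :
    φ = Matrix.toLin' (isogenyMatrix β' Q R S T) := by
  refine LinearMap.pi_ext' fun j => LinearMap.ext_ring ?_
  fin_cases j <;> simp [hφ0, hφ1, hφ2, hφ3, hφ4, hφ5] <;>
    funext k <;> fin_cases k <;> rfl

theorem injective_toLin'_isogenyMatrix (β' Q R S T : Wt p) :
    Function.Injective (Matrix.toLin' (isogenyMatrix β' Q R S T)) :=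
  Matrix.mulVec_injective_of_det_ne_zero <| by
    rw [det_isogenyMatrix]
    exact mul_ne_zero (pow_ne_zero _ Wt.natCast_ne_zero) Wt.isUnit_one_sub_natCast.ne_zero

theorem natCast_pow_smul_mem_range_toLin'_isogenyMatrix (β' Q R S T : Wt p) (d : Fin 6 → Wt p) :
    (p : Wt p) ^ 6 • d ∈ LinearMap.range (Matrix.toLin' (isogenyMatrix β' Q R S T)) :=
  Matrix.smul_mem_range_toLin'_of_det_eq (det_isogenyMatrix β' Q R S T)
    Wt.isUnit_one_sub_natCast d

variable {x y z β' Q R S T : Wt p}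

theorem isogenyMatrix_comm_FD (hβ' : σW p (σW p β') - β' = x)
    (hQ : σW p (σW p Q) - Q = (p : Wt p) * y * σW p β')
    (hR : σW p (σW p R) - R = y + (p : Wt p) * z) (hT : σW p (σW p T) - T = y)
    (hS : S = 1 + (p : Wt p) * T) (v : Fin 6 → Wt p) :
    Matrix.toLin' (isogenyMatrix β' Q R S T) (FD p x y z v) =
      FD p 0 0 0 (Matrix.toLin' (isogenyMatrix β' Q R S T) v) := by
  subst hS
  funext j
  fin_cases j <;> simp [isogenyMatrix, FD, Matrix.mulVec, dotProduct, Fin.sum_univ_succ]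
  · linear_combination (-((p : Wt p) * σW p (v 5))) * hQ
  · linear_combination (-((p : Wt p) ^ 2 * σW p (v 3))) * hβ'
        + (-((p : Wt p) * σW p (v 5))) * hR
  · linear_combination (-((p : Wt p) ^ 2 * σW p (v 5))) * hT
  · linear_combination (-((p : Wt p) * σW p (v 5))) * hT

theorem isogenyMatrix_comm_VD (hβ' : σW p β' - (σW p).symm β' = (σW p).symm x)
    (hQ : σW p Q - (σW p).symm Q = (p : Wt p) * (σW p).symm y * β')
    (hR : σW p R - (σW p).symm R = (σW p).symm y + (p : Wt p) * (σW p).symm z)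
    (hT : σW p T - (σW p).symm T = (σW p).symm y)
    (hS : S = 1 + (p : Wt p) * T) (v : Fin 6 → Wt p) :
    Matrix.toLin' (isogenyMatrix β' Q R S T) (VD p x y z v) =
      VD p 0 0 0 (Matrix.toLin' (isogenyMatrix β' Q R S T) v) := by
  subst hS
  funext j
  fin_cases j <;> simp [isogenyMatrix, VD, Matrix.mulVec, dotProduct, Fin.sum_univ_succ]
  · linear_combination ((p : Wt p) ^ 2 * (σW p).symm (v 2)) * hβ'
        + ((p : Wt p) * (σW p).symm (v 4)) * hR
  · linear_combination ((σW p).symm (v 4)) * hQ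
  · linear_combination ((p : Wt p) * (σW p).symm (v 4)) * hT
  · linear_combination ((p : Wt p) * (σW p).symm (v 4)) * hT

theorem map_toLin'_isogenyMatrix_span_le {a b' c i : Wt p}
    (hβ' : σW p β' - (σW p).symm β' = (σW p).symm x)
    (hQ : σW p Q - (σW p).symm Q = (p : Wt p) * (σW p).symm y * β')
    (hR : σW p R - (σW p).symm R = (σW p).symm y + (p : Wt p) * (σW p).symm z)
    (hT : σW p T - (σW p).symm T = (σW p).symm y)
    (hS : S = 1 + (p : Wt p) * T) (hQu : IsUnit Q)
    (hsys1 : (σW p).symm R - (σW p).symm Q * (σW p).symm β' =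
      i * ((p : Wt p) * R * (σW p).symm β' - Q) + c * ((σW p).symm Q - p * β' * (σW p).symm R)
        + i * c * (p * (R - β' * Q)))
    (hsys2 : (σW p).symm T - (σW p).symm S = c - i + i * c * (p * (T - S)))
    (ha : ((σW p).symm Q + (p : Wt p) * i * R) * a = (σW p).symm R + i * Q)
    (hb' : ((σW p).symm S + (p : Wt p) * i * T) * b' = (σW p).symm T + i * S) :
    Submodule.map (Matrix.toLin' (isogenyMatrix β' Q R S T))
        (Submodule.span (Wt p)
          {![(p : Wt p) * a, 1, 0, 0, 0, 0],
            ![-(σW p).symm x, 0, (p : Wt p) * c, 1, 0, 0],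
            ![-(σW p).symm z, 0, -(σW p).symm y, 0, (p : Wt p) * i, 1]})
      ≤ Submodule.span (Wt p)
          {![(p : Wt p) * a, 1, 0, 0, 0, 0],
            ![0, 0, (p : Wt p) * b', 1, 0, 0],
            ![0, 0, 0, 0, (p : Wt p) * i, 1]} := by
  have hS_symm : (σW p).symm S = 1 + p * (σW p).symm T := by simp [hS]
  rw [hS_symm] at hb' hsys2
  subst hS
  have ha_c : a * (1 + p * c * β') = c + (σW p).symm β' := by
    have hden : IsUnit ((σW p).symm Q + p * i * R) := by
      simpa [mul_assoc] using Wt.isUnit_add_natCast_mul (hQu.map (σW p).symm) (i * R)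
    refine hden.mul_left_cancel ?_
    linear_combination (1 + (p : Wt p) * c * β') * ha + hsys1
  have hb'_c : b' * (1 + p * c) = c + 1 := by
    have hden : IsUnit (1 + p * (σW p).symm T + p * i * T) := by
      rw [add_assoc, mul_assoc, ← mul_add]
      exact Wt.isUnit_add_natCast_mul isUnit_one _
    refine hden.mul_left_cancel ?_
    linear_combination (1 + (p : Wt p) * c) * hb' + hsys2
  -- the coefficients below are the `f₁'`, `f₂'`, `f₃'` coordinates of the image
  rw [Submodule.map_span_le]
  intro v hv
  rw [Submodule.mem_span_triple]
  simp only [Set.mem_insert_iff, Set.mem_singleton_iff] at hv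
  rcases hv with rfl | rfl | rfl
  · refine ⟨(p : Wt p) ^ 2, 0, 0, funext fun j => ?_⟩
    fin_cases j <;> simp [isogenyMatrix, Matrix.mulVec, dotProduct, Fin.sum_univ_succ]
  · refine ⟨p * (p * c * β' + 1), p * (p * c + 1), 0, funext fun j => ?_⟩
    fin_cases j <;> simp [isogenyMatrix, Matrix.mulVec, dotProduct, Fin.sum_univ_succ]
    · linear_combination (p : Wt p) ^ 2 * ha_c - (p : Wt p) ^ 2 * hβ'
    · ring
    · linear_combination (p : Wt p) ^ 2 * hb'_c
    · ring
  · refine ⟨σW p Q + p * i * R - p * β' * (σW p).symm y,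
      σW p (1 + p * T) + p * i * T - p * (σW p).symm y, 1, funext fun j => ?_⟩
    fin_cases j <;> simp [isogenyMatrix, Matrix.mulVec, dotProduct, Fin.sum_univ_succ]
    · linear_combination (p * a) * hQ + (p : Wt p) * ha - (p : Wt p) * hR
    · ring
    · linear_combination (p : Wt p) ^ 2 * b' * hT + (p : Wt p) * hb' - (p : Wt p) * hT
    · ring

end Isogeny

theorem statement15_general (p : ℕ) [Fact p.Prime]
    (x y z β' Q R T : Wt p)
    (hQu : IsUnit Q)
    (hβ' : σW p (σW p β') - β' = x)
    (hQ : σW p (σW p Q) - Q = (p : Wt p) * y * σW p β')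
    (hR : σW p (σW p R) - R = y + (p : Wt p) * z)
    (hT : σW p (σW p T) - T = y)
    (hu3 : IsUnit (R - β' * Q))
    (hu5 : IsUnit (-Q * (T - 1) + R - β' * Q))
    (S lam1 mu1 nu1 nu2 del1 del2 Phi psi theta : Wt p)
    (hS : S = 1 + (p : Wt p) * T)
    (hlam1 : lam1 = (p : Wt p) * R * (σW p).symm β' - Q)
    (hmu1 : mu1 = (σW p).symm Q - (p : Wt p) * β' * (σW p).symm R)
    (hnu1 : nu1 = (p : Wt p) * (R - β' * Q))
    (hnu2 : nu2 = (p : Wt p) * (T - S))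
    (hdel1 : del1 = (σW p).symm R - (σW p).symm Q * (σW p).symm β')
    (hdel2 : del2 = (σW p).symm T - (σW p).symm S)
    (hPhi : Phi = del1 * nu2 - del2 * nu1)
    (hpsi : psi = mu1 * nu2 - nu1)
    (htheta : theta = lam1 * nu2 + nu1)
    (c : Wt p)
    (hc : c ^ 2 * (-(nu1 * psi)) + c * (-(lam1 * psi) + mu1 * theta + nu1 * Phi)
      + (lam1 * Phi - del1 * theta) = 0)
    (i a b' : Wt p)
    (hi : theta * i = Phi - psi * c)
    (ha : ((σW p).symm Q + (p : Wt p) * i * R) * a = (σW p).symm R + i * Q)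
    (hb' : ((σW p).symm S + (p : Wt p) * i * T) * b' = (σW p).symm T + i * S)
    (φ : (Fin 6 → Wt p) →ₗ[Wt p] (Fin 6 → Wt p))
    (hφ0 : φ (Pi.single 0 1) = ![(p : Wt p) ^ 2, 0, 0, 0, 0, 0])
    (hφ1 : φ (Pi.single 1 1) = ![0, (p : Wt p) ^ 2, 0, 0, 0, 0])
    (hφ2 : φ (Pi.single 2 1) = ![(p : Wt p), (p : Wt p) * β', (p : Wt p), (p : Wt p), 0, 0])
    (hφ3 : φ (Pi.single 3 1)
      = ![(p : Wt p) ^ 2 * σW p β', (p : Wt p), (p : Wt p) ^ 2, (p : Wt p), 0, 0])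
    (hφ4 : φ (Pi.single 4 1) = ![Q, R, S, T, 1, 0])
    (hφ5 : φ (Pi.single 5 1)
      = ![(p : Wt p) * σW p R, σW p Q, (p : Wt p) * σW p T, σW p S, 0, 1]) :
    (Function.Injective φ ∧
      (∀ v, φ (FD p x y z v) = FD p 0 0 0 (φ v)) ∧
      (∀ v, φ (VD p x y z v) = VD p 0 0 0 (φ v)) ∧
      (∃ n : ℕ, ∀ d : Fin 6 → Wt p, (p : Wt p) ^ n • d ∈ LinearMap.range φ)) ∧
    AdmissibleFil p (FD p x y z) 3
      (Submodule.span (Wt p)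
        {![(p : Wt p) * a, 1, 0, 0, 0, 0],
          ![-(σW p).symm x, 0, (p : Wt p) * c, 1, 0, 0],
          ![-(σW p).symm z, 0, -(σW p).symm y, 0, (p : Wt p) * i, 1]}) ∧
    AdmissibleFil p (FD p 0 0 0) 3
      (Submodule.span (Wt p)
        {![(p : Wt p) * a, 1, 0, 0, 0, 0],
          ![0, 0, (p : Wt p) * b', 1, 0, 0],
          ![0, 0, 0, 0, (p : Wt p) * i, 1]}) ∧
    Submodule.map φ
        (Submodule.span (Wt p)
          {![(p : Wt p) * a, 1, 0, 0, 0, 0],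
            ![-(σW p).symm x, 0, (p : Wt p) * c, 1, 0, 0],
            ![-(σW p).symm z, 0, -(σW p).symm y, 0, (p : Wt p) * i, 1]})
      ≤ Submodule.span (Wt p)
          {![(p : Wt p) * a, 1, 0, 0, 0, 0],
            ![0, 0, (p : Wt p) * b', 1, 0, 0],
            ![0, 0, 0, 0, (p : Wt p) * i, 1]} := by
  obtain rfl := eq_toLin'_isogenyMatrix φ hφ0 hφ1 hφ2 hφ3 hφ4 hφ5
  have hnu1_ne : nu1 ≠ 0 := hnu1 ▸ mul_ne_zero Wt.natCast_ne_zero hu3.ne_zero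
  have htheta_ne : theta ≠ 0 := by
    rw [htheta, hlam1, hnu2, hnu1, hS, show ((p : Wt p) * R * (σW p).symm β' - Q) *
        ((p : Wt p) * (T - (1 + p * T))) + p * (R - β' * Q) = p * ((-Q * (T - 1) + R - β' * Q)
          + p * (R * (σW p).symm β' * (T - 1 - p * T) + Q * T)) by ring]
    exact mul_ne_zero Wt.natCast_ne_zero (Wt.isUnit_add_natCast_mul hu5 _).ne_zero
  obtain ⟨hsys1, hsys2⟩ :=
    bilinear_system_of_quadratic hPhi hpsi htheta hnu1_ne htheta_ne hc hi
  subst hdel1 hdel2 hlam1 hmu1 hnu1 hnu2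
  have hβ'σ := Wt.σW_sub_symm_of_σW_σW_sub hβ'
  have hQσ : σW p Q - (σW p).symm Q = p * (σW p).symm y * β' := by
    simpa using Wt.σW_sub_symm_of_σW_σW_sub hQ
  have hRσ : σW p R - (σW p).symm R = (σW p).symm y + p * (σW p).symm z := by
    simpa using Wt.σW_sub_symm_of_σW_σW_sub hR
  have hTσ := Wt.σW_sub_symm_of_σW_σW_sub hT
  refine ⟨⟨injective_toLin'_isogenyMatrix β' Q R S T, isogenyMatrix_comm_FD hβ' hQ hR hT hS,
      isogenyMatrix_comm_VD hβ'σ hQσ hRσ hTσ hS,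
      6, natCast_pow_smul_mem_range_toLin'_isogenyMatrix β' Q R S T⟩,
    admissibleFil_span x y z a c i, by simpa using admissibleFil_span (p := p) 0 0 0 a b' i,
    map_toLin'_isogenyMatrix_span_le hβ'σ hQσ hRσ hTσ hS hQu hsys1 hsys2 ha hb'⟩

/-- the explicit map `φ : D(x,y,z) → D(0,0,0)` is an isogeny of Dieudonné
modules, `Fil ⊆ D(x,y,z)` and `Fil′ ⊆ D(0,0,0)` are admissible filtrations, and
`φ(Fil) ⊆ Fil′`. Here `i = (Φ − ψc)/θ`, `a = (σ⁻¹(R) + iQ)/(σ⁻¹(Q) + piR)` and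
`b′ = (σ⁻¹(T) + iS)/(σ⁻¹(S) + piT)` are characterized by their defining equations. -/
theorem statement15 (p : ℕ) [Fact p.Prime] (hp : Odd p)
    (x y z β' Q R T : Wt p)
    (hβ'u : IsUnit β') (hQu : IsUnit Q) (hRu : IsUnit R) (hTu : IsUnit T)
    (hβ' : σW p (σW p β') - β' = x)
    (hQ : σW p (σW p Q) - Q = (p : Wt p) * y * σW p β')
    (hR : σW p (σW p R) - R = y + (p : Wt p) * z)
    (hT : σW p (σW p T) - T = y)
    (hu1 : IsUnit (1 - Q)) (hu2 : IsUnit (Q - σW p Q)) (hu3 : IsUnit (R - β' * Q))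
    (hu4 : IsUnit (T - β' * Q)) (hu5 : IsUnit (-Q * (T - 1) + R - β' * Q))
    (hu6 : IsUnit ((σW p).symm Q * (T - 1) - (R - β' * Q)))
    (S lam1 mu1 nu1 nu2 del1 del2 Phi psi theta : Wt p)
    (hS : S = 1 + (p : Wt p) * T)
    (hlam1 : lam1 = (p : Wt p) * R * (σW p).symm β' - Q)
    (hmu1 : mu1 = (σW p).symm Q - (p : Wt p) * β' * (σW p).symm R)
    (hnu1 : nu1 = (p : Wt p) * (R - β' * Q))
    (hnu2 : nu2 = (p : Wt p) * (T - S))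
    (hdel1 : del1 = (σW p).symm R - (σW p).symm Q * (σW p).symm β')
    (hdel2 : del2 = (σW p).symm T - (σW p).symm S)
    (hPhi : Phi = del1 * nu2 - del2 * nu1)
    (hpsi : psi = mu1 * nu2 - nu1)
    (htheta : theta = lam1 * nu2 + nu1)
    (c : Wt p)
    (hc : c ^ 2 * (-(nu1 * psi)) + c * (-(lam1 * psi) + mu1 * theta + nu1 * Phi)
      + (lam1 * Phi - del1 * theta) = 0)
    (i a b' : Wt p)
    (hi : theta * i = Phi - psi * c)
    (ha : ((σW p).symm Q + (p : Wt p) * i * R) * a = (σW p).symm R + i * Q)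
    (hb' : ((σW p).symm S + (p : Wt p) * i * T) * b' = (σW p).symm T + i * S)
    (φ : (Fin 6 → Wt p) →ₗ[Wt p] (Fin 6 → Wt p))
    (hφ0 : φ (Pi.single 0 1) = ![(p : Wt p) ^ 2, 0, 0, 0, 0, 0])
    (hφ1 : φ (Pi.single 1 1) = ![0, (p : Wt p) ^ 2, 0, 0, 0, 0])
    (hφ2 : φ (Pi.single 2 1) = ![(p : Wt p), (p : Wt p) * β', (p : Wt p), (p : Wt p), 0, 0])
    (hφ3 : φ (Pi.single 3 1)
      = ![(p : Wt p) ^ 2 * σW p β', (p : Wt p), (p : Wt p) ^ 2, (p : Wt p), 0, 0])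
    (hφ4 : φ (Pi.single 4 1) = ![Q, R, S, T, 1, 0])
    (hφ5 : φ (Pi.single 5 1)
      = ![(p : Wt p) * σW p R, σW p Q, (p : Wt p) * σW p T, σW p S, 0, 1]) :
    (Function.Injective φ ∧
      (∀ v, φ (FD p x y z v) = FD p 0 0 0 (φ v)) ∧
      (∀ v, φ (VD p x y z v) = VD p 0 0 0 (φ v)) ∧
      (∃ n : ℕ, ∀ d : Fin 6 → Wt p, (p : Wt p) ^ n • d ∈ LinearMap.range φ)) ∧
    AdmissibleFil p (FD p x y z) 3
      (Submodule.span (Wt p)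
        {![(p : Wt p) * a, 1, 0, 0, 0, 0],
          ![-(σW p).symm x, 0, (p : Wt p) * c, 1, 0, 0],
          ![-(σW p).symm z, 0, -(σW p).symm y, 0, (p : Wt p) * i, 1]}) ∧
    AdmissibleFil p (FD p 0 0 0) 3
      (Submodule.span (Wt p)
        {![(p : Wt p) * a, 1, 0, 0, 0, 0],
          ![0, 0, (p : Wt p) * b', 1, 0, 0],
          ![0, 0, 0, 0, (p : Wt p) * i, 1]}) ∧
    Submodule.map φ
        (Submodule.span (Wt p)
          {![(p : Wt p) * a, 1, 0, 0, 0, 0],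
            ![-(σW p).symm x, 0, (p : Wt p) * c, 1, 0, 0],
            ![-(σW p).symm z, 0, -(σW p).symm y, 0, (p : Wt p) * i, 1]})
      ≤ Submodule.span (Wt p)
          {![(p : Wt p) * a, 1, 0, 0, 0, 0],
            ![0, 0, (p : Wt p) * b', 1, 0, 0],
            ![0, 0, 0, 0, (p : Wt p) * i, 1]} :=
  statement15_general p x y z β' Q R T hQu hβ' hQ hR hT hu3 hu5 S lam1 mu1 nu1 nu2 del1 del2 Phi psi
    theta hS hlam1 hmu1 hnu1 hnu2 hdel1 hdel2 hPhi hpsi htheta c hc i a b' hi ha hb' φ hφ0 hφ1 hφ2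
    hφ3 hφ4 hφ5
end
end
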